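/- arXiv:0906.0589 — 14 statements merged into one kernel-verified Lean document; each statement's English description precedes it below -/
import Mathlib

section
/- Let m ≥ 1 be an integer and p, q real numbers with q ≠ 0. Suppose a, b : I → ℝ are differentiable functions on an open interval I ⊆ ℝ with a(τ) > 0 and b(τ) > 0 for all τ ∈ I, satisfying the ODE system a'(τ) = m q² a(τ)²/b(τ)² and b'(τ) = 2p − q² a(τ)/b(τ). Then the function τ ↦ (2p/((m+1)q²) − a(τ)/b(τ)) · a(τ)^{−(m+1)/m} is constant on I. -/
/-!
Along the flow the ratio `u = a / b` satisfies `u' = (a / b²) ((m + 1) q² u - 2p)`, while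
`(a ^ (-(m + 1) / m))' = -(m + 1) q² (a / b²) a ^ (-(m + 1) / m)`. Hence by the product rule the
derivative of `(c - u) a ^ (-(m + 1) / m)` is `(a / b²) a ^ (-(m + 1) / m) (2p - (m + 1) q² c)`,
which vanishes exactly for `c = 2p / ((m + 1) q²)`; a function with zero derivative on an interval
is constant.
-/

open Set

theorem hasDerivAt_firstIntegral_eq_zero {a b : ℝ → ℝ} {m k p c τ : ℝ} (hm : m ≠ 0)
    (hc : (m + 1) * k * c = 2 * p) (ha₀ : a τ ≠ 0) (hb₀ : b τ ≠ 0)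
    (ha : HasDerivAt a (m * k * a τ ^ 2 / b τ ^ 2) τ)
    (hb : HasDerivAt b (2 * p - k * a τ / b τ) τ) :
    HasDerivAt (fun τ => (c - a τ / b τ) * a τ ^ (-((m + 1) / m))) 0 τ := by
  have h_ratio : HasDerivAt (fun τ => a τ / b τ)
      (a τ / b τ ^ 2 * ((m + 1) * k * (a τ / b τ) - 2 * p)) τ := by
    refine (ha.div hb hb₀).congr_deriv ?_
    field_simp
    ring
  have h_pow : HasDerivAt (fun τ => a τ ^ (-((m + 1) / m)))
      (-((m + 1) * k * (a τ / b τ ^ 2) * a τ ^ (-((m + 1) / m)))) τ := by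
    refine (ha.rpow_const (p := -((m + 1) / m)) (Or.inl ha₀)).congr_deriv ?_
    rw [Real.rpow_sub_one ha₀]
    field_simp
  refine ((h_ratio.const_sub c).mul h_pow).congr_deriv ?_
  linear_combination -(a τ / b τ ^ 2 * a τ ^ (-((m + 1) / m))) * hc

/-- first integral of the U(1)-bundle Ricci flow ODE system. -/
theorem stmt_0 (m : ℕ) (hm : 1 ≤ m) (p q : ℝ) (hq : q ≠ 0)
    (s t : ℝ) (a b : ℝ → ℝ)
    (hapos : ∀ τ ∈ Set.Ioo s t, 0 < a τ)
    (hbpos : ∀ τ ∈ Set.Ioo s t, 0 < b τ)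
    (ha : ∀ τ ∈ Set.Ioo s t, HasDerivAt a ((m : ℝ) * q ^ 2 * (a τ) ^ 2 / (b τ) ^ 2) τ)
    (hb : ∀ τ ∈ Set.Ioo s t, HasDerivAt b (2 * p - q ^ 2 * a τ / b τ) τ) :
    ∃ C : ℝ, ∀ τ ∈ Set.Ioo s t,
      (2 * p / (((m : ℝ) + 1) * q ^ 2) - a τ / b τ) * (a τ) ^ (-(((m : ℝ) + 1) / m)) = C := by
  have hc : ((m : ℝ) + 1) * q ^ 2 * (2 * p / (((m : ℝ) + 1) * q ^ 2)) = 2 * p :=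
    mul_div_cancel₀ _ (by positivity)
  have h_deriv (τ : ℝ) (hτ : τ ∈ Ioo s t) :=
    hasDerivAt_firstIntegral_eq_zero (by positivity) hc (hapos τ hτ).ne' (hbpos τ hτ).ne'
      (ha τ hτ) (hb τ hτ)
  exact isOpen_Ioo.exists_is_const_of_deriv_eq_zero isPreconnected_Ioo
    (fun τ hτ => (h_deriv τ hτ).differentiableAt.differentiableWithinAt)
    (fun τ hτ => (h_deriv τ hτ).deriv)
end

section
/- Let m ≥ 1 be an integer, p > 0, q ≠ 0 and Λ > 0 real numbers, and set M = (1/Λ)(2p/((m+1)q²))^{m/(m+1)}. Then there exists a unique differentiable function a : (0, ∞) → ℝ satisfying a'(τ) = m q² (2p/((m+1)q²) − (Λ a(τ))^{(m+1)/m})² for all τ > 0 and lim_{τ→0⁺} a(τ) = 0. Moreover, this function satisfies 0 < a(τ) < M for all τ > 0, a is strictly increasing, and lim_{τ→∞} a(τ) = M. -/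
/-!
The equation is autonomous, `a' = F a` with `F x = c (C - (Λ x) ^ α) ^ 2`, and on `[0, M]` the
field `F` vanishes only at `M`, where `(Λ M) ^ α = C`. Separating variables, the solution is the
inverse of the travel time `T x = ∫₀ˣ dy / F y`, which maps `(0, M)` increasingly onto `(0, ∞)`:
it diverges at `M` because `F` vanishes there to second order, `F x ≤ K (M - x) ^ 2`.
Uniqueness is Grönwall's inequality: solutions are monotone and start at `0`, so on `(0, t]` they
stay in a compact interval on which the `C¹` field `F` is Lipschitz; then let the initial time
tend to `0`.
-/

open Set Filter Topology

theorem StrictMonoOn.strictMonoOn_of_rightInvOn {α β : Type*} [LinearOrder α] [Preorder β]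
    {f : α → β} {g : β → α} {s : Set α} {t : Set β} (hf : StrictMonoOn f s)
    (hg : MapsTo g t s) (hfg : RightInvOn g f t) : StrictMonoOn g t := fun y₁ h₁ y₂ h₂ hlt =>
  (hf.lt_iff_lt (hg h₁) (hg h₂)).1 (by rwa [hfg h₁, hfg h₂])

theorem MonotoneOn.tendsto_nhdsGT_of_image_Ioi_eq_Ioo {f : ℝ → ℝ} {x y z : ℝ}
    (hf : MonotoneOn f (Ioi x)) (himg : f '' Ioi x = Ioo y z) (hyz : y < z) :
    Tendsto f (𝓝[>] x) (𝓝 y) := by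
  have h := hf.tendsto_nhdsGT (by rw [himg]; exact bddBelow_Ioo)
  rwa [himg, csInf_Ioo hyz] at h

theorem MonotoneOn.tendsto_atTop_of_image_Ioi_eq_Ioo {f : ℝ → ℝ} {x y z : ℝ}
    (hf : MonotoneOn f (Ioi x)) (himg : f '' Ioi x = Ioo y z) (hyz : y < z) :
    Tendsto f atTop (𝓝 z) := by
  refine tendsto_comp_val_Ioi_atTop.1 (tendsto_atTop_isLUB (fun s t hst => hf s.2 t.2 hst) ?_)
  rw [← image_eq_range, himg]
  exact isLUB_Ioo hyz

theorem exists_sq_le_mul_sq_sub_of_contDiff {G : ℝ → ℝ} (hG : ContDiff ℝ 1 G) {l M : ℝ}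
    (hGM : G M = 0) : ∃ K, ∀ x ∈ Icc l M, G x ^ 2 ≤ K * (M - x) ^ 2 := by
  obtain ⟨L, hL⟩ :=
    hG.contDiffOn.exists_lipschitzOnWith one_ne_zero (convex_Icc l M) isCompact_Icc
  refine ⟨L ^ 2, fun x hx => ?_⟩
  have h := hL.dist_le_mul x hx M (right_mem_Icc.2 (hx.1.trans hx.2))
  rw [hGM, Real.dist_eq, Real.dist_eq, sub_zero, abs_sub_comm] at h
  calc G x ^ 2 = |G x| ^ 2 := (sq_abs _).symm
    _ ≤ (L * |M - x|) ^ 2 := pow_le_pow_left₀ (abs_nonneg _) h 2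
    _ = L ^ 2 * (M - x) ^ 2 := by rw [mul_pow, sq_abs]

section TravelTime

noncomputable def travelTime (F : ℝ → ℝ) (x : ℝ) : ℝ := ∫ y in (0 : ℝ)..x, (F y)⁻¹

variable {F : ℝ → ℝ} {M K : ℝ}

theorem intervalIntegrable_inv_of_mem_Ico (hF : ContinuousOn F (Ico 0 M))
    (hpos : ∀ x ∈ Ico 0 M, 0 < F x) {x : ℝ} (hx : x ∈ Ico 0 M) :
    IntervalIntegrable (fun y => (F y)⁻¹) MeasureTheory.volume 0 x :=
  ((hF.inv₀ fun y hy => (hpos y hy).ne').mono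
    (by rw [uIcc_of_le hx.1]; exact Icc_subset_Ico_right hx.2)).intervalIntegrable

theorem hasDerivAt_travelTime (hF : ContinuousOn F (Ico 0 M)) (hpos : ∀ x ∈ Ico 0 M, 0 < F x)
    {x : ℝ} (hx : x ∈ Ioo 0 M) : HasDerivAt (travelTime F) (F x)⁻¹ x := by
  have hcont : ContinuousOn (fun y => (F y)⁻¹) (Ioo 0 M) :=
    (hF.mono Ioo_subset_Ico_self).inv₀ fun y hy => (hpos y (Ioo_subset_Ico_self hy)).ne'
  exact intervalIntegral.integral_hasDerivAt_right
    (intervalIntegrable_inv_of_mem_Ico hF hpos (Ioo_subset_Ico_self hx))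
    (hcont.stronglyMeasurableAtFilter isOpen_Ioo x hx)
    (hcont.continuousAt (isOpen_Ioo.mem_nhds hx))

theorem continuousOn_travelTime_Icc (hF : ContinuousOn F (Ico 0 M))
    (hpos : ∀ x ∈ Ico 0 M, 0 < F x) {x : ℝ} (hx : x ∈ Ico 0 M) :
    ContinuousOn (travelTime F) (Icc 0 x) := by
  rw [← uIcc_of_le hx.1]
  exact intervalIntegral.continuousOn_primitive_interval'
    (intervalIntegrable_inv_of_mem_Ico hF hpos hx) left_mem_uIcc

theorem travelTime_pos (hF : ContinuousOn F (Ico 0 M)) (hpos : ∀ x ∈ Ico 0 M, 0 < F x)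
    {x : ℝ} (hx : x ∈ Ioo 0 M) : 0 < travelTime F x :=
  intervalIntegral.intervalIntegral_pos_of_pos_on
    (intervalIntegrable_inv_of_mem_Ico hF hpos (Ioo_subset_Ico_self hx))
    (fun y hy => inv_pos.2 (hpos y ⟨hy.1.le, hy.2.trans hx.2⟩)) hx.1

theorem strictMonoOn_travelTime (hF : ContinuousOn F (Ico 0 M))
    (hpos : ∀ x ∈ Ico 0 M, 0 < F x) : StrictMonoOn (travelTime F) (Ioo 0 M) :=
  strictMonoOn_of_hasDerivWithinAt_pos (convex_Ioo 0 M)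
    (fun _ hx => (hasDerivAt_travelTime hF hpos hx).continuousAt.continuousWithinAt)
    (fun _ hx => (hasDerivAt_travelTime hF hpos (interior_subset hx)).hasDerivWithinAt)
    (fun x hx => inv_pos.2 (hpos x (Ioo_subset_Ico_self (interior_subset hx))))

theorem inv_sub_inv_le_travelTime (hF : ContinuousOn F (Ico 0 M))
    (hpos : ∀ x ∈ Ico 0 M, 0 < F x) (hle : ∀ x ∈ Ico 0 M, F x ≤ K * (M - x) ^ 2) {x : ℝ}
    (hx : x ∈ Ico 0 M) : (K * (M - x))⁻¹ - (K * M)⁻¹ ≤ travelTime F x := by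
  have h0 : (0 : ℝ) ∈ Ico 0 M := ⟨le_rfl, hx.1.trans_lt hx.2⟩
  have hK : 0 < K := pos_of_mul_pos_left ((hpos 0 h0).trans_le (hle 0 h0)) (sq_nonneg _)
  have hsub : uIcc 0 x ⊆ Iio M := by
    rw [uIcc_of_le hx.1]; exact fun y hy => hy.2.trans_lt hx.2
  have hderiv : ∀ y ∈ uIcc 0 x,
      HasDerivAt (fun y => (K * (M - y))⁻¹) (K * (M - y) ^ 2)⁻¹ y := fun y hy => by
    have hMy : M - y ≠ 0 := (sub_pos.2 (show y < M from hsub hy)).ne'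
    refine ((((hasDerivAt_id' y).const_sub M).const_mul K).inv
      (mul_ne_zero hK.ne' hMy)).congr_deriv ?_
    field_simp
  have hint : IntervalIntegrable (fun y => (K * (M - y) ^ 2)⁻¹) MeasureTheory.volume 0 x :=
    (ContinuousOn.inv₀ (by fun_prop) fun y hy =>
      (mul_pos hK (pow_pos (sub_pos.2 (show y < M from hsub hy)) 2)).ne').intervalIntegrable
  calc (K * (M - x))⁻¹ - (K * M)⁻¹ = ∫ y in (0 : ℝ)..x, (K * (M - y) ^ 2)⁻¹ := by
        rw [intervalIntegral.integral_eq_sub_of_hasDerivAt hderiv hint, sub_zero]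
    _ ≤ travelTime F x :=
        intervalIntegral.integral_mono_on hx.1 hint
          (intervalIntegrable_inv_of_mem_Ico hF hpos hx) fun y hy =>
            inv_anti₀ (hpos y ⟨hy.1, hy.2.trans_lt hx.2⟩) (hle y ⟨hy.1, hy.2.trans_lt hx.2⟩)

theorem tendsto_travelTime_nhdsLT_atTop (hF : ContinuousOn F (Ico 0 M))
    (hpos : ∀ x ∈ Ico 0 M, 0 < F x) (hle : ∀ x ∈ Ico 0 M, F x ≤ K * (M - x) ^ 2) (hM : 0 < M) :
    Tendsto (travelTime F) (𝓝[<] M) atTop := by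
  have h0 : (0 : ℝ) ∈ Ico 0 M := left_mem_Ico.2 hM
  have hK : 0 < K := pos_of_mul_pos_left ((hpos 0 h0).trans_le (hle 0 h0)) (sq_nonneg _)
  have hdist : Tendsto (fun x => K * (M - x)) (𝓝[<] M) (𝓝[>] 0) := by
    refine tendsto_nhdsWithin_of_tendsto_nhds_of_eventually_within _ ?_ ?_
    · exact (((continuous_const.sub continuous_id).const_mul K).tendsto' M 0
        (by simp)).mono_left nhdsWithin_le_nhds
    · filter_upwards [self_mem_nhdsWithin] with x hx using mul_pos hK (sub_pos.2 hx)
  refine tendsto_atTop_mono' _ ?_ (tendsto_atTop_add_const_right _ (-(K * M)⁻¹)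
    (tendsto_inv_nhdsGT_zero.comp hdist))
  filter_upwards [Ioo_mem_nhdsLT hM] with x hx
  exact (sub_eq_add_neg _ _).symm.trans_le
    (inv_sub_inv_le_travelTime hF hpos hle (Ioo_subset_Ico_self hx))

theorem image_travelTime_Ioo (hF : ContinuousOn F (Ico 0 M)) (hpos : ∀ x ∈ Ico 0 M, 0 < F x)
    (hle : ∀ x ∈ Ico 0 M, F x ≤ K * (M - x) ^ 2) (hM : 0 < M) :
    travelTime F '' Ioo 0 M = Ioi 0 := by
  refine (image_subset_iff.2 fun x hx => travelTime_pos hF hpos hx).antisymm fun τ hτ => ?_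
  obtain ⟨x, hτx, hx⟩ :=
    (((tendsto_travelTime_nhdsLT_atTop hF hpos hle hM).eventually_gt_atTop τ).and
      (Ioo_mem_nhdsLT hM)).exists
  have hT0 : travelTime F 0 = 0 := intervalIntegral.integral_same
  have h := intermediate_value_Ioo hx.1.le
    (continuousOn_travelTime_Icc hF hpos (Ioo_subset_Ico_self hx))
    (show τ ∈ Ioo (travelTime F 0) (travelTime F x) from ⟨by rw [hT0]; exact hτ, hτx⟩)
  exact image_mono (Ioo_subset_Ioo_right hx.2.le) h

theorem exists_hasDerivAt_strictMonoOn_image_eq (hF : ContinuousOn F (Ico 0 M))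
    (hpos : ∀ x ∈ Ico 0 M, 0 < F x) (hle : ∀ x ∈ Ico 0 M, F x ≤ K * (M - x) ^ 2) (hM : 0 < M) :
    ∃ a : ℝ → ℝ, (∀ τ ∈ Ioi 0, HasDerivAt a (F (a τ)) τ) ∧ StrictMonoOn a (Ioi 0) ∧
      a '' Ioi 0 = Ioo 0 M := by
  have hT : BijOn (travelTime F) (Ioo 0 M) (Ioi 0) :=
    image_travelTime_Ioo hF hpos hle hM ▸ (strictMonoOn_travelTime hF hpos).injOn.bijOn_image
  set a := Function.invFunOn (travelTime F) (Ioo 0 M)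
  have hinv : InvOn a (travelTime F) (Ioo 0 M) (Ioi 0) := hT.invOn_invFunOn
  have ha : BijOn a (Ioi 0) (Ioo 0 M) := hT.symm hinv.symm
  have hmono : StrictMonoOn a (Ioi 0) :=
    (strictMonoOn_travelTime hF hpos).strictMonoOn_of_rightInvOn ha.mapsTo hinv.2
  refine ⟨a, fun τ hτ => ?_, hmono, ha.image_eq⟩
  have haτ : a τ ∈ Ioo 0 M := ha.mapsTo hτ
  have hcont : ContinuousAt a τ := continuousAt_of_monotoneOn_of_image_mem_nhds
    hmono.monotoneOn (Ioi_mem_nhds hτ) (ha.image_eq ▸ Ioo_mem_nhds haτ.1 haτ.2)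
  simpa only [inv_inv] using HasDerivAt.of_local_left_inverse hcont (hasDerivAt_travelTime hF hpos haτ)
    (inv_ne_zero (hpos _ (Ioo_subset_Ico_self haτ)).ne')
    (eventually_of_mem (Ioi_mem_nhds hτ) hinv.2)

end TravelTime

section Uniqueness

variable {F : ℝ → ℝ} {a b : ℝ → ℝ}

theorem monotoneOn_Ioi_of_hasDerivAt (hF : ∀ x, 0 ≤ F x)
    (ha : ∀ τ ∈ Ioi 0, HasDerivAt a (F (a τ)) τ) : MonotoneOn a (Ioi 0) :=
  monotoneOn_of_hasDerivWithinAt_nonneg (convex_Ioi 0)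
    (fun τ hτ => (ha τ hτ).continuousAt.continuousWithinAt)
    (fun τ hτ => (ha τ (interior_subset hτ)).hasDerivWithinAt) fun _ _ => hF _

theorem mem_Icc_of_hasDerivAt_of_tendsto (hF : ∀ x, 0 ≤ F x)
    (ha : ∀ τ ∈ Ioi 0, HasDerivAt a (F (a τ)) τ) (ha0 : Tendsto a (𝓝[>] 0) (𝓝 0)) {s t : ℝ}
    (hs : 0 < s) (hst : s ≤ t) : a s ∈ Icc 0 (a t) := by
  have hmono := monotoneOn_Ioi_of_hasDerivAt hF ha
  refine ⟨le_of_tendsto ha0 ?_, hmono hs (hs.trans_le hst) hst⟩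
  filter_upwards [Ioo_mem_nhdsGT hs] with r hr using hmono hr.1 hs hr.2.le

theorem eqOn_Ioi_of_hasDerivAt_of_tendsto (hF : LocallyLipschitz F) (hF0 : ∀ x, 0 ≤ F x)
    (ha : ∀ τ ∈ Ioi 0, HasDerivAt a (F (a τ)) τ) (ha0 : Tendsto a (𝓝[>] 0) (𝓝 0))
    (hb : ∀ τ ∈ Ioi 0, HasDerivAt b (F (b τ)) τ) (hb0 : Tendsto b (𝓝[>] 0) (𝓝 0)) :
    EqOn a b (Ioi 0) := by
  intro t ht
  set R := max (a t) (b t)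
  obtain ⟨K, hK⟩ :=
    hF.locallyLipschitzOn.exists_lipschitzOnWith_of_compact (isCompact_Icc (a := 0) (b := R))
  have hmem : ∀ {c : ℝ → ℝ}, (∀ τ ∈ Ioi 0, HasDerivAt c (F (c τ)) τ) →
      Tendsto c (𝓝[>] 0) (𝓝 0) → c t ≤ R → ∀ s ∈ Ioc 0 t, c s ∈ Icc 0 R :=
    fun hc hc0 hcR s hs =>
      Icc_subset_Icc_right hcR (mem_Icc_of_hasDerivAt_of_tendsto hF0 hc hc0 hs.1 hs.2)
  have hgron : ∀ δ ∈ Ioo 0 t, dist (a t) (b t) ≤ dist (a δ) (b δ) * Real.exp (K * (t - δ)) := by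
    intro δ hδ
    have hpos : ∀ s ∈ Icc δ t, s ∈ Ioi 0 := fun s hs => hδ.1.trans_le hs.1
    have hIco : ∀ s ∈ Ico δ t, s ∈ Ioc 0 t := fun s hs =>
      ⟨hpos s (Ico_subset_Icc_self hs), hs.2.le⟩
    exact dist_le_of_trajectories_ODE_of_mem (v := fun _ => F) (s := fun _ => Icc 0 R)
      (fun _ _ => hK) (fun s hs => (ha s (hpos s hs)).continuousAt.continuousWithinAt)
      (fun s hs => (ha s (hpos s (Ico_subset_Icc_self hs))).hasDerivWithinAt)
      (fun s hs => hmem ha ha0 (le_max_left _ _) s (hIco s hs))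
      (fun s hs => (hb s (hpos s hs)).continuousAt.continuousWithinAt)
      (fun s hs => (hb s (hpos s (Ico_subset_Icc_self hs))).hasDerivWithinAt)
      (fun s hs => hmem hb hb0 (le_max_right _ _) s (hIco s hs)) le_rfl t
      (right_mem_Icc.2 hδ.2.le)
  have hexp : Tendsto (fun δ => Real.exp (K * (t - δ))) (𝓝[>] 0) (𝓝 (Real.exp (K * (t - 0)))) :=
    ((by fun_prop : Continuous fun δ => Real.exp (K * (t - δ))).tendsto 0).mono_left
      nhdsWithin_le_nhds
  have hlim : Tendsto (fun δ => dist (a δ) (b δ) * Real.exp (K * (t - δ))) (𝓝[>] 0) (𝓝 0) := by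
    simpa using (ha0.dist hb0).mul hexp
  exact dist_le_zero.1 (ge_of_tendsto hlim (eventually_of_mem (Ioo_mem_nhdsGT ht) hgron))

end Uniqueness

section SquaredDefect

variable {c C Λ α M : ℝ}

theorem contDiff_sub_mul_rpow (hα : 1 ≤ α) : ContDiff ℝ 1 fun x : ℝ => C - (Λ * x) ^ α :=
  contDiff_const.sub
    ((Real.contDiff_rpow_const_of_le (by exact_mod_cast hα)).comp (contDiff_const.mul contDiff_id))

theorem sub_mul_rpow_pos (hΛ : 0 < Λ) (hα : 0 < α) (hM : (Λ * M) ^ α = C) {x : ℝ}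
    (hx : x ∈ Ico 0 M) : 0 < C - (Λ * x) ^ α := by
  rw [← hM, sub_pos]
  exact Real.rpow_lt_rpow (mul_nonneg hΛ.le hx.1) (mul_lt_mul_of_pos_left hx.2 hΛ) hα

theorem exists_hasDerivAt_sq_sub_mul_rpow (hc : 0 < c) (hΛ : 0 < Λ) (hα : 1 ≤ α) (hM0 : 0 < M)
    (hM : (Λ * M) ^ α = C) :
    ∃ a : ℝ → ℝ, (∀ τ ∈ Ioi 0, HasDerivAt a (c * (C - (Λ * a τ) ^ α) ^ 2) τ) ∧
      StrictMonoOn a (Ioi 0) ∧ a '' Ioi 0 = Ioo 0 M := by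
  have hG := contDiff_sub_mul_rpow (C := C) (Λ := Λ) hα
  obtain ⟨K, hK⟩ := exists_sq_le_mul_sq_sub_of_contDiff hG (l := 0) (sub_eq_zero.2 hM.symm)
  exact exists_hasDerivAt_strictMonoOn_image_eq (K := c * K)
    (contDiff_const.mul (hG.pow 2)).continuous.continuousOn
    (fun x hx => mul_pos hc (pow_pos (sub_mul_rpow_pos hΛ (by linarith) hM hx) 2))
    (fun x hx => (mul_le_mul_of_nonneg_left (hK x (Ico_subset_Icc_self hx)) hc.le).trans_eq
      (mul_assoc _ _ _).symm)
    hM0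

end SquaredDefect

/-- existence, uniqueness and asymptotics of the solution of
`a' = m q² (2p/((m+1)q²) − (Λa)^{(m+1)/m})²` on `(0,∞)` with `a(0⁺) = 0`. -/
theorem stmt_1 (m : ℕ) (hm : 1 ≤ m) (p q Λ : ℝ) (hp : 0 < p) (hq : q ≠ 0) (hΛ : 0 < Λ)
    (M : ℝ) (hM : M = (1 / Λ) * (2 * p / (((m : ℝ) + 1) * q ^ 2)) ^ ((m : ℝ) / (m + 1))) :
    ∃ a : ℝ → ℝ,
      ((∀ τ ∈ Set.Ioi (0 : ℝ), HasDerivAt a ((m : ℝ) * q ^ 2 *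
          (2 * p / (((m : ℝ) + 1) * q ^ 2) - (Λ * a τ) ^ (((m : ℝ) + 1) / m)) ^ 2) τ) ∧
        Filter.Tendsto a (nhdsWithin 0 (Set.Ioi 0)) (nhds 0)) ∧
      (∀ a' : ℝ → ℝ,
        ((∀ τ ∈ Set.Ioi (0 : ℝ), HasDerivAt a' ((m : ℝ) * q ^ 2 *
            (2 * p / (((m : ℝ) + 1) * q ^ 2) - (Λ * a' τ) ^ (((m : ℝ) + 1) / m)) ^ 2) τ) ∧
          Filter.Tendsto a' (nhdsWithin 0 (Set.Ioi 0)) (nhds 0)) →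
        Set.EqOn a' a (Set.Ioi 0)) ∧
      (∀ τ ∈ Set.Ioi (0 : ℝ), 0 < a τ ∧ a τ < M) ∧
      StrictMonoOn a (Set.Ioi 0) ∧
      Filter.Tendsto a Filter.atTop (nhds M) := by
  have hm0 : (0 : ℝ) < m := by exact_mod_cast hm
  set c : ℝ := m * q ^ 2
  set C : ℝ := 2 * p / ((m + 1) * q ^ 2)
  set α : ℝ := (m + 1) / m
  have hc : 0 < c := by positivity
  have hC : 0 < C := by positivity
  have hα : 1 ≤ α := by rw [le_div_iff₀ hm0]; linarith
  have hM0 : 0 < M := by rw [hM]; positivity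
  have hΛM : (Λ * M) ^ α = C := by
    rw [hM, ← mul_assoc, mul_one_div_cancel hΛ.ne', one_mul, ← Real.rpow_mul hC.le,
      div_mul_div_cancel₀ (by positivity), div_self hm0.ne', Real.rpow_one]
  obtain ⟨a, ha, hmono, himg⟩ := exists_hasDerivAt_sq_sub_mul_rpow hc hΛ hα hM0 hΛM
  have ha0 := hmono.monotoneOn.tendsto_nhdsGT_of_image_Ioi_eq_Ioo himg hM0
  refine ⟨a, ⟨ha, ha0⟩, fun b hb => ?_, fun τ hτ => himg.subset (mem_image_of_mem a hτ), hmono,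
    hmono.monotoneOn.tendsto_atTop_of_image_Ioi_eq_Ioo himg hM0⟩
  have hF : ContDiff ℝ 1 fun x => c * (C - (Λ * x) ^ α) ^ 2 :=
    contDiff_const.mul ((contDiff_sub_mul_rpow hα).pow 2)
  exact eqOn_Ioi_of_hasDerivAt_of_tendsto hF.locallyLipschitz
    (fun x => mul_nonneg hc.le (sq_nonneg _)) hb.1 hb.2 ha ha0
end

section
/- Let m ≥ 1 be an integer, p > 0, q ≠ 0 and Λ ≥ 0 real numbers. Suppose a, b : (0, ∞) → ℝ are differentiable, positive, solve the ODE system a'(τ) = m q² a(τ)²/b(τ)² and b'(τ) = 2p − q² a(τ)/b(τ), satisfy the first-integral relation a(τ)/b(τ) = 2p/((m+1)q²) − (Λ a(τ))^{(m+1)/m} for all τ > 0, and lim_{τ→0⁺} b(τ) = 0. Then for every τ > 0 one has (2mp/(m+1)) τ ≤ b(τ) ≤ 2p τ; in particular b(τ) → ∞ as τ → ∞. -/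
/-! By the first integral, `0 ≤ q² a / b ≤ 2p / (m + 1)`, so `b' = 2p - q² a / b` lies between
`2mp / (m + 1)` and `2p`. A function vanishing at `0⁺` whose derivative is bounded below (above)
by `c` on `(0, ∞)` lies above (below) the line `c τ`, because `f τ - c τ` is monotone there. -/

open Filter Set Topology

theorem mul_le_of_le_hasDerivAt_of_tendsto_zero {f f' : ℝ → ℝ} {c τ : ℝ}
    (hf : ∀ s ∈ Ioi (0 : ℝ), HasDerivAt f (f' s) s) (hc : ∀ s ∈ Ioi (0 : ℝ), c ≤ f' s)
    (h0 : Tendsto f (𝓝[>] 0) (𝓝 0)) (hτ : 0 < τ) : c * τ ≤ f τ := by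
  let g : ℝ → ℝ := fun s => f s - c * s
  have hg : ∀ s ∈ Ioi (0 : ℝ), HasDerivAt g (f' s - c) s := fun s hs =>
    ((hf s hs).sub ((hasDerivAt_id s).const_mul c)).congr_deriv (by ring)
  have hmono : MonotoneOn g (Ioi 0) := by
    refine monotoneOn_of_hasDerivWithinAt_nonneg (f' := fun s => f' s - c) (convex_Ioi 0)
      (fun s hs => (hg s hs).continuousAt.continuousWithinAt) (fun s hs => ?_) (fun s hs => ?_)
    · rw [interior_Ioi] at hs ⊢
      exact (hg s hs).hasDerivWithinAt
    · rw [interior_Ioi] at hs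
      exact sub_nonneg.2 (hc s hs)
  have hg0 : Tendsto g (𝓝[>] 0) (𝓝 0) := by
    simpa using h0.sub (((continuous_const_mul c).tendsto 0).mono_left nhdsWithin_le_nhds)
  have hgτ : 0 ≤ g τ := le_of_tendsto hg0 <| by
    filter_upwards [Ioo_mem_nhdsGT hτ] with s hs
    exact hmono hs.1 hτ hs.2.le
  simpa [g, sub_nonneg] using hgτ

theorem le_mul_of_hasDerivAt_le_of_tendsto_zero {f f' : ℝ → ℝ} {c τ : ℝ}
    (hf : ∀ s ∈ Ioi (0 : ℝ), HasDerivAt f (f' s) s) (hc : ∀ s ∈ Ioi (0 : ℝ), f' s ≤ c)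
    (h0 : Tendsto f (𝓝[>] 0) (𝓝 0)) (hτ : 0 < τ) : f τ ≤ c * τ := by
  have h := mul_le_of_le_hasDerivAt_of_tendsto_zero (f := fun s => -f s) (c := -c)
    (fun s hs => (hf s hs).neg) (fun s hs => neg_le_neg (hc s hs)) (by simpa using h0.neg) hτ
  linarith

theorem sq_mul_div_le_of_div_eq_sub_rpow {x y q Λ K k r : ℝ} (hq : q ≠ 0) (hΛ : 0 ≤ Λ)
    (hx : 0 ≤ x) (h : x / y = K / (k * q ^ 2) - (Λ * x) ^ r) : q ^ 2 * x / y ≤ K / k := by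
  have hrpow : 0 ≤ (Λ * x) ^ r := Real.rpow_nonneg (mul_nonneg hΛ hx) r
  calc q ^ 2 * x / y = K / k - q ^ 2 * (Λ * x) ^ r := by
        rw [mul_div_assoc, h]
        field_simp
    _ ≤ K / k := sub_le_self _ (by positivity)

theorem stmt_2_general (m : ℕ) (hm : 1 ≤ m) (p q Λ : ℝ) (hp : 0 < p) (hq : q ≠ 0) (hΛ : 0 ≤ Λ)
    (a b : ℝ → ℝ)
    (hapos : ∀ τ ∈ Set.Ioi (0 : ℝ), 0 < a τ)
    (hbpos : ∀ τ ∈ Set.Ioi (0 : ℝ), 0 < b τ)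
    (hb : ∀ τ ∈ Set.Ioi (0 : ℝ), HasDerivAt b (2 * p - q ^ 2 * a τ / b τ) τ)
    (hfi : ∀ τ ∈ Set.Ioi (0 : ℝ),
      a τ / b τ = 2 * p / (((m : ℝ) + 1) * q ^ 2) - (Λ * a τ) ^ (((m : ℝ) + 1) / m))
    (hb0 : Filter.Tendsto b (nhdsWithin 0 (Set.Ioi 0)) (nhds 0)) :
    (∀ τ ∈ Set.Ioi (0 : ℝ), 2 * (m : ℝ) * p / (m + 1) * τ ≤ b τ ∧ b τ ≤ 2 * p * τ) ∧
    Filter.Tendsto b Filter.atTop Filter.atTop := by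
  have hratio_nonneg : ∀ τ ∈ Ioi (0 : ℝ), 0 ≤ q ^ 2 * a τ / b τ := fun τ hτ => by
    have := hapos τ hτ
    have := hbpos τ hτ
    positivity
  have hratio_le : ∀ τ ∈ Ioi (0 : ℝ), q ^ 2 * a τ / b τ ≤ 2 * p / ((m : ℝ) + 1) := fun τ hτ =>
    sq_mul_div_le_of_div_eq_sub_rpow hq hΛ (hapos τ hτ).le (hfi τ hτ)
  have hc : 2 * (m : ℝ) * p / (m + 1) = 2 * p - 2 * p / (m + 1) := by
    field_simp
    ring
  have hlower : ∀ τ ∈ Ioi (0 : ℝ), 2 * (m : ℝ) * p / (m + 1) * τ ≤ b τ := fun τ hτ =>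
    mul_le_of_le_hasDerivAt_of_tendsto_zero hb
      (fun s hs => by linarith [hratio_le s hs]) hb0 hτ
  have hupper : ∀ τ ∈ Ioi (0 : ℝ), b τ ≤ 2 * p * τ := fun τ hτ =>
    le_mul_of_hasDerivAt_le_of_tendsto_zero hb
      (fun s hs => by linarith [hratio_nonneg s hs]) hb0 hτ
  have hslope : 0 < 2 * (m : ℝ) * p / (m + 1) := by
    have : (0 : ℝ) < m := by exact_mod_cast hm
    positivity
  refine ⟨fun τ hτ => ⟨hlower τ hτ, hupper τ hτ⟩, ?_⟩
  exact tendsto_atTop_mono' _ ((eventually_gt_atTop 0).mono hlower)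
    (tendsto_id.const_mul_atTop hslope)

/-- linear growth bounds for `b` along the U(1)-bundle Ricci flow ODE system
(the analytic content of the type-I property). -/
theorem stmt_2 (m : ℕ) (hm : 1 ≤ m) (p q Λ : ℝ) (hp : 0 < p) (hq : q ≠ 0) (hΛ : 0 ≤ Λ)
    (a b : ℝ → ℝ)
    (hapos : ∀ τ ∈ Set.Ioi (0 : ℝ), 0 < a τ)
    (hbpos : ∀ τ ∈ Set.Ioi (0 : ℝ), 0 < b τ)
    (ha : ∀ τ ∈ Set.Ioi (0 : ℝ), HasDerivAt a ((m : ℝ) * q ^ 2 * (a τ) ^ 2 / (b τ) ^ 2) τ)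
    (hb : ∀ τ ∈ Set.Ioi (0 : ℝ), HasDerivAt b (2 * p - q ^ 2 * a τ / b τ) τ)
    (hfi : ∀ τ ∈ Set.Ioi (0 : ℝ),
      a τ / b τ = 2 * p / (((m : ℝ) + 1) * q ^ 2) - (Λ * a τ) ^ (((m : ℝ) + 1) / m))
    (hb0 : Filter.Tendsto b (nhdsWithin 0 (Set.Ioi 0)) (nhds 0)) :
    (∀ τ ∈ Set.Ioi (0 : ℝ), 2 * (m : ℝ) * p / (m + 1) * τ ≤ b τ ∧ b τ ≤ 2 * p * τ) ∧
    Filter.Tendsto b Filter.atTop Filter.atTop :=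
  stmt_2_general m hm p q Λ hp hq hΛ a b hapos hbpos hb hfi hb0
end

section
/- Let m ≥ 1 and let J be the standard symplectic 2m × 2m real matrix (J e_i = e_{m+i} and J e_{m+i} = −e_i for 1 ≤ i ≤ m, so J² = −I). Define the linear map L on the space of skew-symmetric real 2m × 2m matrices by L(A) = −tr(JA)·J − J A J. Then L indeed maps skew-symmetric matrices to skew-symmetric matrices, and its eigenvalues are exactly 2m+1, 1 and −1, with eigenspace dimensions 1, m² − 1 and m² − m respectively; the eigenspace for the eigenvalue 2m+1 is spanned by J. -/
/-!
Write `σ A = -J A J`; since `J² = -1`, `σ` is an involution, `σ J = J`, `L J = (2m+1) J` and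
`tr (J · L A) = (2m+1) tr (J A)`. So an eigenvector of `L` for any other eigenvalue `μ` has
`tr (J A) = 0`, hence `L A = σ A = μ A` and `μ² = 1`; and the `(2m+1)`-eigenspace is spanned by `J`,
because the part of an eigenvector with `tr (J ·) = 0` would be such an eigenvector too.
In `m × m` blocks, the skew-symmetric `±1`-eigenvectors are `[[a, b], [b, -a]]` with `a, b`
skew-symmetric (for `-1`) and `[[a, b], [-b, a]]` with `a` skew-symmetric and `b` symmetric
traceless (for `1`); the dimensions follow from `dim so(m) = m(m-1)/2` and
`dim so(m) + dim Sym(m) = m²`.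
-/

open Matrix Module Module.End

theorem Submodule.finrank_inf_ker_add_one {K V : Type*} [Field K] [AddCommGroup V] [Module K V]
    [FiniteDimensional K V] (p : Submodule K V) (φ : V →ₗ[K] K) {x : V} (hx : x ∈ p)
    (hφ : φ x ≠ 0) : finrank K ↥(p ⊓ LinearMap.ker φ) + 1 = finrank K p := by
  have hsurj : Function.Surjective (φ.domRestrict p) := fun c =>
    ⟨(c / φ x) • ⟨x, hx⟩, by simp [hφ]⟩
  rw [← Submodule.map_comap_subtype, Submodule.finrank_map_subtype_eq, ← LinearMap.ker_domRestrict,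
    ← (φ.domRestrict p).finrank_range_add_finrank_ker, LinearMap.range_eq_top.2 hsurj,
    finrank_top, finrank_self, add_comm]

namespace Matrix

section Submodules

variable {n R : Type*} [Fintype n] [DecidableEq n] [CommRing R]

@[simp]
theorem isSelfAdjoint_one_iff {A : Matrix n n R} :
    (1 : Matrix n n R).IsSelfAdjoint A ↔ Aᵀ = A := by
  simp [Matrix.IsSelfAdjoint, IsAdjointPair]

@[simp]
theorem isSkewAdjoint_one_iff {A : Matrix n n R} :
    (1 : Matrix n n R).IsSkewAdjoint A ↔ Aᵀ = -A := by
  simp [Matrix.IsSkewAdjoint, IsAdjointPair]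

theorem mem_selfAdjointMatricesSubmodule_one {A : Matrix n n R} :
    A ∈ selfAdjointMatricesSubmodule (1 : Matrix n n R) ↔ Aᵀ = A :=
  (mem_selfAdjointMatricesSubmodule _ _).trans isSelfAdjoint_one_iff

theorem mem_skewAdjointMatricesSubmodule_one {A : Matrix n n R} :
    A ∈ skewAdjointMatricesSubmodule (1 : Matrix n n R) ↔ Aᵀ = -A :=
  (mem_skewAdjointMatricesSubmodule _ _).trans isSkewAdjoint_one_iff

end Submodules

section Dimensions

variable {n R : Type*} [Fintype n] [DecidableEq n] [Field R] [CharZero R]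

def ofStrictUpper [LinearOrder n] (g : {p : n × n // p.1 < p.2} → R) : Matrix n n R :=
  fun i j => if h : i < j then g ⟨(i, j), h⟩ else 0

variable (n R) in
def skewAdjointEquivStrictUpper [LinearOrder n] :
    skewAdjointMatricesSubmodule (1 : Matrix n n R) ≃ₗ[R] ({p : n × n // p.1 < p.2} → R) where
  toFun A p := A.1 p.1.1 p.1.2
  invFun g := ⟨ofStrictUpper g - (ofStrictUpper g)ᵀ, by simp⟩
  map_add' _ _ := rfl
  map_smul' _ _ := rfl
  left_inv A := by
    have hA : A.1ᵀ = -A.1 := mem_skewAdjointMatricesSubmodule_one.1 A.2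
    ext i j
    rcases lt_trichotomy i j with h | rfl | h
    · simp [ofStrictUpper, h, h.not_gt]
    · have hii : A.1 i i = -A.1 i i := congr_fun₂ hA i i
      simpa [ofStrictUpper, CharZero.eq_neg_self_iff, eq_comm] using hii
    · simpa [ofStrictUpper, h, h.not_gt, neg_eq_iff_eq_neg] using congr_fun₂ hA i j
  right_inv g := by
    ext p
    simp [ofStrictUpper, p.2, p.2.not_gt]

theorem finrank_skewAdjointMatricesSubmodule_one [LinearOrder n] :
    finrank R (skewAdjointMatricesSubmodule (1 : Matrix n n R)) = (Fintype.card n).choose 2 := by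
  rw [(skewAdjointEquivStrictUpper n R).finrank_eq, finrank_fintype_fun_eq_card,
    Fintype.card_subtype, Fintype.card_product_filter_lt]

theorem isCompl_selfAdjoint_skewAdjoint_one :
    IsCompl (selfAdjointMatricesSubmodule (1 : Matrix n n R))
      (skewAdjointMatricesSubmodule (1 : Matrix n n R)) := by
  refine IsCompl.of_eq ((Submodule.eq_bot_iff _).2 fun A ⟨hsymm, hskew⟩ => ?_)
    (Submodule.eq_top_iff'.2 fun A => ?_)
  · rw [SetLike.mem_coe, mem_selfAdjointMatricesSubmodule_one] at hsymm
    rw [SetLike.mem_coe, mem_skewAdjointMatricesSubmodule_one] at hskew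
    ext i j
    simpa [CharZero.eq_neg_self_iff] using congr_fun₂ (hsymm.symm.trans hskew) i j
  · refine Submodule.mem_sup.2 ⟨(2⁻¹ : R) • (A + Aᵀ), ?_, (2⁻¹ : R) • (A - Aᵀ), ?_, ?_⟩
    · simp [add_comm]
    · simp
    · module

theorem finrank_selfAdjoint_add_finrank_skewAdjoint_one :
    finrank R (selfAdjointMatricesSubmodule (1 : Matrix n n R)) +
      finrank R (skewAdjointMatricesSubmodule (1 : Matrix n n R)) = Fintype.card n ^ 2 := by
  rw [Submodule.finrank_add_eq_of_isCompl isCompl_selfAdjoint_skewAdjoint_one, finrank_matrix,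
    finrank_self, mul_one, sq]

end Dimensions

section Trace

variable {n R : Type*} [Fintype n] [DecidableEq n] [Field R]

theorem finrank_selfAdjoint_inf_ker_trace_add_one [Nonempty n] :
    finrank R ↥(selfAdjointMatricesSubmodule (1 : Matrix n n R) ⊓
        LinearMap.ker (traceLinearMap n R R)) + 1 =
      finrank R (selfAdjointMatricesSubmodule (1 : Matrix n n R)) := by
  let i : n := Classical.arbitrary n
  exact Submodule.finrank_inf_ker_add_one _ _
    (mem_selfAdjointMatricesSubmodule_one.2 (transpose_single i i (1 : R)))
    (by simp [trace_single_eq_same])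

end Trace

section Operator

variable {n R : Type*} [Fintype n] [CommRing R]

/-- For `J = Matrix.J`, identifying 2-forms with skew-symmetric matrices turns the curvature
operator `2ω_{ij}ω_{kl} + ω_{ik}ω_{jl} − ω_{il}ω_{jk}` of the Kähler form `ω` into this map. -/
def kahlerCurvatureOperator (J : Matrix n n R) : Module.End R (Matrix n n R) where
  toFun A := -trace (J * A) • J - J * A * J
  map_add' A B := by
    simp only [Matrix.mul_add, Matrix.add_mul, trace_add, neg_add, add_smul]
    abel
  map_smul' c A := by
    simp only [Matrix.mul_smul, Matrix.smul_mul, trace_smul, smul_eq_mul, RingHom.id_apply]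
    module

variable {J A : Matrix n n R} {μ : R}

@[simp]
theorem kahlerCurvatureOperator_apply (J A : Matrix n n R) :
    kahlerCurvatureOperator J A = -trace (J * A) • J - J * A * J :=
  rfl

theorem kahlerCurvatureOperator_self [DecidableEq n] (hJ : J * J = -1) :
    kahlerCurvatureOperator J J = (Fintype.card n + 1 : R) • J := by
  simp [hJ, add_smul]

theorem trace_mul_kahlerCurvatureOperator [DecidableEq n] (hJ : J * J = -1) (A : Matrix n n R) :
    trace (J * kahlerCurvatureOperator J A) = (Fintype.card n + 1) * trace (J * A) := by
  simp only [kahlerCurvatureOperator_apply, Matrix.mul_sub, Matrix.mul_smul, ← Matrix.mul_assoc,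
    hJ, trace_sub, trace_smul, Matrix.neg_mul, Matrix.one_mul, trace_neg, trace_one,
    trace_mul_comm A J, smul_eq_mul]
  ring

theorem kahlerCurvatureOperator_of_trace_mul_eq_zero (h : trace (J * A) = 0) :
    kahlerCurvatureOperator J A = -(J * A * J) := by
  simp [h]

theorem sq_smul_eq_self_of_kahlerCurvatureOperator_eq_smul [DecidableEq n] (hJ : J * J = -1)
    (hA : kahlerCurvatureOperator J A = μ • A) (htr : trace (J * A) = 0) : μ ^ 2 • A = A := by
  rw [kahlerCurvatureOperator_of_trace_mul_eq_zero htr, neg_eq_iff_eq_neg] at hA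
  calc μ ^ 2 • A = -μ • (J * A * J) := by rw [hA, smul_neg, neg_smul, neg_neg, smul_smul, sq]
    _ = J * (J * A * J) * J := by simp [hA]
    _ = (J * J) * A * (J * J) := by simp only [Matrix.mul_assoc]
    _ = A := by simp [hJ]

theorem kahlerCurvatureOperator_transpose (hJ : Jᵀ = -J) (hA : Aᵀ = -A) :
    (kahlerCurvatureOperator J A)ᵀ = -kahlerCurvatureOperator J A := by
  simp [transpose_mul, hJ, hA, Matrix.mul_assoc, add_comm]

end Operator

section OperatorEigenspaces

variable {n R : Type*} [Fintype n] [DecidableEq n] [Field R] {J A : Matrix n n R} {μ : R}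

theorem trace_mul_eq_zero_of_kahlerCurvatureOperator_eq_smul (hJ : J * J = -1)
    (hA : kahlerCurvatureOperator J A = μ • A) (hμ : μ ≠ Fintype.card n + 1) :
    trace (J * A) = 0 := by
  have h := trace_mul_kahlerCurvatureOperator hJ A
  rw [hA, Matrix.mul_smul, trace_smul, smul_eq_mul] at h
  have : (μ - (Fintype.card n + 1)) * trace (J * A) = 0 := by linear_combination h
  exact (mul_eq_zero.1 this).resolve_left (sub_ne_zero.2 hμ)

theorem eq_or_eq_or_eq_of_kahlerCurvatureOperator_eq_smul (hJ : J * J = -1)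
    (hA : kahlerCurvatureOperator J A = μ • A) (hA0 : A ≠ 0) :
    μ = Fintype.card n + 1 ∨ μ = 1 ∨ μ = -1 := by
  refine or_iff_not_imp_left.2 fun hμ => sq_eq_one_iff.1 ?_
  have htr := trace_mul_eq_zero_of_kahlerCurvatureOperator_eq_smul hJ hA hμ
  have : (μ ^ 2 - 1) • A = 0 := by
    rw [sub_smul, one_smul, sq_smul_eq_self_of_kahlerCurvatureOperator_eq_smul hJ hA htr, sub_self]
  exact sub_eq_zero.1 ((smul_eq_zero.1 this).resolve_right hA0)

theorem mem_eigenspace_kahlerCurvatureOperator_iff (hJ : J * J = -1)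
    (hμ : μ ≠ Fintype.card n + 1) :
    A ∈ eigenspace (kahlerCurvatureOperator J) μ ↔
      trace (J * A) = 0 ∧ -(J * A * J) = μ • A := by
  rw [mem_eigenspace_iff]
  refine ⟨fun hA => ?_, fun ⟨htr, hA⟩ => ?_⟩
  · have htr := trace_mul_eq_zero_of_kahlerCurvatureOperator_eq_smul hJ hA hμ
    rw [kahlerCurvatureOperator_of_trace_mul_eq_zero htr] at hA
    exact ⟨htr, hA⟩
  · rwa [kahlerCurvatureOperator_of_trace_mul_eq_zero htr]

theorem eigenspace_kahlerCurvatureOperator_card_add_one [CharZero R] [Nonempty n]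
    (hJ : J * J = -1) :
    eigenspace (kahlerCurvatureOperator J) (Fintype.card n + 1) = Submodule.span R {J} := by
  have hJeig : J ∈ eigenspace (kahlerCurvatureOperator J) (Fintype.card n + 1) :=
    mem_eigenspace_iff.2 (kahlerCurvatureOperator_self hJ)
  refine le_antisymm (fun A hA => ?_) ((Submodule.span_singleton_le_iff_mem _ _).2 hJeig)
  have hcard : (Fintype.card n : R) ≠ 0 := Nat.cast_ne_zero.2 Fintype.card_ne_zero
  set c := trace (J * A) / Fintype.card n
  -- `A + c • J` is an eigenvector with `tr (J (A + c • J)) = 0`, so its eigenvalue would square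
  -- to `1` unless it vanishes.
  have hA' : A + c • J ∈ eigenspace (kahlerCurvatureOperator J) (Fintype.card n + 1) :=
    add_mem hA (Submodule.smul_mem _ c hJeig)
  have htr : trace (J * (A + c • J)) = 0 := by
    simp [Matrix.mul_add, hJ, c, hcard]
  have hsq := sq_smul_eq_self_of_kahlerCurvatureOperator_eq_smul hJ
    (mem_eigenspace_iff.1 hA') htr
  have hμ : ((Fintype.card n : R) + 1) ^ 2 - 1 ≠ 0 := by
    have : ((Fintype.card n : R) + 1) ^ 2 - 1 =
        ((Fintype.card n * (Fintype.card n + 2) : ℕ) : R) := by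
      push_cast
      ring
    rw [this, Nat.cast_ne_zero]
    exact Nat.mul_ne_zero Fintype.card_ne_zero (by omega)
  have h0 : A + c • J = 0 := by
    have : (((Fintype.card n : R) + 1) ^ 2 - 1) • (A + c • J) = 0 := by
      rw [sub_smul, one_smul, hsq, sub_self]
    exact (smul_eq_zero.1 this).resolve_left hμ
  exact Submodule.mem_span_singleton.2 ⟨-c, by rw [neg_smul, neg_eq_iff_add_eq_zero, add_comm, h0]⟩

end OperatorEigenspaces

section SymplecticBlocks

variable {l R : Type*}

theorem fromBlocks_transpose_eq_neg_iff [Neg R] {a b c d : Matrix l l R} :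
    (fromBlocks a b c d)ᵀ = -fromBlocks a b c d ↔ aᵀ = -a ∧ cᵀ = -b ∧ bᵀ = -c ∧ dᵀ = -d := by
  rw [fromBlocks_transpose, fromBlocks_neg, fromBlocks_inj]

variable [Fintype l] [DecidableEq l] [CommRing R]

theorem J_mul_fromBlocks (a b c d : Matrix l l R) :
    J l R * fromBlocks a b c d = fromBlocks (-c) (-d) a b := by
  simp [J, fromBlocks_multiply]

theorem J_mul_fromBlocks_mul_J (a b c d : Matrix l l R) :
    J l R * fromBlocks a b c d * J l R = fromBlocks (-d) c b (-a) := by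
  simp [J, fromBlocks_multiply]

theorem trace_J_mul_fromBlocks (a b c d : Matrix l l R) :
    trace (J l R * fromBlocks a b c d) = trace b - trace c := by
  simp [J_mul_fromBlocks, trace, Fintype.sum_sum_type, sub_eq_neg_add]

end SymplecticBlocks

section SymplecticEigenspaces

variable {l R : Type*} [Fintype l] [DecidableEq l] [Field R] [CharZero R]

theorem fromBlocks_mem_eigenspace_neg_one_inf_skewAdjoint_iff {a b c d : Matrix l l R} :
    fromBlocks a b c d ∈ eigenspace (kahlerCurvatureOperator (J l R)) (-1) ⊓
        skewAdjointMatricesSubmodule 1 ↔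
      aᵀ = -a ∧ bᵀ = -b ∧ c = b ∧ d = -a := by
  have hμ : (-1 : R) ≠ Fintype.card (l ⊕ l) + 1 := fun h => by
    have : ((Fintype.card (l ⊕ l) + 2 : ℕ) : R) = 0 := by
      push_cast
      linear_combination -h
    exact absurd (Nat.cast_eq_zero.1 this) (by omega)
  rw [Submodule.mem_inf, mem_eigenspace_kahlerCurvatureOperator_iff (J_squared l R) hμ,
    mem_skewAdjointMatricesSubmodule_one, trace_J_mul_fromBlocks, J_mul_fromBlocks_mul_J,
    fromBlocks_transpose_eq_neg_iff, neg_one_smul, fromBlocks_neg, fromBlocks_neg, fromBlocks_inj]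
  constructor
  · rintro ⟨⟨-, hd, hc, -, -⟩, ha, hcb, -, -⟩
    obtain rfl : c = b := neg_inj.1 hc
    exact ⟨ha, hcb, rfl, (neg_neg d).symm.trans hd⟩
  · rintro ⟨ha, hb, rfl, rfl⟩
    simp [ha, hb]

theorem fromBlocks_mem_eigenspace_one_inf_skewAdjoint_iff [Nonempty l] {a b c d : Matrix l l R} :
    fromBlocks a b c d ∈ eigenspace (kahlerCurvatureOperator (J l R)) 1 ⊓
        skewAdjointMatricesSubmodule 1 ↔
      aᵀ = -a ∧ (bᵀ = b ∧ trace b = 0) ∧ c = -b ∧ d = a := by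
  have hμ : (1 : R) ≠ Fintype.card (l ⊕ l) + 1 := by simp
  rw [Submodule.mem_inf, mem_eigenspace_kahlerCurvatureOperator_iff (J_squared l R) hμ,
    mem_skewAdjointMatricesSubmodule_one, trace_J_mul_fromBlocks, J_mul_fromBlocks_mul_J,
    fromBlocks_transpose_eq_neg_iff, one_smul, fromBlocks_neg, fromBlocks_inj]
  constructor
  · rintro ⟨⟨htr, hd, hc, -, -⟩, ha, hcb, -, -⟩
    obtain rfl : c = -b := by rw [← hc, neg_neg]
    refine ⟨ha, ⟨by simpa using hcb, by simpa using htr⟩, rfl, (neg_neg d).symm.trans hd⟩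
  · rintro ⟨ha, ⟨hb, htr⟩, rfl, rfl⟩
    simp [ha, hb, htr]

theorem finrank_eigenspace_neg_one_inf_skewAdjoint :
    finrank R ↥(eigenspace (kahlerCurvatureOperator (J l R)) (-1) ⊓
        skewAdjointMatricesSubmodule 1) =
      2 * finrank R (skewAdjointMatricesSubmodule (1 : Matrix l l R)) := by
  let f : skewAdjointMatricesSubmodule (1 : Matrix l l R) × skewAdjointMatricesSubmodule 1 →ₗ[R]
      Matrix (l ⊕ l) (l ⊕ l) R :=
    { toFun x := fromBlocks x.1.1 x.2.1 x.2.1 (-x.1.1)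
      map_add' x y := by simp [fromBlocks_add, add_comm]
      map_smul' c x := by simp [fromBlocks_smul] }
  have hf : Function.Injective f := fun x y h => by
    obtain ⟨h₁, h₂, -, -⟩ := fromBlocks_inj.1 h
    exact Prod.ext (Subtype.ext h₁) (Subtype.ext h₂)
  have hrange : LinearMap.range f = eigenspace (kahlerCurvatureOperator (J l R)) (-1) ⊓
      skewAdjointMatricesSubmodule 1 := by
    ext A
    obtain ⟨a, b, c, d, rfl⟩ : ∃ a b c d, A = fromBlocks a b c d :=
      ⟨_, _, _, _, (fromBlocks_toBlocks A).symm⟩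
    rw [LinearMap.mem_range, fromBlocks_mem_eigenspace_neg_one_inf_skewAdjoint_iff]
    constructor
    · rintro ⟨⟨a', b'⟩, hx⟩
      obtain ⟨rfl, rfl, rfl, rfl⟩ := fromBlocks_inj.1 hx
      exact ⟨mem_skewAdjointMatricesSubmodule_one.1 a'.2,
        mem_skewAdjointMatricesSubmodule_one.1 b'.2, rfl, rfl⟩
    · rintro ⟨ha, hb, hc, hd⟩
      subst c d
      exact ⟨(⟨a, mem_skewAdjointMatricesSubmodule_one.2 ha⟩,
        ⟨b, mem_skewAdjointMatricesSubmodule_one.2 hb⟩), rfl⟩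
  rw [← hrange, LinearMap.finrank_range_of_inj hf, finrank_prod, two_mul]

theorem finrank_eigenspace_one_inf_skewAdjoint_add_one [Nonempty l] :
    finrank R ↥(eigenspace (kahlerCurvatureOperator (J l R)) 1 ⊓
        skewAdjointMatricesSubmodule 1) + 1 =
      finrank R (skewAdjointMatricesSubmodule (1 : Matrix l l R)) +
        finrank R (selfAdjointMatricesSubmodule (1 : Matrix l l R)) := by
  let f : skewAdjointMatricesSubmodule (1 : Matrix l l R) ×
      ↥(selfAdjointMatricesSubmodule (1 : Matrix l l R) ⊓ LinearMap.ker (traceLinearMap l R R))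
      →ₗ[R] Matrix (l ⊕ l) (l ⊕ l) R :=
    { toFun x := fromBlocks x.1 x.2.1 (-x.2.1) x.1
      map_add' x y := by simp [fromBlocks_add, add_comm]
      map_smul' c x := by simp [fromBlocks_smul] }
  have hf : Function.Injective f := fun x y h => by
    obtain ⟨h₁, h₂, -, -⟩ := fromBlocks_inj.1 h
    exact Prod.ext (Subtype.ext h₁) (Subtype.ext h₂)
  have hrange : LinearMap.range f = eigenspace (kahlerCurvatureOperator (J l R)) 1 ⊓
      skewAdjointMatricesSubmodule 1 := by
    ext A
    obtain ⟨a, b, c, d, rfl⟩ : ∃ a b c d, A = fromBlocks a b c d :=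
      ⟨_, _, _, _, (fromBlocks_toBlocks A).symm⟩
    rw [LinearMap.mem_range, fromBlocks_mem_eigenspace_one_inf_skewAdjoint_iff]
    constructor
    · rintro ⟨⟨a', b'⟩, hx⟩
      obtain ⟨rfl, rfl, rfl, rfl⟩ := fromBlocks_inj.1 hx
      exact ⟨mem_skewAdjointMatricesSubmodule_one.1 a'.2,
        ⟨mem_selfAdjointMatricesSubmodule_one.1 b'.2.1, LinearMap.mem_ker.1 b'.2.2⟩, rfl, rfl⟩
    · rintro ⟨ha, ⟨hb, htr⟩, hc, hd⟩
      subst c d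
      exact ⟨(⟨a, mem_skewAdjointMatricesSubmodule_one.2 ha⟩,
        ⟨b, mem_selfAdjointMatricesSubmodule_one.2 hb, LinearMap.mem_ker.2 htr⟩), rfl⟩
  rw [← hrange, LinearMap.finrank_range_of_inj hf, finrank_prod, add_assoc,
    finrank_selfAdjoint_inf_ker_trace_add_one]

end SymplecticEigenspaces

end Matrix

/-- eigenvalues, eigenspace dimensions and top eigenspace of the algebraic
curvature operator `A ↦ −tr(JA)·J − JAJ` on skew-symmetric `2m × 2m` matrices, where `J`
is the standard symplectic matrix. -/
theorem stmt_3 (m : ℕ) (hm : 1 ≤ m)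
    (J : Matrix (Fin m ⊕ Fin m) (Fin m ⊕ Fin m) ℝ)
    (hJ : J = Matrix.fromBlocks 0 (-1) 1 0)
    (L : Matrix (Fin m ⊕ Fin m) (Fin m ⊕ Fin m) ℝ →ₗ[ℝ]
      Matrix (Fin m ⊕ Fin m) (Fin m ⊕ Fin m) ℝ)
    (hL : ∀ A, L A = -(Matrix.trace (J * A)) • J - J * A * J)
    (S : Submodule ℝ (Matrix (Fin m ⊕ Fin m) (Fin m ⊕ Fin m) ℝ))
    (hS : ∀ A, A ∈ S ↔ Matrix.transpose A = -A) :
    (∀ A ∈ S, L A ∈ S) ∧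
    (∀ μ : ℝ, (∃ A ∈ S, A ≠ 0 ∧ L A = μ • A) →
      μ = 2 * (m : ℝ) + 1 ∨ μ = 1 ∨ μ = -1) ∧
    Module.finrank ℝ (↥(Module.End.eigenspace L (2 * (m : ℝ) + 1) ⊓ S)) = 1 ∧
    Module.finrank ℝ (↥(Module.End.eigenspace L 1 ⊓ S)) = m ^ 2 - 1 ∧
    Module.finrank ℝ (↥(Module.End.eigenspace L (-1) ⊓ S)) = m ^ 2 - m ∧
    Module.End.eigenspace L (2 * (m : ℝ) + 1) ⊓ S = Submodule.span ℝ {J} := by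
  obtain rfl : J = Matrix.J (Fin m) ℝ := hJ
  obtain rfl : L = kahlerCurvatureOperator (Matrix.J (Fin m) ℝ) := LinearMap.ext hL
  obtain rfl : S = skewAdjointMatricesSubmodule 1 :=
    Submodule.ext fun A => (hS A).trans mem_skewAdjointMatricesSubmodule_one.symm
  have : Nonempty (Fin m) := ⟨⟨0, hm⟩⟩
  have hcard : (Fintype.card (Fin m ⊕ Fin m) : ℝ) + 1 = 2 * m + 1 := by
    simp [two_mul]
  have hJ0 : J (Fin m) ℝ ≠ 0 := fun h => by simpa [h] using J_squared (Fin m) ℝ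
  have hspan : eigenspace (kahlerCurvatureOperator (J (Fin m) ℝ)) (2 * m + 1) ⊓
      skewAdjointMatricesSubmodule 1 = Submodule.span ℝ {J (Fin m) ℝ} := by
    rw [← hcard, eigenspace_kahlerCurvatureOperator_card_add_one (J_squared _ _), inf_eq_left,
      Submodule.span_singleton_le_iff_mem, mem_skewAdjointMatricesSubmodule_one, J_transpose]
  have hskew := finrank_skewAdjointMatricesSubmodule_one (n := Fin m) (R := ℝ)
  have hsum := finrank_selfAdjoint_add_finrank_skewAdjoint_one (n := Fin m) (R := ℝ)
  have hone := finrank_eigenspace_one_inf_skewAdjoint_add_one (l := Fin m) (R := ℝ)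
  have hchoose : 2 * m.choose 2 = m ^ 2 - m := by
    rw [Nat.choose_two_right, Nat.mul_div_cancel' (Nat.even_mul_pred_self m).two_dvd,
      Nat.mul_sub_one, sq]
  refine ⟨fun A hA => ?_, fun μ ⟨A, _, hA0, hA⟩ => hcard ▸
    eq_or_eq_or_eq_of_kahlerCurvatureOperator_eq_smul (J_squared _ _) hA hA0, ?_, ?_, ?_, hspan⟩
  · exact mem_skewAdjointMatricesSubmodule_one.2 (kahlerCurvatureOperator_transpose
      (J_transpose _ _) (mem_skewAdjointMatricesSubmodule_one.1 hA))
  · rw [hspan, finrank_span_singleton hJ0]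
  · rw [Fintype.card_fin] at hskew hsum
    omega
  · rw [finrank_eigenspace_neg_one_inf_skewAdjoint, hskew, Fintype.card_fin, hchoose]
end

section
/- Let ν > 0 and set λ = ν/2. Define a(τ) = λ coth(ντ/2) and b(τ) = λ tanh(ντ/2) for τ ∈ (0, ∞). Then a and b satisfy the ODE system a'(τ) = −a(τ)(a(τ) − b(τ)) and b'(τ) = b(τ)(a(τ) − b(τ)), and a(τ) b(τ) = λ² for all τ > 0. Moreover, for any differentiable functions a, b on an open interval solving this ODE system, the product a·b is constant. -/
/-! The product `a * b` is a first integral: `(a b)' = -a (a - b) b + a b (a - b) = 0`.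
With `λ = ν / 2` the explicit pair is `a = λ coth (λ τ)`, `b = λ tanh (λ τ)`, and
`cosh² - sinh² = 1` gives `a - b = λ / (sinh (λ τ) cosh (λ τ))`, so both sides of the first
equation equal `-λ² / sinh² (λ τ)` and both sides of the second equal `λ² / cosh² (λ τ)`. -/

open Real

theorem IsOpen.exists_mul_eq_const_of_hasDerivAt {𝕜 : Type*} [RCLike 𝕜] {s : Set 𝕜}
    (hs : IsOpen s) (hs' : IsPreconnected s) {a b c : 𝕜 → 𝕜}
    (ha : ∀ x ∈ s, HasDerivAt a (-(a x) * c x) x) (hb : ∀ x ∈ s, HasDerivAt b (b x * c x) x) :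
    ∃ C, ∀ x ∈ s, a x * b x = C := by
  have hab : ∀ x ∈ s, HasDerivAt (fun y => a y * b y) 0 x := fun x hx =>
    ((ha x hx).mul (hb x hx)).congr_deriv (by ring)
  exact hs.exists_is_const_of_deriv_eq_zero hs'
    (fun x hx => (hab x hx).differentiableAt.differentiableWithinAt)
    (fun x hx => (hab x hx).deriv)

namespace Fateev

noncomputable def a (lam τ : ℝ) : ℝ := lam * (cosh (lam * τ) / sinh (lam * τ))

noncomputable def b (lam τ : ℝ) : ℝ := lam * tanh (lam * τ)

variable {lam τ : ℝ}

theorem a_mul_b (h : sinh (lam * τ) ≠ 0) : a lam τ * b lam τ = lam ^ 2 := by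
  have := (cosh_pos (lam * τ)).ne'
  rw [a, b, tanh_eq_sinh_div_cosh]
  field_simp

theorem a_sub_b (h : sinh (lam * τ) ≠ 0) :
    a lam τ - b lam τ = lam / (sinh (lam * τ) * cosh (lam * τ)) := by
  have := (cosh_pos (lam * τ)).ne'
  have hid := cosh_sq_sub_sinh_sq (lam * τ)
  rw [a, b, tanh_eq_sinh_div_cosh]
  field_simp
  linear_combination lam * hid

theorem hasDerivAt_a (h : sinh (lam * τ) ≠ 0) :
    HasDerivAt (a lam) (-(a lam τ) * (a lam τ - b lam τ)) τ := by
  have hc := (hasDerivAt_cosh _).comp τ (hasDerivAt_const_mul lam)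
  have hs := (hasDerivAt_sinh _).comp τ (hasDerivAt_const_mul lam)
  have hcne := (cosh_pos (lam * τ)).ne'
  have hid := cosh_sq_sub_sinh_sq (lam * τ)
  refine ((hc.div hs h).const_mul lam).congr_deriv ?_
  simp only [Function.comp_apply]
  rw [a_sub_b h, a]
  field_simp
  linear_combination -lam ^ 2 * hid

theorem hasDerivAt_b (h : sinh (lam * τ) ≠ 0) :
    HasDerivAt (b lam) (b lam τ * (a lam τ - b lam τ)) τ := by
  have hc := (hasDerivAt_cosh _).comp τ (hasDerivAt_const_mul lam)
  have hs := (hasDerivAt_sinh _).comp τ (hasDerivAt_const_mul lam)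
  have hcne := (cosh_pos (lam * τ)).ne'
  have hb : b lam = fun τ => lam * (sinh (lam * τ) / cosh (lam * τ)) := by
    funext τ
    rw [b, tanh_eq_sinh_div_cosh]
  have hid := cosh_sq_sub_sinh_sq (lam * τ)
  rw [a_sub_b h, hb]
  refine ((hs.div hc hcne).const_mul lam).congr_deriv ?_
  simp only [Function.comp_apply]
  field_simp
  linear_combination lam ^ 2 * hid

end Fateev

/-- Fateev's k = 0 solution `a = λ coth(ντ/2)`, `b = λ tanh(ντ/2)` of the system
`a' = −a(a−b)`, `b' = b(a−b)`, together with the first integral `a·b = const`. -/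
theorem stmt_5 (ν lam : ℝ) (hν : 0 < ν) (hlam : lam = ν / 2)
    (a b : ℝ → ℝ)
    (hadef : ∀ τ, a τ = lam * (Real.cosh (ν * τ / 2) / Real.sinh (ν * τ / 2)))
    (hbdef : ∀ τ, b τ = lam * Real.tanh (ν * τ / 2)) :
    (∀ τ ∈ Set.Ioi (0 : ℝ), HasDerivAt a (-(a τ) * (a τ - b τ)) τ) ∧
    (∀ τ ∈ Set.Ioi (0 : ℝ), HasDerivAt b (b τ * (a τ - b τ)) τ) ∧
    (∀ τ ∈ Set.Ioi (0 : ℝ), a τ * b τ = lam ^ 2) ∧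
    (∀ (s t : ℝ) (a' b' : ℝ → ℝ),
      (∀ τ ∈ Set.Ioo s t, HasDerivAt a' (-(a' τ) * (a' τ - b' τ)) τ) →
      (∀ τ ∈ Set.Ioo s t, HasDerivAt b' (b' τ * (a' τ - b' τ)) τ) →
      ∃ C : ℝ, ∀ τ ∈ Set.Ioo s t, a' τ * b' τ = C) := by
  have harg : ∀ τ, ν * τ / 2 = lam * τ := fun τ => by rw [hlam]; ring
  have ha : a = Fateev.a lam := funext fun τ => by rw [hadef, harg, Fateev.a]
  have hb : b = Fateev.b lam := funext fun τ => by rw [hbdef, harg, Fateev.b]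
  have hsinh : ∀ τ ∈ Set.Ioi (0 : ℝ), sinh (lam * τ) ≠ 0 := fun τ (hτ : 0 < τ) =>
    (sinh_pos_iff.mpr (mul_pos (by linarith) hτ)).ne'
  subst ha hb
  exact ⟨fun τ hτ => Fateev.hasDerivAt_a (hsinh τ hτ),
    fun τ hτ => Fateev.hasDerivAt_b (hsinh τ hτ),
    fun τ hτ => Fateev.a_mul_b (hsinh τ hτ),
    fun s t _ _ => isOpen_Ioo.exists_mul_eq_const_of_hasDerivAt isPreconnected_Ioo⟩
end

section
/- Let ν > 0 and k real with k² < 1, let u₁ = ν/(1−k²) and u₂ = νk/(1−k²), let f(ξ) = ξ − (k/2)·log((1 + k tanh ξ)/(1 − k tanh ξ)) on (0, ∞), and let ξ : (0, ∞) → (0, ∞) be the inverse of f composed with multiplication by ν, i.e. ν τ = f(ξ(τ)) for all τ > 0. Then the function u(τ) = (ν/(1−k²)) coth(ξ(τ)) is differentiable on (0, ∞) and satisfies u'(τ) = −(u(τ)² − u₁²)(u(τ)² − u₂²)/u(τ)² for all τ > 0. -/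
/-!
The time change has derivative `f' ξ = (1 - k²) / (1 - k² tanh² ξ) > 0`, so `f` is injective with
nonvanishing strict derivative, and the inverse function theorem makes `ξ = f⁻¹ (ν ·)`
differentiable with `ξ' = ν / f' ξ`. With `c = ν / (1 - k²)` and `u = c coth ξ`, the chain rule
gives `u' = -c² (1 - k² tanh² ξ) / sinh² ξ`, which is the right-hand side because
`u² - u₁² = c² / sinh² ξ` and `(u² - u₂²) / u² = 1 - k² tanh² ξ`.
-/

open Filter Function Real Topology

theorem HasStrictDerivAt.hasDerivAt_of_comp_eventuallyEq {𝕜 : Type*} [NontriviallyNormedField 𝕜]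
    [CompleteSpace 𝕜] {f g h : 𝕜 → 𝕜} {f' h' a : 𝕜} (hinj : Injective f)
    (hf : HasStrictDerivAt f f' (g a)) (hf' : f' ≠ 0) (hh : HasDerivAt h h' a)
    (hfg : f ∘ g =ᶠ[𝓝 a] h) : HasDerivAt g (f'⁻¹ * h') a := by
  have hha : h a = f (g a) := hfg.eq_of_nhds.symm
  have hinv := hf.to_localInverse hf'
  rw [← hha] at hinv
  refine (hinv.hasDerivAt.comp a hh).congr_of_eventuallyEq ?_
  have hright := hh.continuousAt.eventually (hha ▸ hf.eventually_right_inverse hf')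
  filter_upwards [hfg, hright] with x hx hxr
  exact hinj (hx.trans hxr.symm)

theorem Real.hasStrictDerivAt_tanh (x : ℝ) : HasStrictDerivAt tanh (1 - tanh x ^ 2) x := by
  rw [show tanh = fun y => sinh y / cosh y from funext tanh_eq_sinh_div_cosh]
  refine ((hasStrictDerivAt_sinh x).div (hasStrictDerivAt_cosh x) (cosh_pos x).ne').congr_deriv ?_
  field_simp

theorem Real.hasDerivAt_coth {x : ℝ} (hx : x ≠ 0) :
    HasDerivAt (fun y => cosh y / sinh y) (-1 / sinh x ^ 2) x := by
  refine ((hasDerivAt_cosh x).div (hasDerivAt_sinh x) (sinh_ne_zero.mpr hx)).congr_deriv ?_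
  rw [← cosh_sq_sub_sinh_sq x]
  ring

theorem Real.sq_mul_tanh_lt_one {k : ℝ} (hk : k ^ 2 < 1) (x : ℝ) : (k * tanh x) ^ 2 < 1 := by
  rw [mul_pow]
  nlinarith [tanh_sq_lt_one x, sq_nonneg k, sq_nonneg (tanh x)]

noncomputable def fateevTime (k x : ℝ) : ℝ :=
  x - k / 2 * log ((1 + k * tanh x) / (1 - k * tanh x))

section FateevTime

variable {k : ℝ} (hk : k ^ 2 < 1)
include hk

theorem hasStrictDerivAt_fateevTime (x : ℝ) :
    HasStrictDerivAt (fateevTime k) ((1 - k ^ 2) / (1 - k ^ 2 * tanh x ^ 2)) x := by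
  obtain ⟨hplus, hminus⟩ := abs_lt.mp ((sq_lt_one_iff_abs_lt_one _).mp (sq_mul_tanh_lt_one hk x))
  replace hplus : 0 < 1 + k * tanh x := by linarith
  replace hminus : 0 < 1 - k * tanh x := by linarith
  have hquot := (((hasStrictDerivAt_tanh x).const_mul k).const_add 1).div
    (((hasStrictDerivAt_tanh x).const_mul k).const_sub 1) hminus.ne'
  refine ((hasStrictDerivAt_id x).sub
    ((hquot.log (div_pos hplus hminus).ne').const_mul (k / 2))).congr_deriv ?_
  have hden : 1 - k ^ 2 * tanh x ^ 2 = (1 + k * tanh x) * (1 - k * tanh x) := by ring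
  simp only [Pi.div_apply, hden]
  field_simp
  ring

theorem fateevTime_deriv_pos (x : ℝ) : 0 < (1 - k ^ 2) / (1 - k ^ 2 * tanh x ^ 2) :=
  div_pos (by linarith) (by nlinarith [sq_mul_tanh_lt_one hk x])

theorem strictMono_fateevTime : StrictMono (fateevTime k) :=
  strictMono_of_hasDerivAt_pos (fun x => (hasStrictDerivAt_fateevTime hk x).hasDerivAt)
    (fateevTime_deriv_pos hk)

end FateevTime

theorem stmt_7_general (ν k : ℝ) (hk : k ^ 2 < 1)
    (u₁ u₂ : ℝ) (hu₁ : u₁ = ν / (1 - k ^ 2)) (hu₂ : u₂ = ν * k / (1 - k ^ 2))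
    (f : ℝ → ℝ)
    (hf : ∀ ξ, f ξ = ξ - k / 2 *
      Real.log ((1 + k * Real.tanh ξ) / (1 - k * Real.tanh ξ)))
    (ξ : ℝ → ℝ)
    (hξpos : ∀ τ ∈ Set.Ioi (0 : ℝ), 0 < ξ τ)
    (hξ : ∀ τ ∈ Set.Ioi (0 : ℝ), ν * τ = f (ξ τ))
    (u : ℝ → ℝ)
    (hu : ∀ τ, u τ = ν / (1 - k ^ 2) * (Real.cosh (ξ τ) / Real.sinh (ξ τ))) :
    ∀ τ ∈ Set.Ioi (0 : ℝ),
      HasDerivAt u (-(((u τ) ^ 2 - u₁ ^ 2) * ((u τ) ^ 2 - u₂ ^ 2)) / (u τ) ^ 2) τ := by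
  intro τ₀ hτ₀
  obtain rfl : f = fateevTime k := funext hf
  have hξ₀ : ξ τ₀ ≠ 0 := (hξpos τ₀ hτ₀).ne'
  have hξ' : HasDerivAt ξ (((1 - k ^ 2) / (1 - k ^ 2 * tanh (ξ τ₀) ^ 2))⁻¹ * ν) τ₀ :=
    (hasStrictDerivAt_fateevTime hk _).hasDerivAt_of_comp_eventuallyEq
      (strictMono_fateevTime hk).injective (fateevTime_deriv_pos hk _).ne'
      (hasDerivAt_const_mul ν) (eventually_of_mem (Ioi_mem_nhds hτ₀) fun τ hτ => (hξ τ hτ).symm)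
  rw [show u = fun τ => ν / (1 - k ^ 2) * (cosh (ξ τ) / sinh (ξ τ)) from funext hu]
  refine (((hasDerivAt_coth hξ₀).comp τ₀ hξ').const_mul _).congr_deriv ?_
  have hs : sinh (ξ τ₀) ≠ 0 := sinh_ne_zero.mpr hξ₀
  have hc : cosh (ξ τ₀) ≠ 0 := (cosh_pos _).ne'
  have hk' : 1 - k ^ 2 ≠ 0 := by linarith
  simp only [hu₁, hu₂, tanh_eq_sinh_div_cosh]
  field_simp
  rw [cosh_sq]
  ring

/-- under the reparametrization `ντ = f(ξ(τ))`, the function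
`u(τ) = (ν/(1−k²)) coth(ξ(τ))` solves `u' = −(u²−u₁²)(u²−u₂²)/u²`. -/
theorem stmt_7 (ν k : ℝ) (hν : 0 < ν) (hk : k ^ 2 < 1)
    (u₁ u₂ : ℝ) (hu₁ : u₁ = ν / (1 - k ^ 2)) (hu₂ : u₂ = ν * k / (1 - k ^ 2))
    (f : ℝ → ℝ)
    (hf : ∀ ξ, f ξ = ξ - k / 2 *
      Real.log ((1 + k * Real.tanh ξ) / (1 - k * Real.tanh ξ)))
    (ξ : ℝ → ℝ)
    (hξpos : ∀ τ ∈ Set.Ioi (0 : ℝ), 0 < ξ τ)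
    (hξ : ∀ τ ∈ Set.Ioi (0 : ℝ), ν * τ = f (ξ τ))
    (u : ℝ → ℝ)
    (hu : ∀ τ, u τ = ν / (1 - k ^ 2) * (Real.cosh (ξ τ) / Real.sinh (ξ τ))) :
    ∀ τ ∈ Set.Ioi (0 : ℝ),
      HasDerivAt u (-(((u τ) ^ 2 - u₁ ^ 2) * ((u τ) ^ 2 - u₂ ^ 2)) / (u τ) ^ 2) τ :=
  stmt_7_general ν k hk u₁ u₂ hu₁ hu₂ f hf ξ hξpos hξ u hu
end

section
/- Let λ > 0 and k real with k² < 1, and for ξ > 0 define S(ξ) = √(cosh²ξ − k² sinh²ξ), a(ξ) = λ(S(ξ)+1)/sinh ξ, b(ξ) = λ(S(ξ)−1)/sinh ξ, c(ξ) = −λ k tanh ξ, d(ξ) = λ(√(1 − k² tanh²ξ) − cosh ξ)/sinh ξ, and u(ξ) = 2λ coth ξ. Then for every ξ > 0: a(ξ) > b(ξ) > 0, d(ξ) < 0, u(ξ) + 2 d(ξ) > 0, and u(ξ) > 2|c(ξ)|. -/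
/-- the inequalities `a > b > 0`, `d < 0`, `u + 2d > 0`, `u > 2|c|` for the
coefficient functions of Fateev's ansatz, which make the metric positive definite. -/
theorem stmt_9 (lam k : ℝ) (hlam : 0 < lam) (hk : k ^ 2 < 1)
    (S a b c d u : ℝ → ℝ)
    (hS : ∀ ξ, S ξ = Real.sqrt (Real.cosh ξ ^ 2 - k ^ 2 * Real.sinh ξ ^ 2))
    (ha : ∀ ξ, a ξ = lam * (S ξ + 1) / Real.sinh ξ)
    (hb : ∀ ξ, b ξ = lam * (S ξ - 1) / Real.sinh ξ)
    (hc : ∀ ξ, c ξ = -(lam * k * Real.tanh ξ))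
    (hd : ∀ ξ, d ξ = lam * (Real.sqrt (1 - k ^ 2 * Real.tanh ξ ^ 2) - Real.cosh ξ) /
      Real.sinh ξ)
    (hu : ∀ ξ, u ξ = 2 * lam * (Real.cosh ξ / Real.sinh ξ)) :
    ∀ ξ ∈ Set.Ioi (0 : ℝ),
      a ξ > b ξ ∧ b ξ > 0 ∧ d ξ < 0 ∧ u ξ + 2 * d ξ > 0 ∧ u ξ > 2 * |c ξ| := by
  intro ξ hξ
  have hξ0 : (0:ℝ) < ξ := hξ
  have hs : 0 < Real.sinh ξ := Real.sinh_pos_iff.mpr hξ0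
  have hcp : 0 < Real.cosh ξ := Real.cosh_pos ξ
  have hsq : Real.cosh ξ ^ 2 = 1 + Real.sinh ξ ^ 2 := by
    have := Real.cosh_sq ξ; linarith
  have hc1 : 1 < Real.cosh ξ := by nlinarith [sq_nonneg (Real.sinh ξ)]
  have hE : 1 < Real.cosh ξ ^ 2 - k ^ 2 * Real.sinh ξ ^ 2 := by
    nlinarith [sq_nonneg (Real.sinh ξ), mul_pos (mul_pos hs hs) (sub_pos.mpr hk)]
  have hS1 : 1 < S ξ := by
    rw [hS]
    have : (1:ℝ) = Real.sqrt 1 := by simp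
    rw [this]
    exact Real.sqrt_lt_sqrt (by norm_num) hE
  have htanh : Real.tanh ξ = Real.sinh ξ / Real.cosh ξ := Real.tanh_eq_sinh_div_cosh ξ
  have ht2 : Real.tanh ξ ^ 2 < 1 := by
    rw [htanh, div_pow, div_lt_one (by positivity)]
    nlinarith
  have htpos : 0 < Real.tanh ξ := by
    rw [htanh]; positivity
  have hTpos : 0 < 1 - k ^ 2 * Real.tanh ξ ^ 2 := by
    nlinarith [sq_nonneg k, sq_nonneg (Real.tanh ξ)]
  have hr1 : Real.sqrt (1 - k ^ 2 * Real.tanh ξ ^ 2) ≤ 1 := by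
    calc Real.sqrt (1 - k ^ 2 * Real.tanh ξ ^ 2) ≤ Real.sqrt 1 :=
          Real.sqrt_le_sqrt (by nlinarith [sq_nonneg k, sq_nonneg (Real.tanh ξ)])
      _ = 1 := Real.sqrt_one
  have hrpos : 0 < Real.sqrt (1 - k ^ 2 * Real.tanh ξ ^ 2) := Real.sqrt_pos.mpr hTpos
  refine ⟨?_, ?_, ?_, ?_, ?_⟩
  · rw [ha, hb, gt_iff_lt, div_lt_div_iff₀ hs hs]
    nlinarith
  · rw [hb]
    exact div_pos (by nlinarith) hs
  · rw [hd]
    apply div_neg_of_neg_of_pos _ hs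
    nlinarith
  · rw [hu, hd]
    have : 2 * lam * (Real.cosh ξ / Real.sinh ξ) +
        2 * (lam * (Real.sqrt (1 - k ^ 2 * Real.tanh ξ ^ 2) - Real.cosh ξ) / Real.sinh ξ)
        = 2 * lam * Real.sqrt (1 - k ^ 2 * Real.tanh ξ ^ 2) / Real.sinh ξ := by
      field_simp; ring
    rw [this]; positivity
  · rw [hu, hc]
    have habs : |(-(lam * k * Real.tanh ξ))| = lam * |k| * Real.tanh ξ := by
      rw [abs_neg, abs_mul, abs_mul, abs_of_pos hlam, abs_of_pos htpos]
    rw [habs, htanh]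
    have hk1 : |k| < 1 := abs_lt.mpr ⟨by nlinarith [abs_nonneg k], by nlinarith [abs_nonneg k]⟩
    have e1 : 2 * lam * (Real.cosh ξ / Real.sinh ξ) = 2 * lam * Real.cosh ξ / Real.sinh ξ := by ring
    have e2 : 2 * (lam * |k| * (Real.sinh ξ / Real.cosh ξ)) = 2 * lam * |k| * Real.sinh ξ / Real.cosh ξ := by ring
    rw [e1, e2, gt_iff_lt, div_lt_div_iff₀ hcp hs]
    nlinarith [mul_pos (mul_pos hlam (mul_pos hs hs)) (sub_pos.mpr hk1), mul_pos hlam (mul_pos hs hs)]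
end

section
/- Let I ⊆ ℝ be an open interval and let u, a, b, c, d : I → ℝ be differentiable functions with u > 0, a > 0, b > 0 and d < 0 on I, satisfying the integrability conditions (u + d)² = a² + c² and d² = b² + c² on I, together with the equations u' = −(u + 2d)², (u·c)' = 0 and (a·b)' = 0. Set v = u + 2d. Then on I: a² − b² = u·v, and the equations u·a' = −a(a² − b²), u·b' = b(a² − b²), u·v' = v³ − 2v(a² + b²), and u·d' = v² d − 2 v b² all hold. -/
/-!
Subtracting the integrability conditions gives `a² - b² = u v` with `v = u + 2d`. Differentiating
them and using `u' = -v²`, `(uc)' = 0`, `(ab)' = 0` gives at each time a linear system for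
`(a', b', d')` whose determinant is a multiple of `v (ud + b²)`, and `ud + b² = (u + d) d - c²`
never vanishes when `a, d ≠ 0`. So where `v ≠ 0` the system forces `a' = -a v`, `b' = b v` and the
equation for `d'`. At a zero of `v` one more equation is needed: it comes from `F = a² - b²`, which
vanishes there and satisfies a linear ODE `F' = μ F` off its zeros, so that `F' = 0` by Gronwall.
-/

open Set Real

/-- Gronwall: `f² e^{-2Mx}` is antitone on `[p, q]`. -/
theorem eq_zero_of_mul_deriv_le_sq {f f' : ℝ → ℝ} {p q M : ℝ} (hpq : p ≤ q)
    (hf : ContinuousOn f (Icc p q)) (hf' : ∀ x ∈ Ioo p q, HasDerivAt f (f' x) x)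
    (hle : ∀ x ∈ Ioo p q, f x * f' x ≤ M * f x ^ 2) (hp : f p = 0) : f q = 0 := by
  set g : ℝ → ℝ := fun x => f x ^ 2 * exp (-(2 * M) * x)
  have hg' : ∀ x ∈ Ioo p q,
      HasDerivAt g (2 * (f x * f' x - M * f x ^ 2) * exp (-(2 * M) * x)) x := by
    intro x hx
    have hexp : HasDerivAt (fun x => exp (-(2 * M) * x)) (exp (-(2 * M) * x) * -(2 * M)) x := by
      simpa using ((hasDerivAt_id x).const_mul (-(2 * M))).exp
    exact (((hf' x hx).pow 2).mul hexp).congr_deriv (by norm_num; ring)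
  have hanti : AntitoneOn g (Icc p q) := by
    refine antitoneOn_of_hasDerivWithinAt_nonpos (convex_Icc p q)
      (f' := fun x => 2 * (f x * f' x - M * f x ^ 2) * exp (-(2 * M) * x)) ?_ ?_ ?_
    · exact (hf.pow 2).mul (by fun_prop)
    · simpa only [interior_Icc] using fun x hx => (hg' x hx).hasDerivWithinAt
    · simp only [interior_Icc]
      intro x hx
      have := sub_nonpos.2 (hle x hx)
      have := exp_pos (-(2 * M) * x)
      nlinarith
  have hgq : g q ≤ 0 := by
    simpa [g, hp] using hanti (left_mem_Icc.2 hpq) (right_mem_Icc.2 hpq) hpq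
  have hfq : f q ^ 2 ≤ 0 := nonpos_of_mul_nonpos_left hgq (exp_pos _)
  exact pow_eq_zero_iff two_ne_zero |>.1 (le_antisymm hfq (sq_nonneg _))

/-- The bound `f f' ≤ M f²` also holds at the zeros of `f`, so by Gronwall `f` vanishes on a right
neighbourhood of `τ₀`. -/
theorem deriv_eq_zero_of_eq_mul_of_ne_zero {s t τ₀ : ℝ} {f f' μ : ℝ → ℝ}
    (hf : ∀ x ∈ Ioo s t, HasDerivAt f (f' x) x) (hμ : ContinuousOn μ (Ioo s t))
    (hode : ∀ x ∈ Ioo s t, f x ≠ 0 → f' x = μ x * f x)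
    (hτ₀ : τ₀ ∈ Ioo s t) (h0 : f τ₀ = 0) : f' τ₀ = 0 := by
  obtain ⟨q, hτq, hqt⟩ := exists_between hτ₀.2
  have hsub : Icc τ₀ q ⊆ Ioo s t := Icc_subset_Ioo hτ₀.1 hqt
  obtain ⟨M, hM⟩ := isCompact_Icc.exists_bound_of_continuousOn (hμ.mono hsub)
  have hle : ∀ x ∈ Icc τ₀ q, f x * f' x ≤ M * f x ^ 2 := by
    intro x hx
    by_cases hfx : f x = 0
    · simp [hfx]
    rw [hode x (hsub hx) hfx]
    have := (le_abs_self (μ x)).trans (hM x hx)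
    nlinarith [sq_nonneg (f x)]
  have hzero : ∀ r ∈ Icc τ₀ q, f r = 0 := fun r hr =>
    eq_zero_of_mul_deriv_le_sq hr.1
      (fun x hx => (hf x (hsub ⟨hx.1, hx.2.trans hr.2⟩)).continuousAt.continuousWithinAt)
      (fun x hx => hf x (hsub ⟨hx.1.le, hx.2.le.trans hr.2⟩))
      (fun x hx => hle x ⟨hx.1.le, hx.2.le.trans hr.2⟩) h0
  have hmem : τ₀ ∈ Icc τ₀ q := left_mem_Icc.2 hτq.le
  exact (uniqueDiffOn_Icc hτq τ₀ hmem).eq_deriv _ (hf τ₀ hτ₀).hasDerivWithinAt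
    ((hasDerivWithinAt_const τ₀ _ 0).congr_of_mem hzero hmem)

theorem HasDerivAt.unique_of_eqOn {f g : ℝ → ℝ} {f' g' x : ℝ} {U : Set ℝ} (hU : IsOpen U)
    (hx : x ∈ U) (hfg : EqOn f g U) (hf : HasDerivAt f f' x) (hg : HasDerivAt g g' x) :
    f' = g' :=
  hf.unique (hg.congr_of_eventuallyEq (hfg.eventuallyEq_of_mem (hU.mem_nhds hx)))

/-- The values and first derivatives of Fateev's functions at one time, with `u' = -(u + 2d)²`
substituted: the integrability conditions, their derivatives, `(uc)' = 0` and `(ab)' = 0`. -/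
structure FateevJet (u a b c d a' b' c' d' : ℝ) : Prop where
  integrability_left : (u + d) ^ 2 = a ^ 2 + c ^ 2
  integrability_right : d ^ 2 = b ^ 2 + c ^ 2
  deriv_integrability_left : (u + d) * (-(u + 2 * d) ^ 2 + d') = a * a' + c * c'
  deriv_integrability_right : d * d' = b * b' + c * c'
  deriv_mul_uc : u * c' = (u + 2 * d) ^ 2 * c
  deriv_mul_ab : a' * b + a * b' = 0

theorem mul_add_sq_ne_zero {u a b c d : ℝ} (h₁ : (u + d) ^ 2 = a ^ 2 + c ^ 2)
    (h₂ : d ^ 2 = b ^ 2 + c ^ 2) (ha : a ≠ 0) (hd : d ≠ 0) : u * d + b ^ 2 ≠ 0 := by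
  intro h
  have hsq : (u + d) ^ 2 * d ^ 2 = (c ^ 2) ^ 2 := by
    linear_combination ((u + d) * d + c ^ 2) * (h + h₂)
  have : a ^ 2 * d ^ 2 = 0 := by nlinarith
  simp_all

namespace FateevJet

variable {u a b c d a' b' c' d' : ℝ}

theorem sq_sub_sq (h : FateevJet u a b c d a' b' c' d') : a ^ 2 - b ^ 2 = u * (u + 2 * d) := by
  linear_combination h.integrability_right - h.integrability_left

theorem deriv_a_of_ne (h : FateevJet u a b c d a' b' c' d') (hu : u ≠ 0) (ha : a ≠ 0)
    (hd : d ≠ 0) (hv : u + 2 * d ≠ 0) : a' = -a * (u + 2 * d) := by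
  have hdet := mul_add_sq_ne_zero h.integrability_left h.integrability_right ha hd
  have hprod : (u * d + b ^ 2) * (u * ((u + 2 * d) * (a' + a * (u + 2 * d)))) = 0 := by
    linear_combination (-(a * d * u)) * h.deriv_integrability_left
      + ((u + d) * a * u) * h.deriv_integrability_right + (a * c * u) * h.deriv_mul_uc
      + ((u + d) * u * b) * h.deriv_mul_ab + (u * a' * d) * h.integrability_left
      + (-(a * u * (u + 2 * d) ^ 2) - u * a' * d) * h.integrability_right
  simp only [mul_eq_zero, hdet, hu, hv, false_or] at hprod
  linear_combination hprod

theorem deriv_a_of_eq (h : FateevJet u a b c d a' b' c' d') (ha : 0 < a) (hb : 0 < b)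
    (hv : u + 2 * d = 0) (hF : a * a' = b * b') : a' = -a * (u + 2 * d) := by
  have hab : a = b := by
    have : (a - b) * (a + b) = 0 := by linear_combination h.sq_sub_sq + u * hv
    simpa [sub_eq_zero, (add_pos ha hb).ne'] using this
  subst hab
  have h2a : a * (2 * a') = 0 := by linear_combination hF + h.deriv_mul_ab
  simpa [ha.ne', hv] using h2a

theorem deriv_b (h : FateevJet u a b c d a' b' c' d') (ha : a ≠ 0)
    (ha' : a' = -a * (u + 2 * d)) : b' = b * (u + 2 * d) :=
  mul_left_cancel₀ ha (by linear_combination h.deriv_mul_ab - b * ha')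

theorem deriv_d (h : FateevJet u a b c d a' b' c' d') (hd : d ≠ 0)
    (hb' : b' = b * (u + 2 * d)) :
    u * d' = (u + 2 * d) ^ 2 * d - 2 * (u + 2 * d) * b ^ 2 :=
  mul_left_cancel₀ hd (by
    linear_combination u * h.deriv_integrability_right + c * h.deriv_mul_uc + u * b * hb'
      - (u + 2 * d) ^ 2 * h.integrability_right)

end FateevJet

theorem FateevJet.of_hasDerivAt {s t τ : ℝ} {u a b c d a' b' c' d' : ℝ → ℝ}
    (hic1 : ∀ τ ∈ Ioo s t, (u τ + d τ) ^ 2 = (a τ) ^ 2 + (c τ) ^ 2)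
    (hic2 : ∀ τ ∈ Ioo s t, (d τ) ^ 2 = (b τ) ^ 2 + (c τ) ^ 2)
    (hu : ∀ τ ∈ Ioo s t, HasDerivAt u (-(u τ + 2 * d τ) ^ 2) τ)
    (hda : ∀ τ ∈ Ioo s t, HasDerivAt a (a' τ) τ)
    (hdb : ∀ τ ∈ Ioo s t, HasDerivAt b (b' τ) τ)
    (hdc : ∀ τ ∈ Ioo s t, HasDerivAt c (c' τ) τ)
    (hdd : ∀ τ ∈ Ioo s t, HasDerivAt d (d' τ) τ)
    (huc : ∀ τ ∈ Ioo s t, HasDerivAt (fun σ => u σ * c σ) 0 τ)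
    (hab : ∀ τ ∈ Ioo s t, HasDerivAt (fun σ => a σ * b σ) 0 τ) (hτ : τ ∈ Ioo s t) :
    FateevJet (u τ) (a τ) (b τ) (c τ) (d τ) (a' τ) (b' τ) (c' τ) (d' τ) where
  integrability_left := hic1 τ hτ
  integrability_right := hic2 τ hτ
  deriv_integrability_left := by
    have hud := (hu τ hτ).add (hdd τ hτ)
    have := HasDerivAt.unique_of_eqOn isOpen_Ioo hτ hic1 (hud.pow 2)
      (((hda τ hτ).pow 2).add ((hdc τ hτ).pow 2))
    norm_num at this
    linear_combination this / 2
  deriv_integrability_right := by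
    have := HasDerivAt.unique_of_eqOn isOpen_Ioo hτ hic2 ((hdd τ hτ).pow 2)
      (((hdb τ hτ).pow 2).add ((hdc τ hτ).pow 2))
    norm_num at this
    linear_combination this / 2
  deriv_mul_uc := by linear_combination ((hu τ hτ).mul (hdc τ hτ)).unique (huc τ hτ)
  deriv_mul_ab := ((hda τ hτ).mul (hdb τ hτ)).unique (hab τ hτ)

theorem fateev_deriv_a_eq {s t : ℝ} {u a b c d a' b' c' d' : ℝ → ℝ}
    (hJ : ∀ τ ∈ Ioo s t, FateevJet (u τ) (a τ) (b τ) (c τ) (d τ) (a' τ) (b' τ) (c' τ) (d' τ))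
    (hupos : ∀ τ ∈ Ioo s t, 0 < u τ) (hapos : ∀ τ ∈ Ioo s t, 0 < a τ)
    (hbpos : ∀ τ ∈ Ioo s t, 0 < b τ) (hdneg : ∀ τ ∈ Ioo s t, d τ < 0)
    (hcu : ContinuousOn u (Ioo s t)) (hda : ∀ τ ∈ Ioo s t, HasDerivAt a (a' τ) τ)
    (hdb : ∀ τ ∈ Ioo s t, HasDerivAt b (b' τ) τ) :
    ∀ τ ∈ Ioo s t, a' τ = -a τ * (u τ + 2 * d τ) := by
  have hgen : ∀ τ ∈ Ioo s t, u τ + 2 * d τ ≠ 0 → a' τ = -a τ * (u τ + 2 * d τ) :=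
    fun τ hτ hv => (hJ τ hτ).deriv_a_of_ne (hupos τ hτ).ne' (hapos τ hτ).ne' (hdneg τ hτ).ne hv
  intro τ hτ
  obtain hv | hv := ne_or_eq (u τ + 2 * d τ) 0
  · exact hgen τ hτ hv
  refine (hJ τ hτ).deriv_a_of_eq (hapos τ hτ) (hbpos τ hτ) hv ?_
  have hF : ∀ σ ∈ Ioo s t, HasDerivAt (fun x => a x ^ 2 - b x ^ 2)
      (2 * a σ * a' σ - 2 * b σ * b' σ) σ := fun σ hσ =>
    (((hda σ hσ).pow 2).sub ((hdb σ hσ).pow 2)).congr_deriv (by norm_num)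
  have hμ : ContinuousOn (fun σ => -2 * (a σ ^ 2 + b σ ^ 2) / u σ) (Ioo s t) := by
    have hca : ContinuousOn a (Ioo s t) := fun x hx => (hda x hx).continuousAt.continuousWithinAt
    have hcb : ContinuousOn b (Ioo s t) := fun x hx => (hdb x hx).continuousAt.continuousWithinAt
    exact (continuousOn_const.mul ((hca.pow 2).add (hcb.pow 2))).div hcu
      fun x hx => (hupos x hx).ne'
  have hode : ∀ σ ∈ Ioo s t, a σ ^ 2 - b σ ^ 2 ≠ 0 → 2 * a σ * a' σ - 2 * b σ * b' σ =
      -2 * (a σ ^ 2 + b σ ^ 2) / u σ * (a σ ^ 2 - b σ ^ 2) := by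
    intro σ hσ hFσ
    have hsq := (hJ σ hσ).sq_sub_sq
    have ha' := hgen σ hσ (by rintro hvσ; simp [hsq, hvσ] at hFσ)
    have hb' := (hJ σ hσ).deriv_b (hapos σ hσ).ne' ha'
    rw [hsq, ha', hb']
    field_simp [(hupos σ hσ).ne']
    ring
  have := deriv_eq_zero_of_eq_mul_of_ne_zero hF hμ hode hτ
    (by linear_combination (hJ τ hτ).sq_sub_sq + u τ * hv)
  linear_combination this / 2

/-- in Fateev's reduction, the equations `u' = −(u+2d)²`, `(uc)' = 0`,
`(ab)' = 0` together with the integrability conditions imply the remaining component ODEs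
of the Ricci flow system. Here `v = u + 2d`. -/
theorem stmt_10 (s t : ℝ) (u a b c d a' b' c' d' : ℝ → ℝ)
    (hupos : ∀ τ ∈ Set.Ioo s t, 0 < u τ)
    (hapos : ∀ τ ∈ Set.Ioo s t, 0 < a τ)
    (hbpos : ∀ τ ∈ Set.Ioo s t, 0 < b τ)
    (hdneg : ∀ τ ∈ Set.Ioo s t, d τ < 0)
    (hic1 : ∀ τ ∈ Set.Ioo s t, (u τ + d τ) ^ 2 = (a τ) ^ 2 + (c τ) ^ 2)
    (hic2 : ∀ τ ∈ Set.Ioo s t, (d τ) ^ 2 = (b τ) ^ 2 + (c τ) ^ 2)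
    (hu : ∀ τ ∈ Set.Ioo s t, HasDerivAt u (-(u τ + 2 * d τ) ^ 2) τ)
    (hda : ∀ τ ∈ Set.Ioo s t, HasDerivAt a (a' τ) τ)
    (hdb : ∀ τ ∈ Set.Ioo s t, HasDerivAt b (b' τ) τ)
    (hdc : ∀ τ ∈ Set.Ioo s t, HasDerivAt c (c' τ) τ)
    (hdd : ∀ τ ∈ Set.Ioo s t, HasDerivAt d (d' τ) τ)
    (huc : ∀ τ ∈ Set.Ioo s t, HasDerivAt (fun σ => u σ * c σ) 0 τ)
    (hab : ∀ τ ∈ Set.Ioo s t, HasDerivAt (fun σ => a σ * b σ) 0 τ) :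
    ∀ τ ∈ Set.Ioo s t,
      (a τ) ^ 2 - (b τ) ^ 2 = u τ * (u τ + 2 * d τ) ∧
      u τ * a' τ = -(a τ) * ((a τ) ^ 2 - (b τ) ^ 2) ∧
      u τ * b' τ = b τ * ((a τ) ^ 2 - (b τ) ^ 2) ∧
      u τ * (-(u τ + 2 * d τ) ^ 2 + 2 * d' τ) =
        (u τ + 2 * d τ) ^ 3 - 2 * (u τ + 2 * d τ) * ((a τ) ^ 2 + (b τ) ^ 2) ∧
      u τ * d' τ = (u τ + 2 * d τ) ^ 2 * d τ - 2 * (u τ + 2 * d τ) * (b τ) ^ 2 := by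
  have hJ : ∀ τ ∈ Ioo s t, FateevJet (u τ) (a τ) (b τ) (c τ) (d τ) (a' τ) (b' τ) (c' τ) (d' τ) :=
    fun τ hτ => FateevJet.of_hasDerivAt hic1 hic2 hu hda hdb hdc hdd huc hab hτ
  have ha' := fateev_deriv_a_eq hJ hupos hapos hbpos hdneg
    (fun τ hτ => (hu τ hτ).continuousAt.continuousWithinAt) hda hdb
  intro τ hτ
  have hsq := (hJ τ hτ).sq_sub_sq
  have hb' := (hJ τ hτ).deriv_b (hapos τ hτ).ne' (ha' τ hτ)
  have hd' := (hJ τ hτ).deriv_d (hdneg τ hτ).ne hb'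
  refine ⟨hsq, ?_, ?_, ?_, hd'⟩
  · rw [ha' τ hτ, hsq]; ring
  · rw [hb', hsq]; ring
  · linear_combination 2 * hd' + 2 * (u τ + 2 * d τ) * hsq
end

section
/- Let ν > 0 and k real with k² < 1, set λ = ν/(2(1−k²)), and for ξ > 0 define S(ξ) = √(cosh²ξ − k² sinh²ξ), a(ξ) = λ(S(ξ)+1)/sinh ξ, b(ξ) = λ(S(ξ)−1)/sinh ξ, c(ξ) = −λ k tanh ξ, d(ξ) = λ(√(1 − k² tanh²ξ) − cosh ξ)/sinh ξ, u(ξ) = 2λ coth ξ, and w(ξ, θ) = a(ξ)² − b(ξ)² cos²(2θ). Then for every θ ∈ (0, π/2), as ξ → ∞: u/w → 1/(ν sin²θ cos²θ), cos²θ·(u + 2d cos²θ)/w → 1/ν, sin²θ·(u + 2d sin²θ)/w → 1/ν, and 2c sin²θ cos²θ/w → −k/ν. -/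
/-!
As `ξ → ∞` we have `coth ξ → 1`, `tanh ξ → 1` and `1 / sinh ξ → 0`, so with `q = √(1 - k²)` the
coefficients converge: `a, b → λ q`, `u → 2λ`, `c → -λ k` and `d → -λ`. Hence
`w → λ² q² (1 - cos² 2θ) = 4 λ² (1 - k²) sin² θ cos² θ = 2 λ ν sin² θ cos² θ`, which is nonzero
for `θ ∈ (0, π/2)`, and each of the four quotients converges to the quotient of the limits.
-/

open Filter Real Topology

namespace Real

lemma tendsto_sinh_atTop : Tendsto sinh atTop atTop :=
  tendsto_atTop_mono' _ (eventually_ge_atTop 0 |>.mono fun _ hx => self_le_sinh_iff.mpr hx)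
    tendsto_id

lemma tendsto_inv_sinh_atTop : Tendsto (fun x => (sinh x)⁻¹) atTop (𝓝 0) :=
  tendsto_sinh_atTop.inv_tendsto_atTop

lemma tendsto_cosh_div_sinh_atTop : Tendsto (fun x => cosh x / sinh x) atTop (𝓝 1) := by
  have hlim : Tendsto (fun x => 1 + exp (-x) * (sinh x)⁻¹) atTop (𝓝 (1 + 0 * 0)) :=
    tendsto_const_nhds.add ((tendsto_exp_neg_atTop_nhds_zero).mul tendsto_inv_sinh_atTop)
  rw [mul_zero, add_zero] at hlim
  refine hlim.congr' ?_
  filter_upwards [eventually_gt_atTop 0] with x hx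
  have hsinh : sinh x ≠ 0 := (sinh_pos_iff.mpr hx).ne'
  rw [← cosh_sub_sinh]
  field_simp
  ring

lemma tendsto_tanh_atTop : Tendsto tanh atTop (𝓝 1) := by
  simpa only [inv_div, inv_one, ← tanh_eq_sinh_div_cosh] using
    tendsto_cosh_div_sinh_atTop.inv₀ one_ne_zero

lemma tendsto_sqrt_cosh_sq_sub_mul_sinh_sq_div_sinh_atTop (k : ℝ) :
    Tendsto (fun x => √(cosh x ^ 2 - k ^ 2 * sinh x ^ 2) / sinh x) atTop (𝓝 √(1 - k ^ 2)) := by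
  have hlim : Tendsto (fun x => √((cosh x / sinh x) ^ 2 - k ^ 2)) atTop (𝓝 √(1 ^ 2 - k ^ 2)) :=
    ((tendsto_cosh_div_sinh_atTop.pow 2).sub tendsto_const_nhds).sqrt
  rw [one_pow] at hlim
  refine hlim.congr' ?_
  filter_upwards [eventually_gt_atTop 0] with x hx
  have hsinh : 0 < sinh x := sinh_pos_iff.mpr hx
  have hquot : (cosh x / sinh x) ^ 2 - k ^ 2 = (cosh x ^ 2 - k ^ 2 * sinh x ^ 2) / sinh x ^ 2 := by
    field_simp
  rw [hquot, sqrt_div' _ (sq_nonneg _), sqrt_sq hsinh.le]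

lemma tendsto_mul_sqrt_cosh_sq_sub_mul_sinh_sq_add_div_sinh_atTop (lam k e : ℝ) :
    Tendsto (fun x => lam * (√(cosh x ^ 2 - k ^ 2 * sinh x ^ 2) + e) / sinh x) atTop
      (𝓝 (lam * √(1 - k ^ 2))) := by
  have hlim := ((tendsto_sqrt_cosh_sq_sub_mul_sinh_sq_div_sinh_atTop k).add
    (tendsto_inv_sinh_atTop.const_mul e)).const_mul lam
  rw [mul_zero, add_zero] at hlim
  exact hlim.congr fun x => by ring

lemma tendsto_sqrt_one_sub_mul_tanh_sq_sub_cosh_div_sinh_atTop (k : ℝ) :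
    Tendsto (fun x => (√(1 - k ^ 2 * tanh x ^ 2) - cosh x) / sinh x) atTop (𝓝 (-1)) := by
  have hsqrt : Tendsto (fun x => √(1 - k ^ 2 * tanh x ^ 2)) atTop (𝓝 √(1 - k ^ 2 * 1 ^ 2)) :=
    (tendsto_const_nhds.sub ((tendsto_tanh_atTop.pow 2).const_mul _)).sqrt
  have hlim := (hsqrt.mul tendsto_inv_sinh_atTop).sub tendsto_cosh_div_sinh_atTop
  rw [mul_zero, zero_sub] at hlim
  exact hlim.congr fun x => by ring

lemma one_sub_cos_two_mul_sq (θ : ℝ) : 1 - cos (2 * θ) ^ 2 = 4 * sin θ ^ 2 * cos θ ^ 2 := by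
  rw [← sin_sq, sin_two_mul]
  ring

end Real

lemma Filter.Tendsto.sq_sub_sq_mul_cos_two_mul_sq {α : Type*} {l : Filter α} {f g : α → ℝ} {x : ℝ}
    (hf : Tendsto f l (𝓝 x)) (hg : Tendsto g l (𝓝 x)) (θ : ℝ) :
    Tendsto (fun t => f t ^ 2 - g t ^ 2 * cos (2 * θ) ^ 2) l
      (𝓝 (4 * x ^ 2 * sin θ ^ 2 * cos θ ^ 2)) := by
  convert (hf.pow 2).sub ((hg.pow 2).mul_const (cos (2 * θ) ^ 2)) using 2
  linear_combination (-x ^ 2) * one_sub_cos_two_mul_sq θ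

lemma Filter.Tendsto.div_of_eq {α G₀ : Type*} [GroupWithZero G₀] [TopologicalSpace G₀]
    [ContinuousInv₀ G₀] [ContinuousMul G₀] {l : Filter α} {f g : α → G₀} {x y z : G₀}
    (hf : Tendsto f l (𝓝 x)) (hg : Tendsto g l (𝓝 y)) (hy : y ≠ 0) (hz : x / y = z) :
    Tendsto (fun t => f t / g t) l (𝓝 z) :=
  hz ▸ hf.div hg hy

/-- pointwise limits, as ξ → ∞, of the coefficients of Fateev's ancient
solution, showing convergence to the collapsed metric
`(1/ν)(dθ²/(sin²θcos²θ) + dχ₁² + dχ₂² − 2k dχ₁dχ₂)`. -/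
theorem stmt_12 (ν k θ : ℝ) (hν : 0 < ν) (hk : k ^ 2 < 1)
    (hθ : θ ∈ Set.Ioo 0 (Real.pi / 2))
    (lam : ℝ) (hlam : lam = ν / (2 * (1 - k ^ 2)))
    (S a b c d u w : ℝ → ℝ)
    (hS : ∀ ξ, S ξ = Real.sqrt (Real.cosh ξ ^ 2 - k ^ 2 * Real.sinh ξ ^ 2))
    (ha : ∀ ξ, a ξ = lam * (S ξ + 1) / Real.sinh ξ)
    (hb : ∀ ξ, b ξ = lam * (S ξ - 1) / Real.sinh ξ)
    (hc : ∀ ξ, c ξ = -(lam * k * Real.tanh ξ))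
    (hd : ∀ ξ, d ξ = lam * (Real.sqrt (1 - k ^ 2 * Real.tanh ξ ^ 2) - Real.cosh ξ) /
      Real.sinh ξ)
    (hu : ∀ ξ, u ξ = 2 * lam * (Real.cosh ξ / Real.sinh ξ))
    (hw : ∀ ξ, w ξ = (a ξ) ^ 2 - (b ξ) ^ 2 * Real.cos (2 * θ) ^ 2) :
    Filter.Tendsto (fun ξ => u ξ / w ξ) Filter.atTop
      (nhds (1 / (ν * Real.sin θ ^ 2 * Real.cos θ ^ 2))) ∧
    Filter.Tendsto (fun ξ => Real.cos θ ^ 2 * (u ξ + 2 * d ξ * Real.cos θ ^ 2) / w ξ)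
      Filter.atTop (nhds (1 / ν)) ∧
    Filter.Tendsto (fun ξ => Real.sin θ ^ 2 * (u ξ + 2 * d ξ * Real.sin θ ^ 2) / w ξ)
      Filter.atTop (nhds (1 / ν)) ∧
    Filter.Tendsto (fun ξ => 2 * c ξ * Real.sin θ ^ 2 * Real.cos θ ^ 2 / w ξ)
      Filter.atTop (nhds (-(k / ν))) := by
  obtain ⟨hθ0, hθ1⟩ := hθ
  have hsin : sin θ ≠ 0 := (sin_pos_of_pos_of_lt_pi hθ0 (by linarith [pi_pos])).ne'
  have hcos : cos θ ≠ 0 := (cos_pos_of_mem_Ioo ⟨by linarith [pi_pos], hθ1⟩).ne'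
  have hk' : 0 < 1 - k ^ 2 := sub_pos.mpr hk
  have hlam0 : lam ≠ 0 := by rw [hlam]; positivity
  have hν' : ν = 2 * lam * (1 - k ^ 2) := by rw [hlam]; field_simp
  have hA : Tendsto a atTop (𝓝 (lam * √(1 - k ^ 2))) :=
    (tendsto_mul_sqrt_cosh_sq_sub_mul_sinh_sq_add_div_sinh_atTop lam k 1).congr
      fun ξ => by rw [ha, hS]
  have hB : Tendsto b atTop (𝓝 (lam * √(1 - k ^ 2))) :=
    (tendsto_mul_sqrt_cosh_sq_sub_mul_sinh_sq_add_div_sinh_atTop lam k (-1)).congr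
      fun ξ => by rw [hb, hS]; ring
  have hW := (hA.sq_sub_sq_mul_cos_two_mul_sq hB θ).congr fun ξ => (hw ξ).symm
  rw [mul_pow, sq_sqrt hk'.le] at hW
  have hW0 : 4 * (lam ^ 2 * (1 - k ^ 2)) * sin θ ^ 2 * cos θ ^ 2 ≠ 0 := by positivity
  have hU : Tendsto u atTop (𝓝 (2 * lam)) := by
    simpa only [mul_one, ← hu] using tendsto_cosh_div_sinh_atTop.const_mul (2 * lam)
  have hD : Tendsto d atTop (𝓝 (-lam)) := by
    have hlim := (tendsto_sqrt_one_sub_mul_tanh_sq_sub_cosh_div_sinh_atTop k).const_mul lam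
    rw [mul_neg_one] at hlim
    exact hlim.congr fun ξ => by rw [hd, mul_div_assoc]
  have hC : Tendsto c atTop (𝓝 (-(lam * k))) := by
    simpa only [mul_one, ← hc] using (tendsto_tanh_atTop.const_mul (lam * k)).neg
  have hDiag (s : ℝ) : Tendsto (fun ξ => s * (u ξ + 2 * d ξ * s)) atTop
      (𝓝 (2 * lam * s * (1 - s))) := by
    convert (hU.add ((hD.const_mul 2).mul_const s)).const_mul s using 2
    ring
  refine ⟨hU.div_of_eq hW hW0 ?_, (hDiag _).div_of_eq hW hW0 ?_, (hDiag _).div_of_eq hW hW0 ?_,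
    ((hC.const_mul 2).mul_const _ |>.mul_const _).div_of_eq hW hW0 ?_⟩
  · rw [hν']; field_simp; ring
  · rw [← sin_sq, hν']; field_simp; ring
  · rw [← cos_sq', hν']; field_simp; ring
  · rw [hν']; field_simp; ring
end

section
/- Let λ̂, λ̌, λ be real numbers with λ̌ ≠ λ̂ and λ̌ ≠ 2λ̂, set Λ₁ = λ̂/(λ̌ − λ̂) and Λ₂ = (λ̌² − 2λ̂λ̌ + λ̂λ)/(λ̌ − λ̂). Suppose a, b : I → ℝ are differentiable and positive on an open interval I, solve the ODE system a' = 2λ̂ + 2(λ − λ̂) a²/b², b' = 2λ̌ − 2(λ̌ − λ) a/b, and a(τ)/b(τ) ∉ {1, Λ₁} for all τ ∈ I. Then the function τ ↦ |1 − a/b|^{λ/(λ̌ − 2λ̂)} · |a/b − Λ₁|^{−Λ₂/(λ̌ − 2λ̂)} · b^{−1} is constant on I. -/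
/-!
Along a solution the ratio `y = a / b` satisfies `y' = 2 (λ̌ - λ̂) (y - 1) (y - Λ₁) / b`.
The logarithm of the displayed quantity, `p log |1 - y| + q log |y - Λ₁| - log b`, therefore has
derivative `(2 (λ̌ - λ̂) (p (y - Λ₁) + q (y - 1)) - b') / b`; the exponents `p`, `q` of the
statement are exactly those making this affine function of `y` vanish identically, so the
logarithm is constant.
-/

open Real Set

-- `Real.log u = Real.log |u|`, so the logarithms need no absolute values.
theorem abs_rpow_mul_abs_rpow_mul_inv_eq_exp {u v b : ℝ} (hu : u ≠ 0) (hv : v ≠ 0) (hb : 0 < b)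
    (p q : ℝ) :
    |u| ^ p * |v| ^ q * b⁻¹ = exp (p * log u + q * log v - log b) := by
  rw [rpow_def_of_pos (abs_pos.2 hu), rpow_def_of_pos (abs_pos.2 hv), log_abs, log_abs,
    exp_sub, exp_add, exp_log hb, div_eq_mul_inv, mul_comm (log u), mul_comm (log v)]

section RicciFlow

variable {lamh lamc lam : ℝ}

theorem hasDerivAt_div_of_ricciFlow {a b : ℝ → ℝ} {τ : ℝ} (hne : lamc ≠ lamh) (hb0 : b τ ≠ 0)
    (ha : HasDerivAt a (2 * lamh + 2 * (lam - lamh) * (a τ) ^ 2 / (b τ) ^ 2) τ)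
    (hb : HasDerivAt b (2 * lamc - 2 * (lamc - lam) * (a τ / b τ)) τ) :
    HasDerivAt (fun τ => a τ / b τ)
      (2 * (lamc - lamh) * (a τ / b τ - 1) * (a τ / b τ - lamh / (lamc - lamh)) / b τ) τ := by
  refine (ha.div hb hb0).congr_deriv ?_
  have : lamc - lamh ≠ 0 := sub_ne_zero.2 hne
  field_simp
  ring

theorem ricciFlow_exponent_balance (hne : lamc ≠ lamh) (hne2 : lamc ≠ 2 * lamh) (y : ℝ) :
    2 * (lamc - lamh) * (lam / (lamc - 2 * lamh) * (y - lamh / (lamc - lamh)) +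
        -((lamc ^ 2 - 2 * lamh * lamc + lamh * lam) / (lamc - lamh) / (lamc - 2 * lamh)) *
          (y - 1)) =
      2 * lamc - 2 * (lamc - lam) * y := by
  have : lamc - lamh ≠ 0 := sub_ne_zero.2 hne
  have : lamc - 2 * lamh ≠ 0 := sub_ne_zero.2 hne2
  field_simp
  ring

theorem hasDerivAt_ricciFlow_logIntegral {Λ₁ Λ₂ : ℝ} (hne : lamc ≠ lamh)
    (hne2 : lamc ≠ 2 * lamh) (hΛ₁ : Λ₁ = lamh / (lamc - lamh))
    (hΛ₂ : Λ₂ = (lamc ^ 2 - 2 * lamh * lamc + lamh * lam) / (lamc - lamh))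
    {a b : ℝ → ℝ} {τ : ℝ} (hb0 : b τ ≠ 0) (hy1 : a τ / b τ ≠ 1) (hyΛ : a τ / b τ ≠ Λ₁)
    (ha : HasDerivAt a (2 * lamh + 2 * (lam - lamh) * (a τ) ^ 2 / (b τ) ^ 2) τ)
    (hb : HasDerivAt b (2 * lamc - 2 * (lamc - lam) * (a τ / b τ)) τ) :
    HasDerivAt (fun τ => lam / (lamc - 2 * lamh) * log (1 - a τ / b τ) +
      -(Λ₂ / (lamc - 2 * lamh)) * log (a τ / b τ - Λ₁) - log (b τ)) 0 τ := by
  set p := lam / (lamc - 2 * lamh)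
  set q := -(Λ₂ / (lamc - 2 * lamh))
  have hy1' : 1 - a τ / b τ ≠ 0 := sub_ne_zero.2 (Ne.symm hy1)
  have hyΛ' : a τ / b τ - Λ₁ ≠ 0 := sub_ne_zero.2 hyΛ
  have hdy := hasDerivAt_div_of_ricciFlow hne hb0 ha hb
  rw [← hΛ₁] at hdy
  have hbal := ricciFlow_exponent_balance (lam := lam) hne hne2 (a τ / b τ)
  rw [← hΛ₁, ← hΛ₂] at hbal
  refine ((((hdy.const_sub 1).log hy1').const_mul p).add
    (((hdy.sub_const Λ₁).log hyΛ').const_mul q) |>.sub (hb.log hb0)).congr_deriv ?_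
  generalize a τ / b τ = y at hy1' hyΛ' hbal ⊢
  calc _ = (2 * (lamc - lamh) * (p * (y - Λ₁) + q * (y - 1)) -
        (2 * lamc - 2 * (lamc - lam) * y)) / b τ := by
        field_simp
        ring
    _ = 0 := by rw [hbal, sub_self, zero_div]

end RicciFlow

theorem stmt_14_general (lamh lamc lam : ℝ) (hne : lamc ≠ lamh) (hne2 : lamc ≠ 2 * lamh)
    (Λ₁ Λ₂ : ℝ) (hΛ₁ : Λ₁ = lamh / (lamc - lamh))
    (hΛ₂ : Λ₂ = (lamc ^ 2 - 2 * lamh * lamc + lamh * lam) / (lamc - lamh))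
    (s t : ℝ) (a b : ℝ → ℝ)
    (hbpos : ∀ τ ∈ Set.Ioo s t, 0 < b τ)
    (ha : ∀ τ ∈ Set.Ioo s t,
      HasDerivAt a (2 * lamh + 2 * (lam - lamh) * (a τ) ^ 2 / (b τ) ^ 2) τ)
    (hb : ∀ τ ∈ Set.Ioo s t,
      HasDerivAt b (2 * lamc - 2 * (lamc - lam) * (a τ / b τ)) τ)
    (hy : ∀ τ ∈ Set.Ioo s t, a τ / b τ ≠ 1 ∧ a τ / b τ ≠ Λ₁) :
    ∃ C : ℝ, ∀ τ ∈ Set.Ioo s t,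
      |1 - a τ / b τ| ^ (lam / (lamc - 2 * lamh)) *
        |a τ / b τ - Λ₁| ^ (-(Λ₂ / (lamc - 2 * lamh))) * (b τ)⁻¹ = C := by
  have hL (τ) (hτ : τ ∈ Ioo s t) :=
    hasDerivAt_ricciFlow_logIntegral hne hne2 hΛ₁ hΛ₂ (hbpos τ hτ).ne' (hy τ hτ).1 (hy τ hτ).2
      (ha τ hτ) (hb τ hτ)
  obtain ⟨C, hC⟩ := isOpen_Ioo.exists_is_const_of_deriv_eq_zero isPreconnected_Ioo
    (fun τ hτ => (hL τ hτ).differentiableAt.differentiableWithinAt) (fun τ hτ => (hL τ hτ).deriv)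
  refine ⟨exp C, fun τ hτ => ?_⟩
  rw [abs_rpow_mul_abs_rpow_mul_inv_eq_exp (sub_ne_zero.2 (Ne.symm (hy τ hτ).1))
    (sub_ne_zero.2 (hy τ hτ).2) (hbpos τ hτ), ← hC τ hτ]

/-- the first integral
`|1 − a/b|^{λ/(λ̌−2λ̂)} · |a/b − Λ₁|^{−Λ₂/(λ̌−2λ̂)} · b⁻¹ = const` of the
Riemannian-submersion Ricci flow ODE system. -/
theorem stmt_14 (lamh lamc lam : ℝ) (hne : lamc ≠ lamh) (hne2 : lamc ≠ 2 * lamh)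
    (Λ₁ Λ₂ : ℝ) (hΛ₁ : Λ₁ = lamh / (lamc - lamh))
    (hΛ₂ : Λ₂ = (lamc ^ 2 - 2 * lamh * lamc + lamh * lam) / (lamc - lamh))
    (s t : ℝ) (a b : ℝ → ℝ)
    (hapos : ∀ τ ∈ Set.Ioo s t, 0 < a τ)
    (hbpos : ∀ τ ∈ Set.Ioo s t, 0 < b τ)
    (ha : ∀ τ ∈ Set.Ioo s t,
      HasDerivAt a (2 * lamh + 2 * (lam - lamh) * (a τ) ^ 2 / (b τ) ^ 2) τ)
    (hb : ∀ τ ∈ Set.Ioo s t,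
      HasDerivAt b (2 * lamc - 2 * (lamc - lam) * (a τ / b τ)) τ)
    (hy : ∀ τ ∈ Set.Ioo s t, a τ / b τ ≠ 1 ∧ a τ / b τ ≠ Λ₁) :
    ∃ C : ℝ, ∀ τ ∈ Set.Ioo s t,
      |1 - a τ / b τ| ^ (lam / (lamc - 2 * lamh)) *
        |a τ / b τ - Λ₁| ^ (-(Λ₂ / (lamc - 2 * lamh))) * (b τ)⁻¹ = C :=
  stmt_14_general lamh lamc lam hne hne2 Λ₁ Λ₂ hΛ₁ hΛ₂ s t a b hbpos ha hb hy
end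

section
/- Let λ̌ > λ > λ̂ > 0 be real numbers with Λ₁ := λ̂/(λ̌ − λ̂) < 1. Then there exist a real number τ₀ and differentiable positive functions a, b : (τ₀, ∞) → ℝ solving the ODE system a' = 2λ̂ + 2(λ − λ̂) a²/b², b' = 2λ̌ − 2(λ̌ − λ) a/b, such that: Λ₁ < a(τ)/b(τ) < 1 for all τ > τ₀; a/b is strictly decreasing; lim_{τ→τ₀⁺} a(τ) = lim_{τ→τ₀⁺} b(τ) = 0 and lim_{τ→τ₀⁺} a(τ)/b(τ) = 1; lim_{τ→∞} a(τ)/b(τ) = Λ₁; and there exist constants C₂ ≥ C₁ > 0 with C₁τ ≤ b(τ) ≤ C₂τ for all large τ. -/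
/-!
Along a solution, the ratio `x = a / b` obeys `x' = 2 (λ̌ - λ̂) (x - 1) (x - Λ₁) / b`, whose
right-hand side vanishes exactly at the two Einstein ratios `1` and `Λ₁`. In the time `s` with
`dτ = b ds` this is the logistic equation, solved by an explicit logistic curve, and `b` becomes the
exponential of a primitive of `2λ̌ - 2 (λ̌ - λ) x`, which grows like `e^{2λs}`. Hence
`τ(s) = ∫_{-∞}^s b` is finite and increases from `0` to `∞`; inverting it gives a solution on
`(0, ∞)` which emanates from `a = b = 0` with `a / b → 1`. Since `2λ < b' < 2λ̌` and `b → 0` as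
`τ → 0`, the base scale is squeezed between `2λτ` and `2λ̌τ`.
-/

open Real Set Filter Topology MeasureTheory

section Logistic

variable {Λ c : ℝ}

variable (Λ c) in
noncomputable def logistic (s : ℝ) : ℝ := Λ + (1 - Λ) / (1 + exp (c * (1 - Λ) * s))

variable (Λ c) in
theorem hasDerivAt_logistic (s : ℝ) :
    HasDerivAt (logistic Λ c) (c * (logistic Λ c s - 1) * (logistic Λ c s - Λ)) s := by
  have hE : HasDerivAt (fun s => 1 + exp (c * (1 - Λ) * s))
      (exp (c * (1 - Λ) * s) * (c * (1 - Λ))) s :=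
    ((hasDerivAt_id s).const_mul (c * (1 - Λ))).exp.const_add 1 |>.congr_deriv (by simp)
  have hpos : 0 < 1 + exp (c * (1 - Λ) * s) := by positivity
  refine ((hE.inv hpos.ne').const_mul (1 - Λ) |>.const_add Λ).congr_deriv ?_
  unfold logistic
  field_simp
  ring

theorem logistic_mem_Ioo (hΛ : Λ < 1) (s : ℝ) : logistic Λ c s ∈ Ioo Λ 1 := by
  have hpos : 0 < exp (c * (1 - Λ) * s) := exp_pos _
  constructor
  · unfold logistic
    have : 0 < (1 - Λ) / (1 + exp (c * (1 - Λ) * s)) := div_pos (by linarith) (by linarith)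
    linarith
  · unfold logistic
    have : (1 - Λ) / (1 + exp (c * (1 - Λ) * s)) < 1 - Λ :=
      div_lt_self (by linarith) (by linarith)
    linarith

theorem strictAnti_logistic (hΛ : Λ < 1) (hc : 0 < c) : StrictAnti (logistic Λ c) := by
  intro s t hst
  have hκ : 0 < c * (1 - Λ) := mul_pos hc (by linarith)
  have hE : exp (c * (1 - Λ) * s) < exp (c * (1 - Λ) * t) :=
    exp_lt_exp.2 (mul_lt_mul_of_pos_left hst hκ)
  unfold logistic
  gcongr

theorem tendsto_logistic_atBot (hΛ : Λ < 1) (hc : 0 < c) :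
    Tendsto (logistic Λ c) atBot (𝓝 1) := by
  have hκ : 0 < c * (1 - Λ) := mul_pos hc (by linarith)
  have hE : Tendsto (fun s => exp (c * (1 - Λ) * s)) atBot (𝓝 0) :=
    tendsto_exp_atBot.comp (tendsto_id.const_mul_atBot hκ)
  convert ((hE.const_add 1).inv₀ (by norm_num)).const_mul (1 - Λ) |>.const_add Λ using 1
  · ext s; simp [logistic, div_eq_mul_inv]
  · simp

theorem tendsto_logistic_atTop (hΛ : Λ < 1) (hc : 0 < c) :
    Tendsto (logistic Λ c) atTop (𝓝 Λ) := by
  have hκ : 0 < c * (1 - Λ) := mul_pos hc (by linarith)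
  have hE : Tendsto (fun s => 1 + exp (c * (1 - Λ) * s)) atTop atTop :=
    tendsto_atTop_add_const_left _ 1 (tendsto_exp_atTop.comp (tendsto_id.const_mul_atTop hκ))
  convert (hE.inv_tendsto_atTop.const_mul (1 - Λ)).const_add Λ using 1
  · ext s; simp [logistic, div_eq_mul_inv]
  · simp

end Logistic

section LogisticGrowth

variable {Λ c α β : ℝ}

variable (Λ c α β) in
/-- `exp ∫ (α - β * logistic Λ c)`, using `1 / (1 + e^{κs}) = 1 - (log (1 + e^{κs}))' / κ`
with `κ = c (1 - Λ)`. -/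
noncomputable def logisticGrowth (s : ℝ) : ℝ :=
  exp ((α - β) * s + β / c * log (1 + exp (c * (1 - Λ) * s)))

theorem logisticGrowth_pos (s : ℝ) : 0 < logisticGrowth Λ c α β s := exp_pos _

variable (Λ α β) in
theorem hasDerivAt_logisticGrowth (hc : c ≠ 0) (s : ℝ) :
    HasDerivAt (logisticGrowth Λ c α β)
      (logisticGrowth Λ c α β s * (α - β * logistic Λ c s)) s := by
  have hE : HasDerivAt (fun s => 1 + exp (c * (1 - Λ) * s))
      (exp (c * (1 - Λ) * s) * (c * (1 - Λ))) s :=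
    ((hasDerivAt_id s).const_mul (c * (1 - Λ))).exp.const_add 1 |>.congr_deriv (by simp)
  have hpos : 0 < 1 + exp (c * (1 - Λ) * s) := by positivity
  have hexponent : HasDerivAt (fun s => (α - β) * s + β / c * log (1 + exp (c * (1 - Λ) * s)))
      ((α - β) * 1 + β / c * (exp (c * (1 - Λ) * s) * (c * (1 - Λ)) / (1 + exp (c * (1 - Λ) * s))))
      s :=
    ((hasDerivAt_id' s).const_mul (α - β)).add ((hE.log hpos.ne').const_mul (β / c))
  refine hexponent.exp.congr_deriv ?_
  unfold logisticGrowth logistic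
  field_simp
  ring

theorem continuous_logisticGrowth (hc : c ≠ 0) : Continuous (logisticGrowth Λ c α β) :=
  continuous_iff_continuousAt.2 fun s => (hasDerivAt_logisticGrowth Λ α β hc s).continuousAt

theorem monotone_logisticGrowth (hΛ : Λ < 1) (hc : 0 < c) (hβ : 0 ≤ β) (hαβ : 0 ≤ α - β) :
    Monotone (logisticGrowth Λ c α β) := fun s t hst => by
  have hκ : 0 ≤ c * (1 - Λ) := mul_nonneg hc.le (by linarith)
  have hβc : 0 ≤ β / c := div_nonneg hβ hc.le
  unfold logisticGrowth
  gcongr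

theorem integrableOn_logisticGrowth_Iic (hΛ : Λ < 1) (hc : 0 < c) (hβ : 0 ≤ β) (hαβ : 0 < α - β)
    (s : ℝ) : IntegrableOn (logisticGrowth Λ c α β) (Iic s) := by
  have hκ : 0 ≤ c * (1 - Λ) := mul_nonneg hc.le (by linarith)
  have hβc : 0 ≤ β / c := div_nonneg hβ hc.le
  refine ((integrableOn_exp_mul_Iic hαβ s).const_mul
    (exp (β / c * log (1 + exp (c * (1 - Λ) * s))))).mono'
    (continuous_logisticGrowth hc.ne').aestronglyMeasurable ?_
  refine (ae_restrict_iff' measurableSet_Iic).2 (Eventually.of_forall fun u (hu : u ≤ s) => ?_)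
  rw [norm_of_nonneg (logisticGrowth_pos u).le, logisticGrowth, ← exp_add, add_comm]
  gcongr

theorem tendsto_logisticGrowth_atBot (hΛ : Λ < 1) (hc : 0 < c) (hαβ : 0 < α - β) :
    Tendsto (logisticGrowth Λ c α β) atBot (𝓝 0) := by
  have hκ : 0 < c * (1 - Λ) := mul_pos hc (by linarith)
  have hlog : Tendsto (fun s => log (1 + exp (c * (1 - Λ) * s))) atBot (𝓝 0) := by
    simpa using ((tendsto_exp_atBot.comp (tendsto_id.const_mul_atBot hκ)).const_add 1).log
      (by norm_num)
  exact tendsto_exp_atBot.comp ((tendsto_id.const_mul_atBot hαβ).atBot_add (hlog.const_mul _))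

end LogisticGrowth

section TimeChange

variable {f : ℝ → ℝ}

theorem hasDerivAt_integral_Iic (hf : Continuous f) (hint : ∀ s, IntegrableOn f (Iic s))
    (s : ℝ) : HasDerivAt (fun t => ∫ u in Iic t, f u) (f s) s := by
  have hsplit : (fun t => ∫ u in Iic t, f u) = fun t => (∫ u in Iic 0, f u) + ∫ u in 0..t, f u := by
    ext t
    rw [← intervalIntegral.integral_Iic_sub_Iic (hint 0) (hint t)]
    ring
  rw [hsplit]
  exact (intervalIntegral.integral_hasDerivAt_right (hf.intervalIntegrable 0 s)
    (hf.stronglyMeasurableAtFilter _ _) hf.continuousAt).const_add _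

theorem tendsto_integral_Iic_atBot {s₀ : ℝ} (hint : IntegrableOn f (Iic s₀)) :
    Tendsto (fun t => ∫ u in Iic t, f u) atBot (𝓝 0) := by
  have hlim := (intervalIntegral_tendsto_integral_Iic s₀ hint tendsto_id).const_sub
    (∫ u in Iic s₀, f u)
  rw [sub_self] at hlim
  refine hlim.congr' ?_
  filter_upwards [eventually_le_atBot s₀] with t ht
  rw [id, ← intervalIntegral.integral_Iic_sub_Iic (hint.mono_set (Iic_subset_Iic.2 ht)) hint]
  ring

theorem tendsto_integral_Iic_atTop (hmono : Monotone f) (hpos : 0 < f 0)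
    (hint : ∀ s, IntegrableOn f (Iic s)) :
    Tendsto (fun t => ∫ u in Iic t, f u) atTop atTop := by
  refine tendsto_atTop_mono' _ ?_
    ((tendsto_id.const_mul_atTop hpos).atTop_add (tendsto_const_nhds (x := ∫ u in Iic 0, f u)))
  filter_upwards [eventually_ge_atTop 0] with t ht
  have h := intervalIntegral.integral_mono_on ht intervalIntegrable_const
    (hmono.intervalIntegrable (μ := volume)) fun u hu => hmono hu.1
  rw [intervalIntegral.integral_const, ← intervalIntegral.integral_Iic_sub_Iic (hint 0) (hint t)]
    at h
  simp only [sub_zero, smul_eq_mul, id] at h ⊢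
  linarith

end TimeChange

section Inverse

variable {T f : ℝ → ℝ} {τ₀ : ℝ}

theorem exists_inverse_of_hasDerivAt (hT : ∀ s, HasDerivAt T (f s) s) (hf : ∀ s, 0 < f s)
    (hbot : Tendsto T atBot (𝓝 τ₀)) (htop : Tendsto T atTop atTop) :
    ∃ S : ℝ → ℝ, StrictMonoOn S (Ioi τ₀) ∧ (∀ τ ∈ Ioi τ₀, HasDerivAt S (f (S τ))⁻¹ τ) ∧
      Tendsto S (𝓝[>] τ₀) atBot ∧ Tendsto S atTop atTop := by
  have hTmono : StrictMono T := strictMono_of_hasDerivAt_pos hT hf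
  have hTcont : Continuous T := continuous_iff_continuousAt.2 fun s => (hT s).continuousAt
  have hTgt (s : ℝ) : τ₀ < T s :=
    (hTmono.monotone.le_of_tendsto hbot (s - 1)).trans_lt (hTmono (by linarith))
  have hTS (τ : ℝ) (hτ : τ₀ < τ) : T (Function.invFun T τ) = τ :=
    Function.invFun_eq <| mem_range_of_exists_le_of_exists_ge hTcont
      ((hbot.eventually (gt_mem_nhds hτ)).exists.imp fun _ => le_of_lt)
      (htop.eventually_ge_atTop τ).exists
  set S := Function.invFun T
  have hST : ∀ s, S (T s) = s := Function.leftInverse_invFun hTmono.injective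
  have hSlt {τ : ℝ} (hτ : τ₀ < τ) (s : ℝ) : S τ < s ↔ τ < T s := by
    rw [← hTmono.lt_iff_lt, hTS τ hτ]
  have hgtS {τ : ℝ} (hτ : τ₀ < τ) (s : ℝ) : s < S τ ↔ T s < τ := by
    rw [← hTmono.lt_iff_lt, hTS τ hτ]
  have hSmono : StrictMonoOn S (Ioi τ₀) := fun τ hτ σ hσ hτσ => by
    rw [hSlt hτ, hTS σ hσ]; exact hτσ
  have hSimage : S '' Ioi τ₀ = univ :=
    eq_univ_of_forall fun s => ⟨T s, hTgt s, hST s⟩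
  refine ⟨S, hSmono, fun τ hτ => ?_, ?_, ?_⟩
  · have hScont : ContinuousAt S τ := continuousAt_of_monotoneOn_of_image_mem_nhds
      hSmono.monotoneOn (Ioi_mem_nhds hτ) (by rw [hSimage]; exact univ_mem)
    exact .of_local_left_inverse hScont (hT (S τ)) (hf _).ne'
      ((eventually_gt_nhds hτ).mono fun σ hσ => hTS σ hσ)
  · refine tendsto_atBot.2 fun s => ?_
    filter_upwards [Ioo_mem_nhdsGT (hTgt s)] with τ hτ
    exact ((hSlt hτ.1 s).2 hτ.2).le
  · refine tendsto_atTop.2 fun s => ?_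
    filter_upwards [eventually_gt_atTop (T s)] with τ hτ
    exact ((hgtS ((hTgt s).trans hτ) s).2 hτ).le

end Inverse

theorem exists_inverse_integral_Iic {f : ℝ → ℝ} (hf : Continuous f) (hpos : ∀ s, 0 < f s)
    (hmono : Monotone f) (hint : ∀ s, IntegrableOn f (Iic s)) :
    ∃ S : ℝ → ℝ, StrictMonoOn S (Ioi 0) ∧ (∀ τ ∈ Ioi 0, HasDerivAt S (f (S τ))⁻¹ τ) ∧
      Tendsto S (𝓝[>] 0) atBot ∧ Tendsto S atTop atTop :=
  exists_inverse_of_hasDerivAt (hasDerivAt_integral_Iic hf hint) hpos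
    (tendsto_integral_Iic_atBot (hint 0)) (tendsto_integral_Iic_atTop hmono (hpos 0) hint)

theorem mem_Icc_mul_of_hasDerivAt {b b' : ℝ → ℝ} {m M : ℝ}
    (hb : ∀ τ ∈ Ioi (0 : ℝ), HasDerivAt b (b' τ) τ) (hb' : ∀ τ ∈ Ioi (0 : ℝ), b' τ ∈ Icc m M)
    (hb0 : Tendsto b (𝓝[>] 0) (𝓝 0)) (τ : ℝ) (hτ : 0 < τ) : b τ ∈ Icc (m * τ) (M * τ) := by
  have hcont : ContinuousOn b (Ioi 0) := fun σ hσ => (hb σ hσ).continuousAt.continuousWithinAt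
  have hdiff : DifferentiableOn ℝ b (interior (Ioi 0)) := by
    rw [interior_Ioi]; exact fun σ hσ => (hb σ hσ).differentiableAt.differentiableWithinAt
  have hderiv : ∀ σ ∈ interior (Ioi (0 : ℝ)), deriv b σ ∈ Icc m M := by
    rw [interior_Ioi]; exact fun σ hσ => (hb σ hσ).deriv ▸ hb' σ hσ
  have hlim (C : ℝ) : Tendsto (fun σ => b σ + C * (τ - σ)) (𝓝[>] 0) (𝓝 (C * τ)) := by
    simpa using hb0.add (((continuous_const.sub continuous_id).const_mul C).tendsto 0
      |>.mono_left nhdsWithin_le_nhds)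
  have hnear : ∀ᶠ σ in 𝓝[>] (0 : ℝ), σ ∈ Ioi 0 ∧ σ ≤ τ := Ioc_mem_nhdsGT hτ
  constructor
  · refine le_of_tendsto (hlim m) (hnear.mono fun σ ⟨hσ, hστ⟩ => ?_)
    have := (convex_Ioi 0).mul_sub_le_image_sub_of_le_deriv hcont hdiff
      (fun x hx => (hderiv x hx).1) σ hσ τ hτ hστ
    linarith
  · refine ge_of_tendsto (hlim M) (hnear.mono fun σ ⟨hσ, hστ⟩ => ?_)
    have := (convex_Ioi 0).image_sub_le_mul_sub_of_deriv_le hcont hdiff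
      (fun x hx => (hderiv x hx).2) σ hσ τ hτ hστ
    linarith

theorem HasDerivAt.comp_of_hasDerivAt_inv {φ φ' f S : ℝ → ℝ} {τ : ℝ}
    (hφ : HasDerivAt φ (f (S τ) * φ' (S τ)) (S τ)) (hS : HasDerivAt S (f (S τ))⁻¹ τ)
    (hf : f (S τ) ≠ 0) : HasDerivAt (fun t => φ (S t)) (φ' (S τ)) τ :=
  (hφ.comp τ hS).congr_deriv (by field_simp)

theorem hasDerivAt_mul_of_ratio_ode {x y : ℝ → ℝ} {s lamh lamc lam Λ : ℝ}
    (hΛ : (lamc - lamh) * Λ = lamh)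
    (hx : HasDerivAt x (2 * (lamc - lamh) * (x s - 1) * (x s - Λ)) s)
    (hy : HasDerivAt y (y s * (2 * lamc - 2 * (lamc - lam) * x s)) s) :
    HasDerivAt (fun s => x s * y s) (y s * (2 * lamh + 2 * (lam - lamh) * x s ^ 2)) s :=
  (hx.mul hy).congr_deriv (by linear_combination 2 * y s * (1 - x s) * hΛ)

/-- ODE content of the type-I ancient solution connecting the two Einstein
metrics on the total space of a Riemannian submersion: existence of a positive solution of
`a' = 2λ̂ + 2(λ−λ̂)a²/b²`, `b' = 2λ̌ − 2(λ̌−λ)a/b` on `(τ₀,∞)` with `Λ₁ < a/b < 1`,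
`a/b` strictly decreasing, `a,b → 0` and `a/b → 1` at `τ₀⁺`, `a/b → Λ₁` at `∞`, and linear
growth bounds on `b`. -/
theorem stmt_15 (lamh lamc lam : ℝ) (h1 : 0 < lamh) (h2 : lamh < lam) (h3 : lam < lamc)
    (Λ₁ : ℝ) (hΛ₁ : Λ₁ = lamh / (lamc - lamh)) (hΛ₁lt : Λ₁ < 1) :
    ∃ (τ₀ : ℝ) (a b : ℝ → ℝ),
      (∀ τ ∈ Set.Ioi τ₀, 0 < a τ ∧ 0 < b τ) ∧
      (∀ τ ∈ Set.Ioi τ₀,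
        HasDerivAt a (2 * lamh + 2 * (lam - lamh) * (a τ) ^ 2 / (b τ) ^ 2) τ) ∧
      (∀ τ ∈ Set.Ioi τ₀,
        HasDerivAt b (2 * lamc - 2 * (lamc - lam) * (a τ / b τ)) τ) ∧
      (∀ τ ∈ Set.Ioi τ₀, Λ₁ < a τ / b τ ∧ a τ / b τ < 1) ∧
      StrictAntiOn (fun τ => a τ / b τ) (Set.Ioi τ₀) ∧
      Filter.Tendsto a (nhdsWithin τ₀ (Set.Ioi τ₀)) (nhds 0) ∧
      Filter.Tendsto b (nhdsWithin τ₀ (Set.Ioi τ₀)) (nhds 0) ∧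
      Filter.Tendsto (fun τ => a τ / b τ) (nhdsWithin τ₀ (Set.Ioi τ₀)) (nhds 1) ∧
      Filter.Tendsto (fun τ => a τ / b τ) Filter.atTop (nhds Λ₁) ∧
      ∃ C₁ C₂ : ℝ, 0 < C₁ ∧ C₁ ≤ C₂ ∧
        ∀ᶠ τ in Filter.atTop, C₁ * τ ≤ b τ ∧ b τ ≤ C₂ * τ := by
  have hc : 0 < 2 * (lamc - lamh) := by linarith
  have hβ : 0 ≤ 2 * (lamc - lam) := by linarith
  have hαβ : 0 < 2 * lamc - 2 * (lamc - lam) := by linarith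
  have hΛ₁pos : 0 < Λ₁ := hΛ₁ ▸ div_pos h1 (by linarith)
  have hΛ₁rel : (lamc - lamh) * Λ₁ = lamh := by rw [hΛ₁, mul_div_cancel₀ _ (by linarith)]
  set x := logistic Λ₁ (2 * (lamc - lamh))
  set y := logisticGrowth Λ₁ (2 * (lamc - lamh)) (2 * lamc) (2 * (lamc - lam))
  obtain ⟨S, hS_mono, hS, hS_bot, hS_top⟩ := exists_inverse_integral_Iic
    (continuous_logisticGrowth hc.ne') logisticGrowth_pos
    (monotone_logisticGrowth hΛ₁lt hc hβ hαβ.le) (integrableOn_logisticGrowth_Iic hΛ₁lt hc hβ hαβ)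
  have hratio : (fun τ => x (S τ) * y (S τ) / y (S τ)) = x ∘ S :=
    funext fun τ => mul_div_cancel_right₀ _ (logisticGrowth_pos _).ne'
  have hy' := hasDerivAt_logisticGrowth Λ₁ (2 * lamc) (2 * (lamc - lam)) hc.ne'
  have hb' (τ : ℝ) (hτ : τ ∈ Ioi 0) :
      HasDerivAt (fun t => y (S t)) (2 * lamc - 2 * (lamc - lam) * x (S τ)) τ :=
    (hy' _).comp_of_hasDerivAt_inv (φ' := fun s => 2 * lamc - 2 * (lamc - lam) * x s) (hS τ hτ)
      (logisticGrowth_pos _).ne'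
  have hb0 : Tendsto (fun t => y (S t)) (𝓝[>] 0) (𝓝 0) :=
    (tendsto_logisticGrowth_atBot hΛ₁lt hc hαβ).comp hS_bot
  have hx_mem := logistic_mem_Ioo (c := 2 * (lamc - lamh)) hΛ₁lt
  refine ⟨0, fun τ => x (S τ) * y (S τ), fun τ => y (S τ), fun τ _ => ?_, fun τ hτ => ?_,
    fun τ hτ => ?_, fun τ _ => ?_, ?_, ?_, hb0, ?_, ?_, 2 * lam, 2 * lamc, by linarith,
    by linarith, ?_⟩
  · exact ⟨mul_pos (hΛ₁pos.trans (hx_mem _).1) (logisticGrowth_pos _), logisticGrowth_pos _⟩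
  · have ha := (hasDerivAt_mul_of_ratio_ode hΛ₁rel (hasDerivAt_logistic _ _ _) (hy' _))
      |>.comp_of_hasDerivAt_inv (φ' := fun s => 2 * lamh + 2 * (lam - lamh) * x s ^ 2)
        (hS τ hτ) (logisticGrowth_pos _).ne'
    rwa [mul_div_assoc, ← div_pow, congr_fun hratio τ]
  · rw [congr_fun hratio τ]
    exact hb' τ hτ
  · rw [congr_fun hratio τ]
    exact hx_mem _
  · rw [hratio]
    exact (strictAnti_logistic hΛ₁lt hc).comp_strictMonoOn hS_mono
  · simpa using ((tendsto_logistic_atBot hΛ₁lt hc).comp hS_bot).mul hb0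
  · rw [hratio]
    exact (tendsto_logistic_atBot hΛ₁lt hc).comp hS_bot
  · rw [hratio]
    exact (tendsto_logistic_atTop hΛ₁lt hc).comp hS_top
  · filter_upwards [eventually_gt_atTop 0] with τ hτ
    refine mem_Icc_mul_of_hasDerivAt hb' (fun σ _ => ?_) hb0 τ hτ
    obtain ⟨hΛx, hx1⟩ := hx_mem (S σ)
    constructor <;> nlinarith
end

section
/- Let m ≥ 1 be an integer and p, q real numbers with q ≠ 0 and p² > 4(2m+3)q². Set D = √(p² − 4(2m+3)q²), r₁ = (p + D)/((2m+3)q²), r₂ = (p − D)/((2m+3)q²), A = ((4m+3)p − 3D)/(2(2m+3)D), and B = ((4m+3)p + 3D)/(2(2m+3)D). Suppose a, b : I → ℝ are differentiable and positive on an open interval I, solve the ODE system a' = 4 + 2m q² a²/b², b' = 2p − 3q² a/b, and a(τ)/b(τ) ∉ {r₁, r₂} for all τ ∈ I. Then the function τ ↦ |a/b − r₁|^{A} · |a/b − r₂|^{−B} · b^{−1} is constant on I. -/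
/-!
Along a solution, `y = a/b` satisfies the Riccati equation
`y' = ((2m+3)q²y² − 2py + 4)/b = (2m+3)q²(y − r₁)(y − r₂)/b`, and `A`, `B` are the coefficients of
the partial fraction decomposition of `(2p − 3q²y)/((2m+3)q²(y − r₁)(y − r₂))`, i.e. of `d(log b)/dy`.
Hence `A log|y − r₁| − B log|y − r₂| − log b` has zero derivative; exponentiating gives the claim.
-/

open Real Set

theorem quadratic_eq_mul_sub_mul_sub {K p D : ℝ} (hK : K ≠ 0) (hD : D ^ 2 = p ^ 2 - 4 * K)
    (y : ℝ) : K * y ^ 2 - 2 * p * y + 4 = K * (y - (p + D) / K) * (y - (p - D) / K) := by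
  field_simp
  linear_combination hD

theorem partialFraction_identity {μ c p D : ℝ} (hK : (2 * μ + 3) * c ≠ 0) (hD : D ≠ 0) (y : ℝ) :
    (2 * μ + 3) * c *
        (((4 * μ + 3) * p - 3 * D) / (2 * (2 * μ + 3) * D) * (y - (p - D) / ((2 * μ + 3) * c)) -
          ((4 * μ + 3) * p + 3 * D) / (2 * (2 * μ + 3) * D) *
            (y - (p + D) / ((2 * μ + 3) * c))) =
      2 * p - 3 * c * y := by
  have hμ : 2 * μ + 3 ≠ 0 := left_ne_zero_of_mul hK
  have hc : c ≠ 0 := right_ne_zero_of_mul hK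
  field_simp
  ring

theorem hasDerivAt_div_of_ode {a b : ℝ → ℝ} {μ c p τ : ℝ} (hb0 : b τ ≠ 0)
    (ha : HasDerivAt a (4 + 2 * μ * c * a τ ^ 2 / b τ ^ 2) τ)
    (hb : HasDerivAt b (2 * p - 3 * c * (a τ / b τ)) τ) :
    HasDerivAt (fun σ => a σ / b σ)
      (((2 * μ + 3) * c * (a τ / b τ) ^ 2 - 2 * p * (a τ / b τ) + 4) / b τ) τ := by
  refine (ha.div hb hb0).congr_deriv ?_
  field_simp
  ring

theorem hasDerivAt_firstIntegral {y b : ℝ → ℝ} {K r₁ r₂ A B τ : ℝ}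
    (hy₁ : y τ ≠ r₁) (hy₂ : y τ ≠ r₂) (hb0 : b τ ≠ 0)
    (hy : HasDerivAt y (K * (y τ - r₁) * (y τ - r₂) / b τ) τ)
    (hb : HasDerivAt b (K * (A * (y τ - r₂) - B * (y τ - r₁))) τ) :
    HasDerivAt (fun σ => A * log (y σ - r₁) - B * log (y σ - r₂) - log (b σ)) 0 τ := by
  have h₁ := sub_ne_zero.2 hy₁
  have h₂ := sub_ne_zero.2 hy₂
  refine ((((hy.sub_const r₁).log h₁).const_mul A).sub
    (((hy.sub_const r₂).log h₂).const_mul B)).sub (hb.log hb0) |>.congr_deriv ?_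
  field_simp
  ring

theorem rpow_abs_mul_rpow_abs_neg_mul_inv {x y b : ℝ} (A B : ℝ) (hx : x ≠ 0) (hy : y ≠ 0)
    (hb : 0 < b) : |x| ^ A * |y| ^ (-B) * b⁻¹ = exp (A * log x - B * log y - log b) := by
  rw [exp_sub, exp_sub, exp_log hb, rpow_def_of_pos (abs_pos.2 hx),
    rpow_def_of_pos (abs_pos.2 hy), log_abs, log_abs, mul_neg, exp_neg, mul_comm A, mul_comm B]
  ring

theorem stmt_16_general (m : ℕ) (p q : ℝ) (hq : q ≠ 0)
    (hpq : p ^ 2 > 4 * (2 * (m : ℝ) + 3) * q ^ 2)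
    (D r₁ r₂ A B : ℝ)
    (hD : D = Real.sqrt (p ^ 2 - 4 * (2 * (m : ℝ) + 3) * q ^ 2))
    (hr₁ : r₁ = (p + D) / ((2 * (m : ℝ) + 3) * q ^ 2))
    (hr₂ : r₂ = (p - D) / ((2 * (m : ℝ) + 3) * q ^ 2))
    (hA : A = ((4 * (m : ℝ) + 3) * p - 3 * D) / (2 * (2 * (m : ℝ) + 3) * D))
    (hB : B = ((4 * (m : ℝ) + 3) * p + 3 * D) / (2 * (2 * (m : ℝ) + 3) * D))
    (s t : ℝ) (a b : ℝ → ℝ)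
    (hbpos : ∀ τ ∈ Set.Ioo s t, 0 < b τ)
    (ha : ∀ τ ∈ Set.Ioo s t,
      HasDerivAt a (4 + 2 * (m : ℝ) * q ^ 2 * (a τ) ^ 2 / (b τ) ^ 2) τ)
    (hb : ∀ τ ∈ Set.Ioo s t, HasDerivAt b (2 * p - 3 * q ^ 2 * (a τ / b τ)) τ)
    (hy : ∀ τ ∈ Set.Ioo s t, a τ / b τ ≠ r₁ ∧ a τ / b τ ≠ r₂) :
    ∃ C : ℝ, ∀ τ ∈ Set.Ioo s t,
      |a τ / b τ - r₁| ^ A * |a τ / b τ - r₂| ^ (-B) * (b τ)⁻¹ = C := by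
  have hK : (2 * (m : ℝ) + 3) * q ^ 2 ≠ 0 := by positivity
  have hdisc : 0 < p ^ 2 - 4 * (2 * (m : ℝ) + 3) * q ^ 2 := by linarith
  have hD0 : D ≠ 0 := hD ▸ (sqrt_pos.2 hdisc).ne'
  have hD2 : D ^ 2 = p ^ 2 - 4 * ((2 * (m : ℝ) + 3) * q ^ 2) := by
    rw [hD, sq_sqrt hdisc.le]; ring
  set F := fun σ => A * log (a σ / b σ - r₁) - B * log (a σ / b σ - r₂) - log (b σ)
  have hF : ∀ τ ∈ Ioo s t, HasDerivAt F 0 τ := fun τ hτ => by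
    have hb0 := (hbpos τ hτ).ne'
    refine hasDerivAt_firstIntegral (K := (2 * (m : ℝ) + 3) * q ^ 2) (hy τ hτ).1 (hy τ hτ).2 hb0 ?_ ?_
    · simpa only [hr₁, hr₂, quadratic_eq_mul_sub_mul_sub hK hD2]
        using hasDerivAt_div_of_ode hb0 (ha τ hτ) (hb τ hτ)
    · simpa only [hA, hB, hr₁, hr₂, partialFraction_identity hK hD0] using hb τ hτ
  obtain ⟨C, hC⟩ := isOpen_Ioo.exists_is_const_of_deriv_eq_zero isPreconnected_Ioo
    (fun τ hτ => (hF τ hτ).differentiableAt.differentiableWithinAt) (fun τ hτ => (hF τ hτ).deriv)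
  refine ⟨exp C, fun τ hτ => ?_⟩
  rw [← hC τ hτ, rpow_abs_mul_rpow_abs_neg_mul_inv A B (sub_ne_zero.2 (hy τ hτ).1)
    (sub_ne_zero.2 (hy τ hτ).2) (hbpos τ hτ)]

/-- the first integral `|a/b − r₁|^A · |a/b − r₂|^{−B} · b⁻¹ = const` of the
SU(2)-bundle Ricci flow ODE system `a' = 4 + 2mq²a²/b²`, `b' = 2p − 3q²a/b`. -/
theorem stmt_16 (m : ℕ) (hm : 1 ≤ m) (p q : ℝ) (hq : q ≠ 0)
    (hpq : p ^ 2 > 4 * (2 * (m : ℝ) + 3) * q ^ 2)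
    (D r₁ r₂ A B : ℝ)
    (hD : D = Real.sqrt (p ^ 2 - 4 * (2 * (m : ℝ) + 3) * q ^ 2))
    (hr₁ : r₁ = (p + D) / ((2 * (m : ℝ) + 3) * q ^ 2))
    (hr₂ : r₂ = (p - D) / ((2 * (m : ℝ) + 3) * q ^ 2))
    (hA : A = ((4 * (m : ℝ) + 3) * p - 3 * D) / (2 * (2 * (m : ℝ) + 3) * D))
    (hB : B = ((4 * (m : ℝ) + 3) * p + 3 * D) / (2 * (2 * (m : ℝ) + 3) * D))
    (s t : ℝ) (a b : ℝ → ℝ)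
    (hapos : ∀ τ ∈ Set.Ioo s t, 0 < a τ)
    (hbpos : ∀ τ ∈ Set.Ioo s t, 0 < b τ)
    (ha : ∀ τ ∈ Set.Ioo s t,
      HasDerivAt a (4 + 2 * (m : ℝ) * q ^ 2 * (a τ) ^ 2 / (b τ) ^ 2) τ)
    (hb : ∀ τ ∈ Set.Ioo s t, HasDerivAt b (2 * p - 3 * q ^ 2 * (a τ / b τ)) τ)
    (hy : ∀ τ ∈ Set.Ioo s t, a τ / b τ ≠ r₁ ∧ a τ / b τ ≠ r₂) :
    ∃ C : ℝ, ∀ τ ∈ Set.Ioo s t,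
      |a τ / b τ - r₁| ^ A * |a τ / b τ - r₂| ^ (-B) * (b τ)⁻¹ = C :=
  stmt_16_general m p q hq hpq D r₁ r₂ A B hD hr₁ hr₂ hA hB s t a b hbpos ha hb hy
end

section
/- Let m ≥ 1 be an integer and p, q real numbers with q ≠ 0, p > 0 and p² > 4(2m+3)q². Set D = √(p² − 4(2m+3)q²) and r₂ = (p − D)/((2m+3)q²). Then there exist a real number τ₀ and differentiable positive functions a, b : (τ₀, ∞) → ℝ solving the ODE system a' = 4 + 2m q² a²/b², b' = 2p − 3q² a/b, such that 0 < a(τ)/b(τ) < r₂ for all τ > τ₀, a/b is strictly increasing, lim_{τ→∞} a(τ)/b(τ) = r₂, lim_{τ→τ₀⁺} a(τ) = 0, and lim_{τ→τ₀⁺} b(τ) exists and is positive. -/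
/-!
Along a solution the ratio `x = a/b` satisfies `x' = Q(x)/b` with
`Q(x) = (2m+3)q²x² - 2px + 4` (`ratioSpeed`), and `b' = 2p - 3q²x` (`bSpeed`). While `Q(x) > 0`
one may therefore use `x` as the parameter: `b = β(x) = exp ∫₀ˣ (2p - 3q²t)/Q(t) dt` (`bOfRatio`)
and `τ = T(x) = ∫₀ˣ β/Q` (`timeOfRatio`). On `[0, r₂)` the quadratic `Q` is positive and vanishes
linearly at its smaller root `r₂`, while `β ≥ 1`, so `T` increases from `0` to `+∞`. Inverting `T`
gives `x(τ)` on `(0, ∞)` with `x → 0` as `τ → 0⁺` and `x → r₂` as `τ → ∞`; then `a = xβ(x)` and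
`b = β(x)`, so `b → β(0) = 1` and `a → 0` at the singular time.
-/

open Set Filter Topology

theorem hasDerivAt_integral_of_continuousOn_Iio {ψ : ℝ → ℝ} {a r s : ℝ}
    (hψ : ContinuousOn ψ (Iio r)) (ha : a < r) (hs : s < r) :
    HasDerivAt (fun x => ∫ t in a..x, ψ t) (ψ s) s :=
  intervalIntegral.integral_hasDerivAt_right
    ((hψ.mono (ordConnected_Iio.uIcc_subset ha hs)).intervalIntegrable)
    (hψ.stronglyMeasurableAtFilter isOpen_Iio s hs) (hψ.continuousAt (Iio_mem_nhds hs))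

theorem bijOn_Ioo_Ioi_of_strictMonoOn {r : ℝ} (hr : 0 < r) {T : ℝ → ℝ}
    (hmono : StrictMonoOn T (Iio r)) (hcont : ContinuousOn T (Iio r)) (hT0 : T 0 = 0)
    (hTr : Tendsto T (𝓝[<] r) atTop) :
    BijOn T (Ioo 0 r) (Ioi 0) := by
  refine ⟨fun s hs => ?_, hmono.injOn.mono Ioo_subset_Iio_self, fun τ hτ => ?_⟩
  · rw [mem_Ioi, ← hT0]
    exact hmono hr hs.2 hs.1
  · obtain ⟨s, hs, hτs⟩ : ∃ s ∈ Ioo 0 r, τ < T s :=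
      ((hTr.eventually_gt_atTop τ).and (Ioo_mem_nhdsLT hr)).exists.imp fun s h => ⟨h.2, h.1⟩
    have hivt := intermediate_value_Ioo hs.1.le (hcont.mono fun x hx => hx.2.trans_lt hs.2)
    obtain ⟨t, ht, rfl⟩ := hivt ⟨by rwa [hT0], hτs⟩
    exact ⟨t, ⟨ht.1, ht.2.trans hs.2⟩, rfl⟩

theorem exists_inverse_of_hasDerivAt_pos {r : ℝ} (hr : 0 < r) {T ψ : ℝ → ℝ}
    (hT : ∀ s < r, HasDerivAt T (ψ s) s) (hψ : ∀ s < r, 0 < ψ s) (hT0 : T 0 = 0)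
    (hTr : Tendsto T (𝓝[<] r) atTop) :
    ∃ S : ℝ → ℝ, MapsTo S (Ioi 0) (Ioo 0 r) ∧ StrictMonoOn S (Ioi 0) ∧
      (∀ τ > 0, HasDerivAt S (ψ (S τ))⁻¹ τ) ∧
      Tendsto S atTop (𝓝 r) ∧ Tendsto S (𝓝[>] 0) (𝓝 0) := by
  have hTcont : ContinuousOn T (Iio r) := fun s hs => (hT s hs).continuousAt.continuousWithinAt
  have hTmono : StrictMonoOn T (Iio r) := by
    refine strictMonoOn_of_hasDerivWithinAt_pos (f' := ψ) (convex_Iio r) hTcont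
      (fun s hs => ?_) ?_ <;> rw [interior_Iio] at *
    · exact (hT s hs).hasDerivWithinAt
    · exact hψ
  have hTbij := bijOn_Ioo_Ioi_of_strictMonoOn hr hTmono hTcont hT0 hTr
  set S := Function.invFunOn T (Ioo 0 r)
  have hinv : InvOn S T (Ioo 0 r) (Ioi 0) := hTbij.invOn_invFunOn
  have hSbij : BijOn S (Ioi 0) (Ioo 0 r) := hTbij.symm hinv.symm
  have hSmono : StrictMonoOn S (Ioi 0) := fun x hx y hy hxy => by
    rwa [← hTmono.lt_iff_lt (hSbij.mapsTo hx).2 (hSbij.mapsTo hy).2, hinv.2 hx, hinv.2 hy]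
  refine ⟨S, hSbij.mapsTo, hSmono, fun τ hτ => ?_, ?_, ?_⟩
  · have hSτ := hSbij.mapsTo hτ
    have hScont : ContinuousAt S τ := hSmono.continuousAt_of_image_mem_nhds (Ioi_mem_nhds hτ)
      (by rw [hSbij.image_eq]; exact Ioo_mem_nhds hSτ.1 hSτ.2)
    exact HasDerivAt.of_local_left_inverse hScont (hT _ hSτ.2) (hψ _ hSτ.2).ne'
      (eventually_of_mem (Ioi_mem_nhds hτ) fun y hy => hinv.2 hy)
  · refine tendsto_order.2 ⟨fun x hx => ?_, fun x hx => ?_⟩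
    · obtain ⟨s, hxs, hsr⟩ := exists_between (max_lt hx hr)
      have hs : s ∈ Ioo 0 r := ⟨(le_max_right x 0).trans_lt hxs, hsr⟩
      have hTs : T s ∈ Ioi 0 := hTbij.mapsTo hs
      filter_upwards [eventually_ge_atTop (T s)] with τ hτ
      calc x < s := (le_max_left x 0).trans_lt hxs
        _ = S (T s) := (hinv.1 hs).symm
        _ ≤ S τ := hSmono.monotoneOn hTs (mem_Ioi.2 (hTs.trans_le hτ)) hτ
    · filter_upwards [eventually_gt_atTop 0] with τ hτ
      exact (hSbij.mapsTo hτ).2.trans hx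
  · have h := hSmono.monotoneOn.tendsto_nhdsGT (by rw [hSbij.image_eq]; exact bddBelow_Ioo)
    rwa [hSbij.image_eq, csInf_Ioo hr] at h

theorem smaller_root_spec {c p D r : ℝ} (hc : 0 < c) (hp : 0 < p) (hdisc : 4 * c < p ^ 2)
    (hD : D = √(p ^ 2 - 4 * c)) (hr : r = (p - D) / c) :
    0 < r ∧ c * r ^ 2 - 2 * p * r + 4 = 0 ∧ ∀ x < r, 0 < c * x ^ 2 - 2 * p * x + 4 := by
  have hD0 : 0 < D := hD ▸ Real.sqrt_pos.2 (by linarith)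
  have hD2 : D ^ 2 = p ^ 2 - 4 * c := hD ▸ Real.sq_sqrt (by linarith)
  have hcr : c * r = p - D := by rw [hr]; field_simp
  have hroot : c * r ^ 2 - 2 * p * r + 4 = 0 := by
    refine (mul_eq_zero.1 (?_ : c * (c * r ^ 2 - 2 * p * r + 4) = 0)).resolve_left hc.ne'
    linear_combination (c * r - p - D) * hcr + hD2
  refine ⟨div_pos ?_ hc |>.trans_eq hr.symm, hroot, fun x hx => ?_⟩
  · nlinarith
  · have : c * x ^ 2 - 2 * p * x + 4 = (r - x) * (c * (r - x) + 2 * D) := by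
      linear_combination hroot + 2 * (x - r) * hcr
    rw [this]
    exact mul_pos (sub_pos.2 hx) (by nlinarith)

namespace SU2BundleRicciFlow

def ratioSpeed (m p q x : ℝ) : ℝ := (2 * m + 3) * q ^ 2 * x ^ 2 - 2 * p * x + 4

def bSpeed (p q x : ℝ) : ℝ := 2 * p - 3 * q ^ 2 * x

noncomputable def bOfRatio (m p q x : ℝ) : ℝ :=
  Real.exp (∫ t in (0 : ℝ)..x, bSpeed p q t / ratioSpeed m p q t)

noncomputable def timeDensity (m p q x : ℝ) : ℝ := bOfRatio m p q x / ratioSpeed m p q x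

noncomputable def timeOfRatio (m p q x : ℝ) : ℝ := ∫ t in (0 : ℝ)..x, timeDensity m p q t

variable {m p q r : ℝ}

theorem bOfRatio_zero : bOfRatio m p q 0 = 1 := by
  simp [bOfRatio]

theorem bOfRatio_pos (x : ℝ) : 0 < bOfRatio m p q x := Real.exp_pos _

theorem bSpeed_pos (hr : 0 < r) (hroot : ratioSpeed m p q r = 0) (hm : 0 ≤ m) {x : ℝ}
    (hx : x ≤ r) : 0 < bSpeed p q x := by
  have hq : 0 ≤ q ^ 2 := sq_nonneg q
  have hr' : bSpeed p q r * r = 2 * m * q ^ 2 * r ^ 2 + 4 := by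
    unfold bSpeed; unfold ratioSpeed at hroot; linear_combination -hroot
  have : 0 < bSpeed p q r := by
    by_contra! h
    nlinarith [mul_nonneg (mul_nonneg hm hq) (sq_nonneg r)]
  unfold bSpeed at this ⊢
  nlinarith [mul_nonneg hq (sub_nonneg.2 hx)]

theorem ratioSpeed_le (hr : 0 < r) (hroot : ratioSpeed m p q r = 0) (hm : 0 ≤ m) {x : ℝ}
    (hx₀ : 0 ≤ x) (hx : x ≤ r) : ratioSpeed m p q x ≤ 4 * (r - x) / r := by
  rw [le_div_iff₀ hr]
  have hc : 0 ≤ (2 * m + 3) * q ^ 2 := by positivity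
  unfold ratioSpeed at hroot ⊢
  nlinarith [mul_nonneg (mul_nonneg (mul_nonneg hc hr.le) hx₀) (sub_nonneg.2 hx)]

theorem continuousOn_bSpeed_div_ratioSpeed (hpos : ∀ x < r, 0 < ratioSpeed m p q x) :
    ContinuousOn (fun x => bSpeed p q x / ratioSpeed m p q x) (Iio r) :=
  ContinuousOn.div (by unfold bSpeed; fun_prop) (by unfold ratioSpeed; fun_prop)
    fun x hx => (hpos x hx).ne'

theorem hasDerivAt_bOfRatio (hr : 0 < r) (hpos : ∀ x < r, 0 < ratioSpeed m p q x) {x : ℝ}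
    (hx : x < r) :
    HasDerivAt (bOfRatio m p q) (bOfRatio m p q x * (bSpeed p q x / ratioSpeed m p q x)) x :=
  (hasDerivAt_integral_of_continuousOn_Iio (continuousOn_bSpeed_div_ratioSpeed hpos) hr hx).exp

theorem one_le_bOfRatio (hr : 0 < r) (hroot : ratioSpeed m p q r = 0)
    (hpos : ∀ x < r, 0 < ratioSpeed m p q x) (hm : 0 ≤ m) {x : ℝ} (hx₀ : 0 ≤ x) (hx : x < r) :
    1 ≤ bOfRatio m p q x :=
  Real.one_le_exp_iff.2 <| intervalIntegral.integral_nonneg hx₀ fun t ht =>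
    div_nonneg (bSpeed_pos hr hroot hm (ht.2.trans hx.le)).le (hpos t (ht.2.trans_lt hx)).le

theorem continuousOn_timeDensity (hr : 0 < r) (hpos : ∀ x < r, 0 < ratioSpeed m p q x) :
    ContinuousOn (timeDensity m p q) (Iio r) :=
  ContinuousOn.div (fun x hx => (hasDerivAt_bOfRatio hr hpos hx).continuousAt.continuousWithinAt)
    (by unfold ratioSpeed; fun_prop) fun x hx => (hpos x hx).ne'

theorem timeDensity_pos (hpos : ∀ x < r, 0 < ratioSpeed m p q x) {x : ℝ} (hx : x < r) :
    0 < timeDensity m p q x :=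
  div_pos (bOfRatio_pos x) (hpos x hx)

theorem hasDerivAt_timeOfRatio (hr : 0 < r) (hpos : ∀ x < r, 0 < ratioSpeed m p q x) {x : ℝ}
    (hx : x < r) : HasDerivAt (timeOfRatio m p q) (timeDensity m p q x) x :=
  hasDerivAt_integral_of_continuousOn_Iio (continuousOn_timeDensity hr hpos) hr hx

theorem div_le_timeDensity (hr : 0 < r) (hroot : ratioSpeed m p q r = 0)
    (hpos : ∀ x < r, 0 < ratioSpeed m p q x) (hm : 0 ≤ m) {x : ℝ} (hx₀ : 0 ≤ x) (hx : x < r) :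
    r / 4 / (r - x) ≤ timeDensity m p q x := by
  have hQ := hpos x hx
  calc r / 4 / (r - x) = 1 / (4 * (r - x) / r) := by field_simp
    _ ≤ 1 / ratioSpeed m p q x :=
      one_div_le_one_div_of_le hQ (ratioSpeed_le hr hroot hm hx₀ hx.le)
    _ ≤ timeDensity m p q x :=
      div_le_div_of_nonneg_right (one_le_bOfRatio hr hroot hpos hm hx₀ hx) hQ.le

theorem tendsto_timeOfRatio (hr : 0 < r) (hroot : ratioSpeed m p q r = 0)
    (hpos : ∀ x < r, 0 < ratioSpeed m p q x) (hm : 0 ≤ m) :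
    Tendsto (timeOfRatio m p q) (𝓝[<] r) atTop := by
  set G := fun x => timeOfRatio m p q x + r / 4 * Real.log (r - x)
  have hG : ∀ x < r, HasDerivAt G (timeDensity m p q x - r / 4 / (r - x)) x := fun x hx =>
    ((hasDerivAt_timeOfRatio hr hpos hx).add ((((hasDerivAt_id' x).const_sub r).log
      (sub_pos.2 hx).ne').const_mul (r / 4))).congr_deriv (by ring)
  have hGmono : MonotoneOn G (Ico 0 r) := by
    refine monotoneOn_of_hasDerivWithinAt_nonneg (convex_Ico 0 r)
      (f' := fun x => timeDensity m p q x - r / 4 / (r - x))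
      (fun x hx => (hG x hx.2).continuousAt.continuousWithinAt) (fun x hx => ?_) fun x hx => ?_
      <;> rw [interior_Ico] at *
    · exact (hG x hx.2).hasDerivWithinAt
    · exact sub_nonneg.2 (div_le_timeDensity hr hroot hpos hm hx.1.le hx.2)
  have hlower : ∀ x ∈ Ico 0 r, r / 4 * (Real.log r - Real.log (r - x)) ≤ timeOfRatio m p q x :=
    fun x hx => by
      have := hGmono ⟨le_rfl, hr⟩ hx hx.1
      simp only [G, timeOfRatio, intervalIntegral.integral_same, sub_zero, zero_add] at this ⊢
      linarith
  have hgap : Tendsto (fun x => r - x) (𝓝[<] r) (𝓝[>] 0) :=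
    tendsto_nhdsWithin_of_tendsto_nhds_of_eventually_within _
      (((continuous_sub_left r).tendsto' r 0 (sub_self r)).mono_left nhdsWithin_le_nhds)
      (eventually_nhdsWithin_of_forall fun x (hx : x < r) => sub_pos.2 hx)
  have hlog := (tendsto_neg_atBot_atTop.comp (Real.tendsto_log_nhdsGT_zero.comp hgap))
  refine tendsto_atTop_mono' _ (eventually_of_mem (Ico_mem_nhdsLT hr) hlower) ?_
  exact (tendsto_atTop_add_const_left _ _ hlog).const_mul_atTop (by positivity)

theorem hasDerivAt_bOfRatio_comp (hr : 0 < r) (hpos : ∀ x < r, 0 < ratioSpeed m p q x)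
    {S : ℝ → ℝ} {τ : ℝ} (hS : HasDerivAt S (timeDensity m p q (S τ))⁻¹ τ) (hSτ : S τ < r) :
    HasDerivAt (fun τ => bOfRatio m p q (S τ)) (bSpeed p q (S τ)) τ := by
  refine ((hasDerivAt_bOfRatio hr hpos hSτ).comp τ hS).congr_deriv ?_
  have := (bOfRatio_pos (m := m) (p := p) (q := q) (S τ)).ne'
  have := (hpos _ hSτ).ne'
  rw [timeDensity]
  field_simp

theorem hasDerivAt_mul_bOfRatio_comp (hr : 0 < r) (hpos : ∀ x < r, 0 < ratioSpeed m p q x)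
    {S : ℝ → ℝ} {τ : ℝ} (hS : HasDerivAt S (timeDensity m p q (S τ))⁻¹ τ) (hSτ : S τ < r) :
    HasDerivAt (fun τ => S τ * bOfRatio m p q (S τ)) (4 + 2 * m * q ^ 2 * S τ ^ 2) τ := by
  refine (hS.mul (hasDerivAt_bOfRatio_comp hr hpos hS hSτ)).congr_deriv ?_
  have := (bOfRatio_pos (m := m) (p := p) (q := q) (S τ)).ne'
  rw [timeDensity, inv_div, div_mul_cancel₀ _ this, ratioSpeed, bSpeed]
  ring

theorem exists_ancient_solution (hr : 0 < r) (hroot : ratioSpeed m p q r = 0)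
    (hpos : ∀ x < r, 0 < ratioSpeed m p q x) (hm : 0 ≤ m) :
    ∃ a b : ℝ → ℝ,
      (∀ τ ∈ Ioi 0, 0 < a τ ∧ 0 < b τ) ∧
      (∀ τ ∈ Ioi 0, HasDerivAt a (4 + 2 * m * q ^ 2 * (a τ) ^ 2 / (b τ) ^ 2) τ) ∧
      (∀ τ ∈ Ioi 0, HasDerivAt b (2 * p - 3 * q ^ 2 * (a τ / b τ)) τ) ∧
      (∀ τ ∈ Ioi 0, 0 < a τ / b τ ∧ a τ / b τ < r) ∧
      StrictMonoOn (fun τ => a τ / b τ) (Ioi 0) ∧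
      Tendsto (fun τ => a τ / b τ) atTop (𝓝 r) ∧
      Tendsto a (𝓝[>] 0) (𝓝 0) ∧
      ∃ L : ℝ, 0 < L ∧ Tendsto b (𝓝[>] 0) (𝓝 L) := by
  obtain ⟨S, hSmaps, hSmono, hS', hStop, hSzero⟩ :=
    exists_inverse_of_hasDerivAt_pos hr (fun x hx => hasDerivAt_timeOfRatio hr hpos hx)
      (fun x hx => timeDensity_pos hpos hx) (by simp [timeOfRatio])
      (tendsto_timeOfRatio hr hroot hpos hm)
  set b := fun τ => bOfRatio m p q (S τ)
  set a := fun τ => S τ * b τ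
  have hratio : ∀ τ ∈ Ioi 0, a τ / b τ = S τ := fun τ _ =>
    mul_div_cancel_right₀ _ (bOfRatio_pos _).ne'
  have hb : Tendsto b (𝓝[>] 0) (𝓝 1) := by
    rw [← bOfRatio_zero (m := m) (p := p) (q := q)]
    exact (hasDerivAt_bOfRatio hr hpos hr).continuousAt.tendsto.comp hSzero
  refine ⟨a, b, fun τ hτ => ⟨mul_pos (hSmaps hτ).1 (bOfRatio_pos _), bOfRatio_pos _⟩,
    fun τ hτ => ?_, fun τ hτ => ?_, fun τ hτ => ?_, hSmono.congr fun τ hτ => (hratio τ hτ).symm,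
    hStop.congr' (eventually_of_mem (Ioi_mem_atTop 0) fun τ hτ => (hratio τ hτ).symm),
    by simpa using hSzero.mul hb, 1, one_pos, hb⟩
  · rw [mul_div_assoc, ← div_pow, hratio τ hτ]
    exact hasDerivAt_mul_bOfRatio_comp hr hpos (hS' τ hτ) (hSmaps hτ).2
  · rw [hratio τ hτ]
    exact hasDerivAt_bOfRatio_comp hr hpos (hS' τ hτ) (hSmaps hτ).2
  · rw [hratio τ hτ]
    exact hSmaps hτ

end SU2BundleRicciFlow

theorem stmt_18_general (m : ℕ) (p q : ℝ) (hq : q ≠ 0) (hp : 0 < p)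
    (hpq : p ^ 2 > 4 * (2 * (m : ℝ) + 3) * q ^ 2)
    (D r₂ : ℝ)
    (hD : D = Real.sqrt (p ^ 2 - 4 * (2 * (m : ℝ) + 3) * q ^ 2))
    (hr₂ : r₂ = (p - D) / ((2 * (m : ℝ) + 3) * q ^ 2)) :
    ∃ (τ₀ : ℝ) (a b : ℝ → ℝ),
      (∀ τ ∈ Set.Ioi τ₀, 0 < a τ ∧ 0 < b τ) ∧
      (∀ τ ∈ Set.Ioi τ₀,
        HasDerivAt a (4 + 2 * (m : ℝ) * q ^ 2 * (a τ) ^ 2 / (b τ) ^ 2) τ) ∧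
      (∀ τ ∈ Set.Ioi τ₀, HasDerivAt b (2 * p - 3 * q ^ 2 * (a τ / b τ)) τ) ∧
      (∀ τ ∈ Set.Ioi τ₀, 0 < a τ / b τ ∧ a τ / b τ < r₂) ∧
      StrictMonoOn (fun τ => a τ / b τ) (Set.Ioi τ₀) ∧
      Filter.Tendsto (fun τ => a τ / b τ) Filter.atTop (nhds r₂) ∧
      Filter.Tendsto a (nhdsWithin τ₀ (Set.Ioi τ₀)) (nhds 0) ∧
      ∃ L : ℝ, 0 < L ∧ Filter.Tendsto b (nhdsWithin τ₀ (Set.Ioi τ₀)) (nhds L) := by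
  have hc : 0 < (2 * (m : ℝ) + 3) * q ^ 2 := by positivity
  obtain ⟨hr, hroot, hpos⟩ := smaller_root_spec hc hp (by linarith) (by rw [hD, mul_assoc]) hr₂
  exact ⟨0, SU2BundleRicciFlow.exists_ancient_solution hr hroot hpos m.cast_nonneg⟩

/-- ODE content of the type-I ancient solution on an SU(2)-bundle over a
quaternion-Kähler manifold which starts at the Einstein metric with `a/b = r₂` (at τ = ∞)
and collapses the SU(2)-fiber (`a → 0` with `b` bounded away from 0) at the singular time. -/
theorem stmt_18 (m : ℕ) (hm : 1 ≤ m) (p q : ℝ) (hq : q ≠ 0) (hp : 0 < p)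
    (hpq : p ^ 2 > 4 * (2 * (m : ℝ) + 3) * q ^ 2)
    (D r₂ : ℝ)
    (hD : D = Real.sqrt (p ^ 2 - 4 * (2 * (m : ℝ) + 3) * q ^ 2))
    (hr₂ : r₂ = (p - D) / ((2 * (m : ℝ) + 3) * q ^ 2)) :
    ∃ (τ₀ : ℝ) (a b : ℝ → ℝ),
      (∀ τ ∈ Set.Ioi τ₀, 0 < a τ ∧ 0 < b τ) ∧
      (∀ τ ∈ Set.Ioi τ₀,
        HasDerivAt a (4 + 2 * (m : ℝ) * q ^ 2 * (a τ) ^ 2 / (b τ) ^ 2) τ) ∧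
      (∀ τ ∈ Set.Ioi τ₀, HasDerivAt b (2 * p - 3 * q ^ 2 * (a τ / b τ)) τ) ∧
      (∀ τ ∈ Set.Ioi τ₀, 0 < a τ / b τ ∧ a τ / b τ < r₂) ∧
      StrictMonoOn (fun τ => a τ / b τ) (Set.Ioi τ₀) ∧
      Filter.Tendsto (fun τ => a τ / b τ) Filter.atTop (nhds r₂) ∧
      Filter.Tendsto a (nhdsWithin τ₀ (Set.Ioi τ₀)) (nhds 0) ∧
      ∃ L : ℝ, 0 < L ∧ Filter.Tendsto b (nhdsWithin τ₀ (Set.Ioi τ₀)) (nhds L) :=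
  stmt_18_general m p q hq hp hpq D r₂ hD hr₂
end

section
/- Let p, q, ν > 0 be real numbers. The function g(ξ) = ξ + (1/2) sinh(2ξ) is a strictly increasing differentiable bijection from (0, ∞) onto (0, ∞); let ξ : (0, ∞) → (0, ∞) be defined by ξ(τ) + (1/2) sinh(2ξ(τ)) = 2(p²/q²) ν τ. Then a(τ) = (1/ν) tanh(ξ(τ)) satisfies a'(τ) = (p²/q²)(1 − ν² a(τ)²)² for all τ > 0, and together with b(τ) = (q²/(pν)) sinh(ξ(τ)) cosh(ξ(τ)) the pair (a, b) solves the ODE system a' = q² a²/b², b' = 2p − q² a/b, with a/b = (p/q²)(1 − ν² a²). -/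
/-!
Since `g' = 1 + cosh 2x = 2 cosh² x > 0` and `g → ±∞` at `±∞`, `g` is an order isomorphism of `ℝ`
fixing `0`. Hence `ξ = g⁻¹(c τ)` with `c = 2 (p²/q²) ν`, and the inverse function theorem gives
`ξ' = c / (2 cosh² ξ)`. With `1 - ν² a² = 1 - tanh² ξ = sech² ξ`, every claim reduces to the
identities `a' = (p²/q²) sech⁴ ξ`, `a / b = (p/q²) sech² ξ` and `b' = p (1 + tanh² ξ)`.
-/

open Real Set Filter Topology

noncomputable section

def addHalfSinhTwoMul (x : ℝ) : ℝ := x + 1 / 2 * sinh (2 * x)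

theorem hasDerivAt_addHalfSinhTwoMul (x : ℝ) :
    HasDerivAt addHalfSinhTwoMul (2 * cosh x ^ 2) x := by
  have hsinh : HasDerivAt (fun x => sinh (2 * x)) (cosh (2 * x) * 2) x :=
    (hasDerivAt_sinh (2 * x)).comp x ((hasDerivAt_id x).const_mul 2 |>.congr_deriv (mul_one 2))
  refine ((hasDerivAt_id x).add (hsinh.const_mul (1 / 2))).congr_deriv ?_
  rw [cosh_two_mul, cosh_sq]
  ring

theorem continuous_addHalfSinhTwoMul : Continuous addHalfSinhTwoMul :=
  continuous_iff_continuousAt.2 fun x => (hasDerivAt_addHalfSinhTwoMul x).continuousAt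

theorem strictMono_addHalfSinhTwoMul : StrictMono addHalfSinhTwoMul :=
  strictMono_of_deriv_pos fun x => by
    rw [(hasDerivAt_addHalfSinhTwoMul x).deriv]
    positivity

theorem addHalfSinhTwoMul_zero : addHalfSinhTwoMul 0 = 0 := by
  simp [addHalfSinhTwoMul]

theorem surjective_addHalfSinhTwoMul : Function.Surjective addHalfSinhTwoMul := by
  refine continuous_addHalfSinhTwoMul.surjective ?_ ?_
  · refine tendsto_atTop_mono' _ ?_ tendsto_id
    filter_upwards [eventually_ge_atTop 0] with x hx
    have : 0 ≤ sinh (2 * x) := sinh_nonneg_iff.2 (by linarith)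
    simp only [id, addHalfSinhTwoMul]
    linarith
  · refine tendsto_atBot_mono' _ ?_ tendsto_id
    filter_upwards [eventually_le_atBot 0] with x hx
    have : sinh (2 * x) ≤ 0 := sinh_nonpos_iff.2 (by linarith)
    simp only [id, addHalfSinhTwoMul]
    linarith

def addHalfSinhTwoMulOrderIso : ℝ ≃o ℝ :=
  StrictMono.orderIsoOfSurjective _ strictMono_addHalfSinhTwoMul surjective_addHalfSinhTwoMul

theorem coe_addHalfSinhTwoMulOrderIso : ⇑addHalfSinhTwoMulOrderIso = addHalfSinhTwoMul := rfl

theorem bijOn_addHalfSinhTwoMul_Ioi : BijOn addHalfSinhTwoMul (Ioi 0) (Ioi 0) := by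
  have h := strictMono_addHalfSinhTwoMul.injective.injOn (s := Ioi 0) |>.bijOn_image
  rwa [← coe_addHalfSinhTwoMulOrderIso, OrderIso.image_Ioi, coe_addHalfSinhTwoMulOrderIso,
    addHalfSinhTwoMul_zero] at h

theorem hasDerivAt_addHalfSinhTwoMulOrderIso_symm (y : ℝ) :
    HasDerivAt addHalfSinhTwoMulOrderIso.symm
      (2 * cosh (addHalfSinhTwoMulOrderIso.symm y) ^ 2)⁻¹ y :=
  .of_local_left_inverse addHalfSinhTwoMulOrderIso.symm.continuous.continuousAt
    (hasDerivAt_addHalfSinhTwoMul _) (by positivity)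
    (.of_forall addHalfSinhTwoMulOrderIso.apply_symm_apply)

theorem HasDerivAt.of_addHalfSinhTwoMul_eq {ξ : ℝ → ℝ} {c τ : ℝ}
    (h : ∀ᶠ s in 𝓝 τ, addHalfSinhTwoMul (ξ s) = c * s) :
    HasDerivAt ξ (c / (2 * Real.cosh (ξ τ) ^ 2)) τ := by
  have hξ : ξ =ᶠ[𝓝 τ] fun s => addHalfSinhTwoMulOrderIso.symm (c * s) := by
    filter_upwards [h] with s hs
    rw [← hs, ← coe_addHalfSinhTwoMulOrderIso, OrderIso.symm_apply_apply]
  have hlin : HasDerivAt (fun s => c * s) c τ := by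
    simpa using (hasDerivAt_id τ).const_mul c
  rw [hξ.hasDerivAt_iff, hξ.eq_of_nhds, div_eq_inv_mul]
  exact (hasDerivAt_addHalfSinhTwoMulOrderIso_symm (c * τ)).comp τ hlin

theorem one_sub_tanh_sq (x : ℝ) : 1 - tanh x ^ 2 = (cosh x ^ 2)⁻¹ := by
  have hc : cosh x ≠ 0 := (cosh_pos x).ne'
  rw [tanh_eq_sinh_div_cosh]
  field_simp
  linarith [cosh_sq x]

theorem HasDerivAt.tanh {f : ℝ → ℝ} {f' x : ℝ} (hf : HasDerivAt f f' x) :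
    HasDerivAt (fun s => Real.tanh (f s)) (f' / Real.cosh (f x) ^ 2) x := by
  have hc : Real.cosh (f x) ≠ 0 := (cosh_pos _).ne'
  simp only [tanh_eq_sinh_div_cosh]
  refine (hf.sinh.div hf.cosh hc).congr_deriv ?_
  field_simp
  linear_combination f' * cosh_sq (f x)

theorem HasDerivAt.sinh_mul_cosh {f : ℝ → ℝ} {f' x : ℝ} (hf : HasDerivAt f f' x) :
    HasDerivAt (fun s => Real.sinh (f s) * Real.cosh (f s)) (f' * Real.cosh (2 * f x)) x := by
  refine (hf.sinh.mul hf.cosh).congr_deriv ?_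
  rw [cosh_two_mul]
  ring

theorem one_sub_sq_mul_one_div_mul_tanh {ν : ℝ} (hν : ν ≠ 0) (x : ℝ) :
    1 - ν ^ 2 * (1 / ν * tanh x) ^ 2 = (cosh x ^ 2)⁻¹ := by
  rw [← one_sub_tanh_sq]
  field_simp

theorem one_div_mul_tanh_div_mul_sinh_mul_cosh {p q ν x : ℝ} (hp : p ≠ 0) (hq : q ≠ 0)
    (hν : ν ≠ 0) (hx : x ≠ 0) :
    1 / ν * tanh x / (q ^ 2 / (p * ν) * (sinh x * cosh x)) =
      p / q ^ 2 * (1 - ν ^ 2 * (1 / ν * tanh x) ^ 2) := by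
  have hs : sinh x ≠ 0 := sinh_ne_zero.2 hx
  have hc : cosh x ≠ 0 := (cosh_pos x).ne'
  rw [one_sub_sq_mul_one_div_mul_tanh hν, tanh_eq_sinh_div_cosh]
  field_simp

end

/-- the explicit solution, for m = 1, of the U(1)-bundle Ricci flow ODE system:
`g(ξ) = ξ + ½ sinh 2ξ` is a strictly increasing differentiable bijection of `(0,∞)`, and with
`ξ(τ)` defined implicitly by `g(ξ(τ)) = 2(p²/q²)ντ`, the functions `a = (1/ν) tanh ξ`,
`b = (q²/(pν)) sinh ξ cosh ξ` solve `a' = q²a²/b²`, `b' = 2p − q²a/b`, with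
`a' = (p²/q²)(1 − ν²a²)²` and `a/b = (p/q²)(1 − ν²a²)`. -/
theorem stmt_19 (p q ν : ℝ) (hp : 0 < p) (hq : 0 < q) (hν : 0 < ν)
    (g : ℝ → ℝ) (hg : ∀ x, g x = x + 1 / 2 * Real.sinh (2 * x))
    (ξ : ℝ → ℝ) (hξpos : ∀ τ ∈ Set.Ioi (0 : ℝ), 0 < ξ τ)
    (hξ : ∀ τ ∈ Set.Ioi (0 : ℝ),
      ξ τ + 1 / 2 * Real.sinh (2 * ξ τ) = 2 * (p ^ 2 / q ^ 2) * ν * τ)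
    (a b : ℝ → ℝ)
    (hadef : ∀ τ, a τ = 1 / ν * Real.tanh (ξ τ))
    (hbdef : ∀ τ, b τ = q ^ 2 / (p * ν) * (Real.sinh (ξ τ) * Real.cosh (ξ τ))) :
    (∀ x ∈ Set.Ioi (0 : ℝ), DifferentiableAt ℝ g x) ∧
    StrictMonoOn g (Set.Ioi 0) ∧
    Set.BijOn g (Set.Ioi 0) (Set.Ioi 0) ∧
    (∀ τ ∈ Set.Ioi (0 : ℝ),
      HasDerivAt a (p ^ 2 / q ^ 2 * (1 - ν ^ 2 * (a τ) ^ 2) ^ 2) τ ∧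
      HasDerivAt a (q ^ 2 * (a τ) ^ 2 / (b τ) ^ 2) τ ∧
      HasDerivAt b (2 * p - q ^ 2 * a τ / b τ) τ ∧
      a τ / b τ = p / q ^ 2 * (1 - ν ^ 2 * (a τ) ^ 2)) := by
  obtain rfl : g = addHalfSinhTwoMul := funext hg
  obtain rfl : a = fun s => 1 / ν * tanh (ξ s) := funext hadef
  obtain rfl : b = fun s => q ^ 2 / (p * ν) * (sinh (ξ s) * cosh (ξ s)) := funext hbdef
  refine ⟨fun x _ => (hasDerivAt_addHalfSinhTwoMul x).differentiableAt,
    strictMono_addHalfSinhTwoMul.strictMonoOn _, bijOn_addHalfSinhTwoMul_Ioi, fun τ hτ => ?_⟩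
  have hξ' : HasDerivAt ξ (2 * (p ^ 2 / q ^ 2) * ν / (2 * cosh (ξ τ) ^ 2)) τ :=
    .of_addHalfSinhTwoMul_eq <| eventually_of_mem (Ioi_mem_nhds hτ) hξ
  have hsech := one_sub_sq_mul_one_div_mul_tanh hν.ne' (ξ τ)
  have hratio := one_div_mul_tanh_div_mul_sinh_mul_cosh hp.ne' hq.ne' hν.ne' (hξpos τ hτ).ne'
  have ha' : HasDerivAt (fun s => 1 / ν * tanh (ξ s))
      (p ^ 2 / q ^ 2 * (1 - ν ^ 2 * (1 / ν * tanh (ξ τ)) ^ 2) ^ 2) τ := by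
    refine (hξ'.tanh.const_mul _).congr_deriv ?_
    rw [hsech]
    field_simp
  refine ⟨ha', ha'.congr_deriv ?_, (hξ'.sinh_mul_cosh.const_mul _).congr_deriv ?_, hratio⟩
  · beta_reduce
    rw [mul_div_assoc (q ^ 2), ← div_pow (1 / ν * tanh (ξ τ)), hratio]
    field_simp
  · beta_reduce
    rw [mul_div_assoc (q ^ 2), hratio, hsech, cosh_two_mul, cosh_sq]
    field_simp
    ring
end
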